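/- arXiv:1509.05530 — 9 statements merged into one kernel-verified Lean document; each statement's English description precedes it below -/
import Mathlib

section
/- For all n ≥ 1, R(nK_2, nK_2) = 3n - 1; that is, 3n - 1 is the smallest N such that every 2-coloring of the edges of K_N contains a monochromatic matching of size n, and there is a 2-coloring of K_{3n-2} with no monochromatic matching of size n. -/
open Finset

/-- `G` contains `n` pairwise vertex-disjoint `k`-cliques. -/
def CliqueMatching {V : Type*} (G : SimpleGraph V) (k n : ℕ) : Prop :=
  ∃ T : Finset (Finset V), T.card = n ∧ (∀ t ∈ T, G.IsNClique k t) ∧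
    (T : Set (Finset V)).Pairwise fun a b => Disjoint a b

/-- `G` contains `n` pairwise vertex-disjoint `k`-cliques, all lying in a single
connected component of `G` (a connected clique matching). -/
def ConnCliqueMatching {V : Type*} (G : SimpleGraph V) (k n : ℕ) : Prop :=
  ∃ T : Finset (Finset V), T.card = n ∧ (∀ t ∈ T, G.IsNClique k t) ∧
    ((T : Set (Finset V)).Pairwise fun a b => Disjoint a b) ∧
    ∀ u v : V, (∃ t ∈ T, u ∈ t) → (∃ t ∈ T, v ∈ t) → G.Reachable u v

/-- Matching of `n` edges of `G` inside `S`. -/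
def MIn {V : Type*} (G : SimpleGraph V) (n : ℕ) (S : Finset V) : Prop :=
  ∃ T : Finset (Finset V), T.card = n ∧ (∀ t ∈ T, G.IsNClique 2 t ∧ t ⊆ S) ∧
    (T : Set (Finset V)).Pairwise fun a b => Disjoint a b

lemma isNClique_pair' {V : Type*} [DecidableEq V] {G : SimpleGraph V} {u v : V} (h : G.Adj u v) :
    G.IsNClique 2 {u, v} := by
  constructor
  · rw [coe_pair, SimpleGraph.isClique_pair]
    exact fun _ => h
  · rw [card_pair h.ne]

lemma MIn.insert_edge {V : Type*} [DecidableEq V] {G : SimpleGraph V} {n : ℕ}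
    {S S' : Finset V} {u v : V} (hM : MIn G n S') (hS' : S' ⊆ S)
    (huv : G.Adj u v) (hu : u ∈ S) (hv : v ∈ S) (hu' : u ∉ S') (hv' : v ∉ S') :
    MIn G (n + 1) S := by
  obtain ⟨T, hcard, hcl, hdisj⟩ := hM
  refine ⟨insert {u, v} T, ?_, ?_, ?_⟩
  · rw [card_insert_of_notMem, hcard]
    intro hmem
    exact hu' ((hcl _ hmem).2 (by simp))
  · intro t ht
    rcases mem_insert.1 ht with rfl | ht
    · exact ⟨isNClique_pair' huv, by
        intro x hx; rcases mem_insert.1 hx with rfl | hx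
        · exact hu
        · simpa using (mem_singleton.1 hx ▸ hv)⟩
    · exact ⟨(hcl t ht).1, (hcl t ht).2.trans hS'⟩
  · rw [coe_insert]
    refine Set.Pairwise.insert hdisj ?_
    intro t ht hne
    have hd : Disjoint {u, v} t := by
      rw [Finset.disjoint_left]
      intro x hx hxt
      have := (hcl t ht).2 hxt
      rcases mem_insert.1 hx with rfl | hx
      · exact hu' this
      · rw [mem_singleton.1 hx] at this; exact hv' this
    exact ⟨hd, hd.symm⟩

/-- A clique of size ≥ 2m inside `S` yields a matching of size m. -/
lemma clique_MIn {V : Type*} [DecidableEq V] {G : SimpleGraph V} (m : ℕ) :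
    ∀ S : Finset V, (∀ u ∈ S, ∀ v ∈ S, u ≠ v → G.Adj u v) → 2 * m ≤ S.card →
    MIn G m S := by
  induction m with
  | zero => intro S _ _; exact ⟨∅, by simp, by simp, by simp⟩
  | succ m ih =>
    intro S hcl hcard
    have h2 : 2 ≤ S.card := by omega
    obtain ⟨u, hu⟩ := Finset.card_pos.mp (show 0 < S.card by omega)
    obtain ⟨v, hv, hvu⟩ := Finset.exists_mem_ne (show 1 < S.card by omega) u
    have hadj : G.Adj u v := (hcl v hv u hu hvu).symm
    have hsub : S \ {u, v} ⊆ S := sdiff_subset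
    have := ih (S \ {u, v}) (fun a ha b hb hab => hcl a (hsub ha) b (hsub hb) hab) (by
      have : ({u, v} : Finset V) ⊆ S := by
        intro x hx; rcases mem_insert.1 hx with rfl | hx
        · exact hu
        · rw [mem_singleton.1 hx]; exact hv
      rw [card_sdiff_of_subset this, card_pair hadj.ne]; omega)
    exact this.insert_edge hsub hadj hu hv (by simp) (by simp)

lemma ramsey_matching {V : Type*} [DecidableEq V] {G : SimpleGraph V}
    [DecidableRel G.Adj] (n : ℕ) :
    ∀ S : Finset V, 3 * n ≤ S.card + 1 → MIn G n S ∨ MIn Gᶜ n S := by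
  induction n with
  | zero => intro S _; exact Or.inl ⟨∅, by simp, by simp, by simp⟩
  | succ n ih =>
    intro S hS
    by_cases hmono : (∀ u ∈ S, ∀ v ∈ S, u ≠ v → G.Adj u v) ∨
        (∀ u ∈ S, ∀ v ∈ S, u ≠ v → Gᶜ.Adj u v)
    · rcases hmono with h | h
      · exact Or.inl (clique_MIn (n+1) S h (by omega))
      · exact Or.inr (clique_MIn (n+1) S h (by omega))
    · push_neg at hmono
      obtain ⟨⟨c, hc, d, hd, hcd, hcd'⟩, ⟨a, ha, b, hb, hab, hab'⟩⟩ := hmono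
      rw [SimpleGraph.compl_adj, not_and] at hab'
      have hab2 : G.Adj a b := by
        by_contra h; exact (hab' hab) h
      -- hc d : ¬ G.Adj c d, c ≠ d; find u v w ∈ S with G.Adj u v, c.Adj v w in compl
      have key : ∃ u ∈ S, ∃ v ∈ S, ∃ w ∈ S, G.Adj u v ∧ v ≠ w ∧ ¬ G.Adj v w := by
        by_cases h1 : b = c
        · exact ⟨a, ha, b, hb, d, hd, hab2, h1 ▸ hcd, h1 ▸ hcd'⟩
        by_cases h2 : b = d
        · exact ⟨a, ha, b, hb, c, hc, hab2, by rw [h2]; exact hcd.symm,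
            by rw [h2]; exact fun h => hcd' h.symm⟩
        by_cases h3 : a = c
        · exact ⟨b, hb, a, ha, d, hd, hab2.symm, h3 ▸ hcd, h3 ▸ hcd'⟩
        by_cases h4 : a = d
        · exact ⟨b, hb, a, ha, c, hc, hab2.symm, by rw [h4]; exact hcd.symm,
            by rw [h4]; exact fun h => hcd' h.symm⟩
        by_cases h5 : G.Adj b c
        · exact ⟨b, hb, c, hc, d, hd, h5, hcd, hcd'⟩
        · exact ⟨a, ha, b, hb, c, hc, hab2, h1, h5⟩
      obtain ⟨u, hu, v, hv, w, hw, huv, hvw, hvw'⟩ := key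
      have huw : u ≠ w := by
        rintro rfl; exact hvw' huv.symm
      set S' := S \ {u, v, w} with hS'def
      have hsub : S' ⊆ S := sdiff_subset
      have hcard' : 3 * n ≤ S'.card + 1 := by
        have h3 : ({u, v, w} : Finset V).card ≤ 3 := by
          apply (card_insert_le _ _).trans
          have := (card_insert_le v ({w} : Finset V)).trans
            (by simp : ({w} : Finset V).card + 1 ≤ 2)
          omega
        have h4 : S.card ≤ S'.card + ({u,v,w} : Finset V).card := card_le_card_sdiff_add_card
        omega
      rcases ih S' hcard' with hred | hblue
      · exact Or.inl (hred.insert_edge hsub huv hu hv (by simp [hS'def])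
          (by simp [hS'def]))
      · exact Or.inr (hblue.insert_edge hsub ((SimpleGraph.compl_adj _ _ _).2 ⟨hvw, hvw'⟩)
          hv hw (by simp [hS'def]) (by simp [hS'def]))

lemma MIn_univ {V : Type*} [Fintype V] {G : SimpleGraph V} {n : ℕ}
    (h : MIn G n Finset.univ) : CliqueMatching G 2 n := by
  obtain ⟨T, h1, h2, h3⟩ := h
  exact ⟨T, h1, fun t ht => (h2 t ht).1, h3⟩

/-- Cockayne–Lorimer: `R(nK₂, nK₂) = 3n - 1`. -/
theorem stmt0 (n : ℕ) (hn : 1 ≤ n) :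
    (∀ R : SimpleGraph (Fin (3 * n - 1)), CliqueMatching R 2 n ∨ CliqueMatching Rᶜ 2 n) ∧
    (∃ R : SimpleGraph (Fin (3 * n - 2)), ¬ CliqueMatching R 2 n ∧ ¬ CliqueMatching Rᶜ 2 n) := by
  constructor
  · intro R
    classical
    have h := ramsey_matching (G := R) n (Finset.univ) (by
      simp [Finset.card_univ]; omega)
    rcases h with h | h
    · exact Or.inl (MIn_univ h)
    · exact Or.inr (MIn_univ h)
  · classical
    set m := 3 * n - 2 with hm
    have hm1 : 1 ≤ m := by omega
    refine ⟨SimpleGraph.mk (fun u v => u ≠ v ∧ (u.val < n - 1 ∨ v.val < n - 1))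
      ⟨fun u v ⟨h1, h2⟩ => ⟨h1.symm, h2.symm⟩⟩ ⟨fun u ⟨h1, _⟩ => h1 rfl⟩, ?_, ?_⟩
    · rintro ⟨T, hcard, hcl, hdisj⟩
      -- each edge meets A = {x | x.val < n - 1}
      set A : Finset (Fin m) := Finset.univ.filter (fun x => x.val < n - 1) with hA
      have hAcard : A.card = n - 1 := by
        have hlt : n - 1 < m := by omega
        have hiio : A = Finset.Iio (⟨n - 1, hlt⟩ : Fin m) := by
          ext x; simp [hA, Finset.mem_Iio, Fin.lt_def]
        rw [hiio, Fin.card_Iio]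
      have hpick : ∀ t ∈ T, ∃ x ∈ t, x.val < n - 1 := by
        intro t ht
        obtain ⟨hclq, hc2⟩ := hcl t ht
        obtain ⟨x, y, hxy, rfl⟩ := card_eq_two.1 hc2
        have := hclq (by simp) (by simp [Set.mem_insert_iff]) hxy
        rcases this.2 with h | h
        · exact ⟨x, by simp, h⟩
        · exact ⟨y, by simp, h⟩
      choose f hf1 hf2 using hpick
      have : T.card ≤ A.card := by
        refine Finset.card_le_card_of_injOn
          (fun t => if ht : t ∈ T then f t ht else (⟨0, by omega⟩ : Fin m)) ?_ ?_
        · intro t ht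
          have ht' : t ∈ T := by simpa using ht
          simp only [ht', dif_pos]
          exact Finset.mem_filter.2 ⟨Finset.mem_univ _, hf2 t ht⟩
        · intro t1 ht1 t2 ht2 heq
          simp only [Finset.mem_coe] at ht1 ht2
          simp only [dif_pos ht1, dif_pos ht2] at heq
          by_contra hne
          have hd := hdisj ht1 ht2 hne
          exact (Finset.disjoint_left.1 hd (hf1 t1 ht1)) (heq ▸ hf1 t2 ht2)
      omega
    · rintro ⟨T, hcard, hcl, hdisj⟩
      set B : Finset (Fin m) := Finset.univ.filter (fun x => ¬ x.val < n - 1) with hB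
      have hBcard : B.card = 2 * n - 1 := by
        have h1 := Finset.card_filter_add_card_filter_not
          (s := (Finset.univ : Finset (Fin m))) (p := fun x => x.val < n - 1)
        have h2 : (Finset.univ.filter (fun x : Fin m => x.val < n - 1)).card = n - 1 := by
          have hlt : n - 1 < m := by omega
          have hiio : Finset.univ.filter (fun x : Fin m => x.val < n - 1)
              = Finset.Iio (⟨n - 1, hlt⟩ : Fin m) := by
            ext x; simp [Finset.mem_Iio, Fin.lt_def]
          rw [hiio, Fin.card_Iio]
        have h3 : (Finset.univ : Finset (Fin m)).card = m := by simp
        rw [hB]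
        omega
      have hsub : ∀ t ∈ T, t ⊆ B := by
        intro t ht x hx
        obtain ⟨hclq, hc2⟩ := hcl t ht
        obtain ⟨a, b, hab, rfl⟩ := card_eq_two.1 hc2
        have hadj := hclq (show (a:Fin m) ∈ (({a,b}:Finset (Fin m)):Set (Fin m)) by simp)
          (show (b:Fin m) ∈ (({a,b}:Finset (Fin m)):Set (Fin m)) by simp) hab
        rw [SimpleGraph.compl_adj] at hadj
        simp only [ne_eq, not_and, not_or, not_lt] at hadj
        obtain ⟨-, hor⟩ := hadj
        have := hor hab
        rcases mem_insert.1 hx with rfl | hx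
        · simp [hB]; omega
        · rw [mem_singleton.1 hx]; simp [hB]; omega
      have hunion : (T.biUnion id) ⊆ B := by
        intro x hx
        obtain ⟨t, ht, hxt⟩ := Finset.mem_biUnion.1 hx
        exact hsub t ht hxt
      have hcardU : (T.biUnion id).card = 2 * n := by
        have hpair : ∀ x ∈ T, ∀ y ∈ T, x ≠ y → Disjoint (id x) (id y) := by
          intro x hx y hy hxy
          exact hdisj hx hy hxy
        have h2 : ∀ t ∈ T, (id t).card = 2 := fun t ht => (hcl t ht).2
        rw [Finset.card_biUnion hpair, Finset.sum_congr rfl h2, Finset.sum_const, hcard,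
          smul_eq_mul]
        omega
      have := Finset.card_le_card hunion
      omega
end

section
/- For 1 ≤ m ≤ n, every 2-coloring (red/blue) of the edges of K_{3n+m-1} contains either a red connected subgraph containing n pairwise vertex-disjoint red triangles, or a blue matching of size m. -/
open Finset

open scoped Classical

lemma pick_good {V : Type*} [DecidableEq V] (good : V → Prop) :
    ∀ (M : Finset (Finset V)), ((M : Set (Finset V)).Pairwise fun a b => Disjoint a b) →
    (∀ e ∈ M, ∃ x ∈ e, good x) →
    ∃ G : Finset V, G.card = M.card ∧ (∀ x ∈ G, good x) ∧ ∀ x ∈ G, ∃ e ∈ M, x ∈ e := by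
  intro M
  induction M using Finset.induction_on with
  | empty => intro _ _; exact ⟨∅, by simp⟩
  | @insert e M he ih =>
    intro hpw hval
    obtain ⟨G, hGc, hGg, hGe⟩ := ih (hpw.mono (by intro a ha; simp only [coe_insert, Set.mem_insert_iff]; exact Or.inr ha))
      (fun e' he' => hval e' (mem_insert_of_mem he'))
    obtain ⟨x, hxe, hxg⟩ := hval e (mem_insert_self _ _)
    have hxG : x ∉ G := by
      intro hxG
      obtain ⟨e', he', hxe'⟩ := hGe x hxG
      have hne : e ≠ e' := fun h => he (h ▸ he')
      have hd := hpw (by simp) (by simp [he']) hne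
      exact (Finset.disjoint_left.1 hd) hxe hxe'
    refine ⟨insert x G, by simp [hxG, he, hGc], ?_, ?_⟩
    · intro y hy
      rcases mem_insert.1 hy with rfl | hy
      · exact hxg
      · exact hGg y hy
    · intro y hy
      rcases mem_insert.1 hy with rfl | hy
      · exact ⟨e, mem_insert_self _ _, hxe⟩
      · obtain ⟨e', he', h⟩ := hGe y hy
        exact ⟨e', mem_insert_of_mem he', h⟩

lemma clique_part {V : Type*} [DecidableEq V] (R : SimpleGraph V) :
    ∀ (k : ℕ) (U : Finset V), 3 * k ≤ U.card →
    (∀ u ∈ U, ∀ v ∈ U, u ≠ v → R.Adj u v) →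
    ∃ T : Finset (Finset V), T.card = k ∧ (∀ t ∈ T, R.IsNClique 3 t ∧ t ⊆ U) ∧
      ((T : Set (Finset V)).Pairwise fun a b => Disjoint a b) := by
  intro k
  induction k with
  | zero => intro U _ _; exact ⟨∅, by simp, by simp, by simp⟩
  | succ k ih =>
    intro U hcard hclq
    obtain ⟨S, hSU, hS3⟩ := Finset.exists_subset_card_eq (show 3 ≤ U.card by omega)
    obtain ⟨T', hT'c, hT'p, hT'pw⟩ := ih (U \ S)
      (by rw [card_sdiff_of_subset hSU, hS3]; omega)
      (fun u hu v hv h => hclq u (sdiff_subset hu) v (sdiff_subset hv) h)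
    have hSclq : R.IsNClique 3 S := by
      rw [SimpleGraph.isNClique_iff]
      exact ⟨fun u hu v hv h => hclq u (hSU hu) v (hSU hv) h, hS3⟩
    have hSdisj : ∀ t ∈ T', Disjoint S t := by
      intro t ht
      refine Finset.disjoint_left.2 fun a haS hat => ?_
      have := (hT'p t ht).2 hat
      rw [mem_sdiff] at this
      exact this.2 haS
    have hSnot : S ∉ T' := by
      intro h
      have h2 : S = ∅ := by
        have := (hSdisj S h).eq_bot
        simpa using this
      rw [h2] at hS3; simp at hS3
    refine ⟨insert S T', by rw [card_insert_of_notMem hSnot, hT'c], ?_, ?_⟩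
    · intro t ht
      rcases mem_insert.1 ht with rfl | ht
      · exact ⟨hSclq, hSU⟩
      · exact ⟨(hT'p t ht).1, ((hT'p t ht).2).trans sdiff_subset⟩
    · rw [coe_insert]
      refine @Set.pairwise_insert_of_symm _ (fun a b => Disjoint a b) _ _ ⟨fun a b h => h.symm⟩ |>.2 ⟨hT'pw, ?_⟩
      intro t ht _
      exact hSdisj t ht

lemma greedy_tri {V : Type*} [DecidableEq V] (R : SimpleGraph V) :
    ∀ (s : ℕ) (G U : Finset V), G.card = s → Disjoint G U →
    (∀ x ∈ G, (U.filter fun u => ¬ R.Adj x u).card ≤ 1) →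
    (∀ u ∈ U, ∀ v ∈ U, u ≠ v → R.Adj u v) →
    2 * s + 1 ≤ U.card →
    ∃ (T : Finset (Finset V)) (U' : Finset V), U' ⊆ U ∧ U'.card = U.card - 2 * s ∧
      T.card = s ∧ (∀ t ∈ T, R.IsNClique 3 t ∧ Disjoint t U' ∧ t ⊆ G ∪ U ∧
        ∀ p ∈ t, ∃ u ∈ t, u ∈ U ∧ (p = u ∨ R.Adj p u)) ∧
      ((T : Set (Finset V)).Pairwise fun a b => Disjoint a b) := by
  intro s
  induction s with
  | zero =>
    intro G U _ _ _ _ _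
    exact ⟨∅, U, Finset.Subset.refl U, by simp, by simp, by simp, by simp⟩
  | succ s ih =>
    intro G U hGc hdis hgood hclq hbig
    have hGne : G.Nonempty := by rw [← card_pos, hGc]; omega
    obtain ⟨x, hxG⟩ := hGne
    -- the red neighbours of x in U
    set A : Finset V := U.filter (fun u => R.Adj x u) with hA
    have h2A : 2 ≤ A.card := by
      have hsub : U \ (U.filter fun u => ¬ R.Adj x u) ⊆ A := by
        intro a ha
        rw [mem_sdiff, mem_filter] at ha
        rw [hA, mem_filter]
        refine ⟨ha.1, ?_⟩
        by_cases h : R.Adj x a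
        · exact h
        · exact absurd ⟨ha.1, h⟩ ha.2
      have h1 := hgood x hxG
      have h2 := Finset.card_le_card hsub
      rw [card_sdiff_of_subset (filter_subset _ _)] at h2
      omega
    obtain ⟨u, huA⟩ := Finset.card_pos.1 (by omega : 0 < A.card)
    obtain ⟨v, hvA, hvu⟩ := Finset.exists_mem_ne (s := A) (by omega) u
    have huU : u ∈ U := (mem_filter.1 huA).1
    have hvU : v ∈ U := (mem_filter.1 hvA).1
    have hxu : R.Adj x u := (mem_filter.1 huA).2
    have hxv : R.Adj x v := (mem_filter.1 hvA).2
    have hxU : x ∉ U := Finset.disjoint_left.1 hdis hxG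
    have hxne_u : x ≠ u := fun h => hxU (h ▸ huU)
    have hxne_v : x ≠ v := fun h => hxU (h ▸ hvU)
    -- recurse
    set U₂ : Finset V := U \ {u, v} with hU₂
    have huvU : ({u, v} : Finset V) ⊆ U := by
      intro a ha; rcases mem_insert.1 ha with rfl | ha
      · exact huU
      · rw [mem_singleton] at ha; exact ha ▸ hvU
    have hU₂card : U₂.card = U.card - 2 := by
      rw [hU₂, card_sdiff_of_subset huvU, card_insert_of_notMem (by simp [hvu.symm]), card_singleton]
    obtain ⟨T', U', hU'sub, hU'card, hT'card, hT'prop, hT'pw⟩ :=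
      ih (G.erase x) U₂
        (by rw [card_erase_of_mem hxG, hGc]; rfl)
        (Finset.disjoint_of_subset_left (erase_subset x G) (Finset.disjoint_of_subset_right sdiff_subset hdis))
        (fun y hy => le_trans (card_le_card (by
          intro a ha; rw [mem_filter] at ha ⊢
          exact ⟨sdiff_subset ha.1, ha.2⟩)) (hgood y (mem_of_mem_erase hy)))
        (fun a ha b hb h => hclq a (sdiff_subset ha) b (sdiff_subset hb) h)
        (by omega)
    set t₀ : Finset V := {x, u, v} with ht₀
    have ht₀card : t₀.card = 3 := by
      rw [ht₀, card_insert_of_notMem (by simp [hxne_u, hxne_v]),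
        card_insert_of_notMem (by simp [hvu.symm]), card_singleton]
    have ht₀clq : R.IsNClique 3 t₀ := by
      rw [SimpleGraph.isNClique_iff]
      refine ⟨?_, ht₀card⟩
      intro a ha b hb hne
      simp only [ht₀, coe_insert, Set.mem_insert_iff, coe_singleton, Set.mem_singleton_iff] at ha hb
      rcases ha with rfl | rfl | rfl <;> rcases hb with rfl | rfl | rfl <;>
        first
          | exact absurd rfl hne
          | exact hxu | exact hxv | exact hxu.symm | exact hxv.symm
          | exact hclq _ huU _ hvU hvu.symm
          | exact (hclq _ huU _ hvU hvu.symm).symm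
    have ht₀sub : ∀ a ∈ t₀, a = x ∨ a ∈ U := by
      intro a ha
      simp only [ht₀, mem_insert, mem_singleton] at ha
      rcases ha with rfl | rfl | rfl
      · exact Or.inl rfl
      · exact Or.inr huU
      · exact Or.inr hvU
    have hT'avoid : ∀ t ∈ T', Disjoint t₀ t := by
      intro t ht
      refine Finset.disjoint_left.2 fun a hat₀ hat => ?_
      have hsub := (hT'prop t ht).2.2.1 hat
      rcases mem_union.1 hsub with h | h
      · -- a ∈ G.erase x, but a ∈ t₀ means a = x or a ∈ U
        rcases ht₀sub a hat₀ with rfl | haU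
        · exact (notMem_erase a G) h
        · exact Finset.disjoint_left.1 hdis (mem_of_mem_erase h) haU
      · -- a ∈ U₂ = U \ {u,v}; a ∈ t₀ means a = x (not in U) or a ∈ {u, v}
        rw [hU₂, mem_sdiff] at h
        simp only [ht₀, mem_insert, mem_singleton] at hat₀
        rcases hat₀ with rfl | rfl | rfl
        · exact hxU h.1
        · exact h.2 (by simp)
        · exact h.2 (by simp)
    have ht₀T' : t₀ ∉ T' := by
      intro h
      have h2 : t₀ = ∅ := by simpa using (hT'avoid t₀ h).eq_bot
      rw [h2] at ht₀card; simp at ht₀card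
    refine ⟨insert t₀ T', U', hU'sub.trans sdiff_subset, by rw [hU'card, hU₂card]; omega,
      by rw [card_insert_of_notMem ht₀T', hT'card], ?_, ?_⟩
    · intro t ht
      rcases mem_insert.1 ht with rfl | ht
      · refine ⟨ht₀clq, ?_, ?_, ?_⟩
        · refine Finset.disjoint_left.2 fun a hat hau' => ?_
          rcases ht₀sub a hat with h | h
          · subst h
            exact hxU (sdiff_subset (hU'sub hau'))
          · have := hU'sub hau'
            rw [hU₂, mem_sdiff] at this
            simp only [ht₀, mem_insert, mem_singleton] at hat
            rcases hat with rfl | rfl | rfl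
            · exact hxU h
            · exact this.2 (by simp)
            · exact this.2 (by simp)
        · intro a ha
          rcases ht₀sub a ha with rfl | h
          · exact mem_union_left _ hxG
          · exact mem_union_right _ h
        · intro p hp
          simp only [ht₀, mem_insert, mem_singleton] at hp
          rcases hp with rfl | rfl | rfl
          · exact ⟨u, by simp [ht₀], huU, Or.inr hxu⟩
          · exact ⟨p, by simp [ht₀], huU, Or.inl rfl⟩
          · exact ⟨p, by simp [ht₀], hvU, Or.inl rfl⟩
      · obtain ⟨h1, h2, h3, h4⟩ := hT'prop t ht
        refine ⟨h1, h2, h3.trans (union_subset_union (erase_subset x G) sdiff_subset), ?_⟩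
        intro p hp
        obtain ⟨w, hwt, hwU, hw⟩ := h4 p hp
        exact ⟨w, hwt, sdiff_subset hwU, hw⟩
    · rw [coe_insert]
      refine @Set.pairwise_insert_of_symm _ (fun a b => Disjoint a b) _ _ ⟨fun a b h => h.symm⟩ |>.2 ⟨hT'pw, ?_⟩
      intro t ht _
      exact hT'avoid t ht


/-- `R(c(nK₃), mK₂) ≤ 3n + m - 1`. -/
theorem stmt2 (n m : ℕ) (hm : 1 ≤ m) (hmn : m ≤ n)
    (R : SimpleGraph (Fin (3 * n + m - 1))) :
    ConnCliqueMatching R 3 n ∨ CliqueMatching Rᶜ 2 m := by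
  rw [or_iff_not_imp_right]
  intro hB
  -- blue matchings
  set P : Finset (Finset (Fin (3 * n + m - 1))) → Prop := fun T =>
    (∀ t ∈ T, Rᶜ.IsNClique 2 t) ∧
      ((T : Set (Finset (Fin (3 * n + m - 1)))).Pairwise fun a b => Disjoint a b)
    with hP
  have hne : ((univ : Finset (Finset (Finset (Fin (3 * n + m - 1))))).filter P).Nonempty :=
    ⟨∅, mem_filter.2 ⟨mem_univ _, by constructor <;> simp⟩⟩
  obtain ⟨M, hMmem, hMmax'⟩ := Finset.exists_max_image _ Finset.card hne
  have hPM : P M := (mem_filter.1 hMmem).2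
  have hmax : ∀ T : Finset (Finset (Fin (3 * n + m - 1))), P T → T.card ≤ M.card :=
    fun T hT => hMmax' T (mem_filter.2 ⟨mem_univ _, hT⟩)
  set s := M.card with hs
  -- s < m
  have hsm : s < m := by
    by_contra h
    push_neg at h
    obtain ⟨M', hM'M, hM'c⟩ := Finset.exists_subset_card_eq (hs ▸ h : m ≤ M.card)
    exact hB ⟨M', hM'c, fun t ht => hPM.1 t (hM'M ht),
      hPM.2.mono (by exact_mod_cast coe_subset.2 hM'M)⟩
  set W : Finset (Fin (3 * n + m - 1)) := M.biUnion (fun t => t) with hW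
  have heW : ∀ e ∈ M, e ⊆ W := fun e he a ha => mem_biUnion.2 ⟨e, he, ha⟩
  have hWcard : W.card = 2 * s := by
    rw [hW, Finset.card_biUnion (fun x hx y hy hxy => hPM.2 hx hy hxy)]
    rw [Finset.sum_congr rfl (fun t ht => (hPM.1 t ht).2)]
    simp [hs, mul_comm]
  set U : Finset (Fin (3 * n + m - 1)) := univ \ W with hU
  have hUc : U.card = 3 * n + m - 1 - 2 * s := by
    rw [hU, card_sdiff_of_subset (subset_univ W), hWcard, card_univ, Fintype.card_fin]
  have hUW : ∀ a ∈ U, a ∉ W := fun a ha => (mem_sdiff.1 ha).2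
  have hWU : ∀ a ∈ W, a ∉ U := fun a ha h => (mem_sdiff.1 h).2 ha
  -- U is a red clique
  have hclqU : ∀ u ∈ U, ∀ v ∈ U, u ≠ v → R.Adj u v := by
    intro u hu v hv huv
    by_contra hadj
    have hblue : Rᶜ.Adj u v := ⟨huv, hadj⟩
    have hnotM : ({u, v} : Finset (Fin (3 * n + m - 1))) ∉ M := fun h => hUW u hu (heW _ h (by simp))
    have hP' : P (insert {u, v} M) := by
      constructor
      · intro t ht
        rcases mem_insert.1 ht with rfl | ht
        · refine (SimpleGraph.isNClique_iff _).2 ⟨?_, ?_⟩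
          · intro a ha b hb hab
            simp only [coe_insert, Set.mem_insert_iff, coe_singleton,
              Set.mem_singleton_iff] at ha hb
            rcases ha with rfl | rfl <;> rcases hb with rfl | rfl <;>
              first
                | exact absurd rfl hab
                | exact hblue
                | exact hblue.symm
          · rw [card_insert_of_notMem (by simp [huv]), card_singleton]
        · exact hPM.1 t ht
      · rw [coe_insert]
        refine @Set.pairwise_insert_of_symm _ (fun a b => Disjoint a b) _ _ ⟨fun a b h => h.symm⟩ |>.2 ⟨hPM.2, ?_⟩
        intro t ht _
        refine Finset.disjoint_left.2 fun a ha hat => ?_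
        have haW : a ∈ W := heW t ht hat
        rcases mem_insert.1 ha with rfl | ha
        · exact hUW a hu haW
        · rw [mem_singleton] at ha; exact hUW a (ha ▸ hv) haW
    have := hmax _ hP'
    rw [card_insert_of_notMem hnotM] at this
    omega
  -- each matching edge has an almost-all-red endpoint
  have hgoodEdge : ∀ e ∈ M, ∃ x ∈ e, (U.filter fun u => ¬ R.Adj x u).card ≤ 1 := by
    intro e he
    by_contra h
    push_neg at h
    obtain ⟨x, y, hxy, rfl⟩ := Finset.card_eq_two.1 (hPM.1 e he).2
    have hx2 : 2 ≤ ((U.filter fun u => ¬ R.Adj x u)).card := h x (by simp)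
    have hy2 : 2 ≤ ((U.filter fun u => ¬ R.Adj y u)).card := h y (by simp)
    obtain ⟨u1, hu1⟩ := Finset.card_pos.1 (by omega : 0 < (U.filter fun u => ¬ R.Adj x u).card)
    obtain ⟨u2, hu2, hu21⟩ :=
      Finset.exists_mem_ne (s := U.filter fun u => ¬ R.Adj y u) (by omega) u1
    have hu1U : u1 ∈ U := (mem_filter.1 hu1).1
    have hu2U : u2 ∈ U := (mem_filter.1 hu2).1
    have hxW : x ∈ W := heW _ he (by simp)
    have hyW : y ∈ W := heW _ he (by simp)
    have hxu1 : Rᶜ.Adj x u1 := ⟨fun hh => hUW u1 hu1U (hh ▸ hxW), (mem_filter.1 hu1).2⟩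
    have hyu2 : Rᶜ.Adj y u2 := ⟨fun hh => hUW u2 hu2U (hh ▸ hyW), (mem_filter.1 hu2).2⟩
    -- swap e for two edges into U
    set e1 : Finset (Fin (3 * n + m - 1)) := {x, u1} with he1
    set e2 : Finset (Fin (3 * n + m - 1)) := {y, u2} with he2
    have hu1x : u1 ≠ x := fun hh => hUW u1 hu1U (hh ▸ hxW)
    have hu2y : u2 ≠ y := fun hh => hUW u2 hu2U (hh ▸ hyW)
    have hu1y : u1 ≠ y := fun hh => hUW u1 hu1U (hh ▸ hyW)
    have hu2x : u2 ≠ x := fun hh => hUW u2 hu2U (hh ▸ hxW)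
    have hd12 : Disjoint e1 e2 := by
      refine Finset.disjoint_left.2 fun a ha ha2 => ?_
      simp only [he1, he2, mem_insert, mem_singleton] at ha ha2
      rcases ha with rfl | rfl <;> rcases ha2 with rfl | rfl
      · exact hxy rfl
      · exact hu2x rfl
      · exact hu1y rfl
      · exact hu21 rfl
    have hdt : ∀ i ∈ ({e1, e2} : Finset (Finset (Fin (3 * n + m - 1)))), ∀ t ∈ M.erase ({x, y} : Finset (Fin (3 * n + m - 1))),
        Disjoint i t := by
      intro i hi t ht
      have htM := mem_of_mem_erase ht
      have hdet : Disjoint ({x, y} : Finset (Fin (3 * n + m - 1))) t :=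
        hPM.2 (by exact_mod_cast he) (by exact_mod_cast htM) (Ne.symm (ne_of_mem_erase ht))
      refine Finset.disjoint_left.2 fun a ha hat => ?_
      rcases mem_insert.1 hi with rfl | hi
      · simp only [he1, mem_insert, mem_singleton] at ha
        rcases ha with rfl | rfl
        · exact Finset.disjoint_left.1 hdet (by simp) hat
        · exact hUW a hu1U (heW t htM hat)
      · rw [mem_singleton] at hi; subst hi
        simp only [he2, mem_insert, mem_singleton] at ha
        rcases ha with rfl | rfl
        · exact Finset.disjoint_left.1 hdet (by simp) hat
        · exact hUW a hu2U (heW t htM hat)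
    set M' : Finset (Finset (Fin (3 * n + m - 1))) := insert e1 (insert e2 (M.erase {x, y})) with hM'
    have he2E : e2 ∉ M.erase ({x, y} : Finset (Fin (3 * n + m - 1))) := by
      intro hh
      exact hUW u2 hu2U (heW _ (mem_of_mem_erase hh) (by simp [he2]))
    have he1I : e1 ∉ insert e2 (M.erase ({x, y} : Finset (Fin (3 * n + m - 1)))) := by
      intro hh
      rcases mem_insert.1 hh with hh | hh
      · have : u1 ∈ e2 := hh ▸ (by simp [he1] : u1 ∈ e1)
        simp only [he2, mem_insert, mem_singleton] at this
        rcases this with h' | h'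
        · exact hu1y h'
        · exact hu21 h'.symm
      · exact hUW u1 hu1U (heW _ (mem_of_mem_erase hh) (by simp [he1]))
    have hP' : P M' := by
      constructor
      · intro t ht
        rcases mem_insert.1 ht with rfl | ht
        · refine (SimpleGraph.isNClique_iff _).2 ⟨?_, ?_⟩
          · intro a ha b hb hab
            simp only [he1, coe_insert, Set.mem_insert_iff, coe_singleton,
              Set.mem_singleton_iff] at ha hb
            rcases ha with rfl | rfl <;> rcases hb with rfl | rfl <;>
              first
                | exact absurd rfl hab
                | exact hxu1
                | exact hxu1.symm
          · rw [he1, card_insert_of_notMem (by simp [Ne.symm hu1x]), card_singleton]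
        rcases mem_insert.1 ht with rfl | ht
        · refine (SimpleGraph.isNClique_iff _).2 ⟨?_, ?_⟩
          · intro a ha b hb hab
            simp only [he2, coe_insert, Set.mem_insert_iff, coe_singleton,
              Set.mem_singleton_iff] at ha hb
            rcases ha with rfl | rfl <;> rcases hb with rfl | rfl <;>
              first
                | exact absurd rfl hab
                | exact hyu2
                | exact hyu2.symm
          · rw [he2, card_insert_of_notMem (by simp [Ne.symm hu2y]), card_singleton]
        · exact hPM.1 t (mem_of_mem_erase ht)
      · intro a ha b hb hab
        simp only [hM', coe_insert, Set.mem_insert_iff, mem_coe] at ha hb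
        have herasepw : ((M.erase ({x, y} : Finset (Fin (3 * n + m - 1)))
              : Finset (Finset (Fin (3 * n + m - 1)))) : Set (Finset (Fin (3 * n + m - 1)))).Pairwise
            (fun a b => Disjoint a b) := hPM.2.mono (by exact_mod_cast coe_subset.2 (erase_subset _ _))
        rcases ha with rfl | rfl | ha <;> rcases hb with rfl | rfl | hb
        · exact absurd rfl hab
        · exact hd12
        · exact hdt e1 (by simp) b hb
        · exact hd12.symm
        · exact absurd rfl hab
        · exact hdt e2 (by simp) b hb
        · exact (hdt e1 (by simp) a ha).symm
        · exact (hdt e2 (by simp) a ha).symm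
        · exact herasepw (by exact_mod_cast ha) (by exact_mod_cast hb) hab
    have hcard : M'.card = s + 1 := by
      rw [hM', card_insert_of_notMem he1I, card_insert_of_notMem he2E,
        card_erase_of_mem he]
      have : 1 ≤ M.card := Finset.card_pos.2 ⟨_, he⟩
      omega
    have := hmax _ hP'
    omega
  -- pick one good endpoint per edge
  obtain ⟨G, hGcard, hGgood, hGmem⟩ :=
    pick_good (fun x => (U.filter fun u => ¬ R.Adj x u).card ≤ 1) M hPM.2 hgoodEdge
  have hGdisj : Disjoint G U := by
    refine Finset.disjoint_left.2 fun a haG haU => ?_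
    obtain ⟨e, he, hae⟩ := hGmem a haG
    exact hUW a haU (heW e he hae)
  -- greedy triangles through G
  obtain ⟨T1, U', hU'U, hU'card, hT1card, hT1prop, hT1pw⟩ :=
    greedy_tri R s G U (hGcard.trans hs.symm) hGdisj hGgood hclqU (by omega)
  -- partition the rest of U into triangles
  obtain ⟨T2, hT2card, hT2prop, hT2pw⟩ :=
    clique_part R (n - s) U' (by rw [hU'card]; omega)
      (fun u hu v hv h => hclqU u (hU'U hu) v (hU'U hv) h)
  have hdisjT : Disjoint T1 T2 := by
    refine Finset.disjoint_left.2 fun t ht1 ht2 => ?_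
    have h1 : Disjoint t U' := (hT1prop t ht1).2.1
    have h2 : t ⊆ U' := (hT2prop t ht2).2
    have h3 : t = ∅ := by
      rw [← Finset.subset_empty]
      intro a ha
      exact absurd (h2 ha) (Finset.disjoint_left.1 h1 ha)
    have := (hT2prop t ht2).1.2
    rw [h3] at this; simp at this
  -- reachability helper
  have hreach : ∀ t ∈ T1 ∪ T2, ∀ p ∈ t, ∃ u ∈ U, (p = u ∨ R.Adj p u) := by
    intro t ht p hp
    rcases mem_union.1 ht with ht | ht
    · obtain ⟨u, _, huU, hu⟩ := (hT1prop t ht).2.2.2 p hp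
      exact ⟨u, huU, hu⟩
    · exact ⟨p, hU'U ((hT2prop t ht).2 hp), Or.inl rfl⟩
  refine ⟨T1 ∪ T2, ?_, ?_, ?_, ?_⟩
  · rw [card_union_of_disjoint hdisjT, hT1card, hT2card]; omega
  · intro t ht
    rcases mem_union.1 ht with ht | ht
    · exact (hT1prop t ht).1
    · exact (hT2prop t ht).1
  · intro a ha b hb hab
    simp only [coe_union, Set.mem_union, mem_coe] at ha hb
    rcases ha with ha | ha <;> rcases hb with hb | hb
    · exact hT1pw (by exact_mod_cast ha) (by exact_mod_cast hb) hab
    · exact Finset.disjoint_left.2 fun c hca hcb =>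
        Finset.disjoint_left.1 (hT1prop a ha).2.1 hca ((hT2prop b hb).2 hcb)
    · exact (Finset.disjoint_left.2 fun c hcb hca =>
        Finset.disjoint_left.1 (hT1prop b hb).2.1 hcb ((hT2prop a ha).2 hca)).symm
    · exact hT2pw (by exact_mod_cast ha) (by exact_mod_cast hb) hab
  · rintro p q ⟨t, ht, hpt⟩ ⟨t', ht', hqt'⟩
    obtain ⟨up, hupU, hup⟩ := hreach t ht p hpt
    obtain ⟨uq, huqU, huq⟩ := hreach t' ht' q hqt'
    have h1 : R.Reachable p up := by
      rcases hup with rfl | h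
      · exact SimpleGraph.Reachable.refl _
      · exact h.reachable
    have h2 : R.Reachable q uq := by
      rcases huq with rfl | h
      · exact SimpleGraph.Reachable.refl _
      · exact h.reachable
    have h3 : R.Reachable up uq := by
      by_cases h : up = uq
      · exact h ▸ SimpleGraph.Reachable.refl _
      · exact (hclqU up hupU uq huqU h).reachable
    exact h1.trans (h3.trans h2.symm)
end

section
/- For 1 ≤ m ≤ n, there exists a 2-coloring of the edges of K_{3n+m-2} containing no red nK_3 (n vertex-disjoint red triangles) and no blue matching of size m. Hence R(c(nK_3), mK_2) = 3n + m - 1. -/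
open Finset

/-- Lower bound `R(c(nK₃), mK₂) > 3n + m - 2`. -/
theorem stmt3 (n m : ℕ) (hm : 1 ≤ m) (hmn : m ≤ n) :
    ∃ R : SimpleGraph (Fin (3 * n + m - 2)),
      ¬ CliqueMatching R 3 n ∧ ¬ CliqueMatching Rᶜ 2 m := by
  refine ⟨SimpleGraph.fromRel (fun u v => u.val < 3*n-1 ∧ v.val < 3*n-1), ?_, ?_⟩
  · rintro ⟨T, hcard, hcl, hdis⟩
    have hsub : ∀ t ∈ T, ∀ v ∈ t, v.val < 3*n-1 := by
      intro t ht v hv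
      obtain ⟨hclq, hc3⟩ := hcl t ht
      obtain ⟨w, hw, hwv⟩ : ∃ w ∈ t, w ≠ v :=
        Finset.exists_mem_ne (by omega) v
      have := hclq (Finset.mem_coe.2 hw) (Finset.mem_coe.2 hv) hwv
      simp only [SimpleGraph.fromRel_adj] at this
      tauto
    have hU : (T.biUnion (fun a => a)).card = 3 * n := by
      rw [Finset.card_biUnion (fun a ha b hb hab =>
        hdis (Finset.mem_coe.2 ha) (Finset.mem_coe.2 hb) hab)]
      rw [Finset.sum_congr rfl (fun t ht => (hcl t ht).2), Finset.sum_const, hcard,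
        smul_eq_mul, mul_comm]
    have hle : (T.biUnion (fun a => a)).card ≤ 3*n-1 := by
      have := Finset.card_le_card_of_injOn (f := Fin.val) (t := Finset.range (3*n-1))
        (fun v hv => by
          obtain ⟨t, ht, hvt⟩ := Finset.mem_biUnion.1 hv
          exact Finset.mem_range.2 (hsub t ht v hvt))
        (Set.injOn_of_injective Fin.val_injective)
      simpa using this
    omega
  · rintro ⟨T, hcard, hcl, hdis⟩
    have hwit : ∀ t ∈ T, (t.filter (fun v => 3*n-1 ≤ v.val)).Nonempty := by
      intro t ht
      obtain ⟨hclq, hc2⟩ := hcl t ht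
      obtain ⟨a, b, hab, htab⟩ := Finset.card_eq_two.1 hc2
      have hadj := hclq (by simp [htab] : a ∈ (t : Set _)) (by simp [htab]) hab
      rw [SimpleGraph.compl_adj] at hadj
      simp only [SimpleGraph.fromRel_adj, not_and, not_or] at hadj
      have := hadj.2 hadj.1
      rcases Nat.lt_or_ge a.val (3*n-1) with h | h
      · rcases Nat.lt_or_ge b.val (3*n-1) with h' | h'
        · exfalso; tauto
        · exact ⟨b, Finset.mem_filter.2 ⟨by simp [htab], h'⟩⟩
      · exact ⟨a, Finset.mem_filter.2 ⟨by simp [htab], h⟩⟩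
    set g : Finset (Fin (3*n+m-2)) → ℕ := fun t =>
      if h : (t.filter (fun v => 3*n-1 ≤ v.val)).Nonempty then
        ((t.filter (fun v => 3*n-1 ≤ v.val)).min' h).val else 0 with hg
    have hcle : T.card ≤ (Finset.Ico (3*n-1) (3*n+m-2)).card := by
      apply Finset.card_le_card_of_injOn g
      · intro t ht
        rw [hg]
        simp only [dif_pos (hwit t ht)]
        have := Finset.mem_filter.1 (Finset.min'_mem _ (hwit t ht))
        exact Finset.mem_Ico.2 ⟨this.2, ((t.filter _).min' (hwit t ht)).isLt⟩
      · intro t1 ht1 t2 ht2 heq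
        by_contra hne
        have hd := hdis ht1 ht2 hne
        rw [hg] at heq
        simp only [dif_pos (hwit t1 ht1), dif_pos (hwit t2 ht2)] at heq
        have hv1 := Finset.mem_filter.1 (Finset.min'_mem _ (hwit t1 ht1))
        have hv2 := Finset.mem_filter.1 (Finset.min'_mem _ (hwit t2 ht2))
        have : (t1.filter (fun v => 3*n-1 ≤ v.val)).min' (hwit t1 ht1) =
            (t2.filter (fun v => 3*n-1 ≤ v.val)).min' (hwit t2 ht2) :=
          Fin.val_injective heq
        exact Finset.disjoint_left.1 hd hv1.1 (this ▸ hv2.1)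
    rw [hcard, Nat.card_Ico] at hcle
    omega
end

section
/- For n ≥ 2, there exists a 2-coloring of the edges of K_{7n-3} with no monochromatic connected subgraph containing n pairwise vertex-disjoint triangles of the same color. Combined with the upper bound, R(c(nK_3), c(nK_3)) = 7n - 2. -/
open Finset

/-- Lower bound: a 2-coloring of `K_{7n-3}` with no monochromatic connected
triangle matching of size `n`. -/
theorem stmt5 (n : ℕ) (hn : 2 ≤ n) :
    ∃ R : SimpleGraph (Fin (7 * n - 3)),
      ¬ ConnCliqueMatching R 3 n ∧ ¬ ConnCliqueMatching Rᶜ 3 n := by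
  set N := 7 * n - 3 with hN
  let f : Fin N → ℕ := fun u => if u.val < 3 * n - 1 then 0 else if u.val < 6 * n - 2 then 1 else 2
  have hfle : ∀ u : Fin N, f u = 0 ∨ f u = 1 ∨ f u = 2 := by
    intro u; simp only [f]; split_ifs <;> simp
  let R : SimpleGraph (Fin N) :=
    { Adj := fun u v => u ≠ v ∧ f u = f v ∧ f u ≠ 2
      symm := by
        constructor
        rintro u v ⟨h1, h2, h3⟩
        exact ⟨h1.symm, h2.symm, h2 ▸ h3⟩
      loopless := ⟨fun u h => h.1 rfl⟩ }
  have hwalk : ∀ (u v : Fin N), R.Walk u v → f u = f v := by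
    intro u v p
    induction p with
    | nil => rfl
    | cons h p ih => exact h.2.1.trans ih
  refine ⟨R, ?_, ?_⟩
  · -- red part
    rintro ⟨T, hTcard, hclique, hdisj, hconn⟩
    have hTne : T.Nonempty := by
      rw [← Finset.card_pos, hTcard]; omega
    obtain ⟨t0, ht0⟩ := hTne
    have ht0card : t0.card = 3 := (hclique t0 ht0).2
    obtain ⟨v0, hv0⟩ : t0.Nonempty := by rw [← Finset.card_pos, ht0card]; omega
    -- f v0 ≠ 2
    have hcne : f v0 ≠ 2 := by
      obtain ⟨w, hw, hwne⟩ := Finset.exists_mem_ne (by omega : 1 < t0.card) v0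
      have hadj : R.Adj w v0 := (hclique t0 ht0).1 (Finset.mem_coe.mpr hw)
        (Finset.mem_coe.mpr hv0) hwne
      rw [← hadj.2.1]
      exact hadj.2.2
    -- all vertices of all triangles have f = f v0
    have hall : ∀ t ∈ T, ∀ u ∈ t, f u = f v0 := by
      intro t ht u hu
      exact (hconn u v0 ⟨t, ht, hu⟩ ⟨t0, ht0, hv0⟩).elim (hwalk u v0)
    have hScard : (T.biUnion id).card = 3 * n := by
      rw [Finset.card_biUnion]
      · simp only [id_eq]
        rw [Finset.sum_congr rfl (fun t ht => (hclique t ht).2), Finset.sum_const, hTcard,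
          smul_eq_mul]
        omega
      · intro x hx y hy hxy
        exact hdisj (Finset.mem_coe.mpr hx) (Finset.mem_coe.mpr hy) hxy
    have hsub : T.biUnion id ⊆ Finset.univ.filter (fun u => f u = f v0) := by
      intro u hu
      obtain ⟨t, ht, hut⟩ := Finset.mem_biUnion.mp hu
      exact Finset.mem_filter.mpr ⟨Finset.mem_univ u, hall t ht u hut⟩
    have hbound : (Finset.univ.filter (fun u : Fin N => f u = f v0)).card ≤ 3 * n - 1 := by
      rcases hfle v0 with h0 | h1 | h2
      · have h := Finset.card_le_card_of_injOn (Fin.val)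
          (s := Finset.univ.filter (fun u : Fin N => f u = f v0))
          (t := Finset.range (3 * n - 1)) ?_ (fun a _ b _ h => Fin.val_injective h)
        · rwa [Finset.card_range] at h
        · intro u hu
          have h2 := (Finset.mem_filter.mp hu).2
          rw [h0] at h2
          simp only [f] at h2
          rw [Finset.mem_coe, Finset.mem_range]
          split_ifs at h2 <;> omega
      · have h := Finset.card_le_card_of_injOn (Fin.val)
          (s := Finset.univ.filter (fun u : Fin N => f u = f v0))
          (t := Finset.Ico (3 * n - 1) (6 * n - 2)) ?_ (fun a _ b _ h => Fin.val_injective h)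
        · rw [Nat.card_Ico] at h; omega
        · intro u hu
          have h2 := (Finset.mem_filter.mp hu).2
          rw [h1] at h2
          simp only [f] at h2
          rw [Finset.mem_coe, Finset.mem_Ico]
          split_ifs at h2 <;> omega
      · exact absurd h2 hcne
    have := Finset.card_le_card hsub
    omega
  · -- blue part
    rintro ⟨T, hTcard, hclique, hdisj, -⟩
    have hC : ∀ t ∈ T, ∃ u ∈ t, f u = 2 := by
      intro t ht
      by_contra h
      push_neg at h
      have hmap : ∀ u ∈ t, f u ∈ ({0, 1} : Finset ℕ) := by
        intro u hu
        rcases hfle u with h0 | h1 | h2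
        · simp [h0]
        · simp [h1]
        · exact absurd h2 (h u hu)
      have hlt : ({0, 1} : Finset ℕ).card < t.card := by
        rw [(hclique t ht).2]; norm_num
      obtain ⟨u, hu, v, hv, huv, hfe⟩ :=
        Finset.exists_ne_map_eq_of_card_lt_of_maps_to hlt hmap
      have hadj : Rᶜ.Adj u v := (hclique t ht).1 (Finset.mem_coe.mpr hu)
        (Finset.mem_coe.mpr hv) huv
      rw [SimpleGraph.compl_adj] at hadj
      exact hadj.2 ⟨huv, hfe, h u hu⟩
    have hNpos : 0 < N := by omega
    let g : Finset (Fin N) → Fin N := fun t =>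
      if h : (t.filter fun u => f u = 2).Nonempty then h.choose else ⟨0, hNpos⟩
    have hg : ∀ t ∈ T, g t ∈ t ∧ f (g t) = 2 := by
      intro t ht
      obtain ⟨u, hu, hfu⟩ := hC t ht
      have hne : (t.filter fun u => f u = 2).Nonempty := ⟨u, Finset.mem_filter.mpr ⟨hu, hfu⟩⟩
      have hs := hne.choose_spec
      rw [Finset.mem_filter] at hs
      simp only [g, dif_pos hne]
      exact hs
    have hcard2 : (Finset.univ.filter (fun u : Fin N => f u = 2)).card ≤ n - 1 := by
      have h := Finset.card_le_card_of_injOn (Fin.val)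
        (s := Finset.univ.filter (fun u : Fin N => f u = 2))
        (t := Finset.Ico (6 * n - 2) (7 * n - 3)) ?_ (fun a _ b _ h => Fin.val_injective h)
      · rw [Nat.card_Ico] at h; omega
      · intro u hu
        have h2 := (Finset.mem_filter.mp hu).2
        simp only [f] at h2
        have := u.isLt
        rw [Finset.mem_coe, Finset.mem_Ico]
        split_ifs at h2 <;> omega
    have hle : T.card ≤ (Finset.univ.filter (fun u : Fin N => f u = 2)).card := by
      apply Finset.card_le_card_of_injOn g
      · intro t ht
        exact Finset.mem_filter.mpr ⟨Finset.mem_univ _, (hg t ht).2⟩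
      · intro a ha b hb hab
        by_contra hne
        have hd := hdisj (Finset.mem_coe.mpr ha) (Finset.mem_coe.mpr hb) hne
        exact (Finset.disjoint_left.mp hd (hg a ha).1) (hab ▸ (hg b hb).1)
    omega
end

section
/- Suppose the edges of a graph G with minimum degree δ(G) ≥ 3|V(G)|/4 are 2-colored. Then there is a monochromatic connected subgraph on more than δ(G) vertices. -/
open Finset

noncomputable def cset {V : Type*} [Fintype V] (H : SimpleGraph V) (v : V) : Finset V :=
  @Finset.filter _ (H.Reachable v ·) (fun _ => Classical.dec _) Finset.univ

lemma mem_cset {V : Type*} [Fintype V] {H : SimpleGraph V} {v u : V} :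
    u ∈ cset H v ↔ H.Reachable v u := by
  simp [cset]

lemma self_mem_cset {V : Type*} [Fintype V] (H : SimpleGraph V) (v : V) :
    v ∈ cset H v := mem_cset.2 (SimpleGraph.Reachable.refl v)

lemma cset_eq {V : Type*} [Fintype V] {H : SimpleGraph V} {v w : V}
    (hw : w ∈ cset H v) : cset H w = cset H v := by
  rw [mem_cset] at hw
  ext x
  rw [mem_cset, mem_cset]
  exact ⟨fun h => hw.trans h, fun h => hw.symm.trans h⟩

lemma cset_disj {V : Type*} [Fintype V] {H : SimpleGraph V} {v w x : V}
    (hw : w ∉ cset H v) (hx : x ∈ cset H w) : x ∉ cset H v := by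
  intro hx2
  have h1 : cset H x = cset H w := cset_eq hx
  have h2 : cset H x = cset H v := cset_eq hx2
  have h3 : cset H w = cset H v := h1.symm.trans h2
  exact hw (h3 ▸ self_mem_cset H w)

lemma cset_conn {V : Type*} [Fintype V] (H : SimpleGraph V) (v : V) :
    (H.induce ((cset H v : Finset V) : Set V)).Connected := by
  set S : Set V := ((cset H v : Finset V) : Set V) with hS
  have memS : ∀ x, x ∈ S ↔ H.Reachable v x := by
    intro x; rw [hS]; simp [mem_cset]
  have walk_ind : ∀ {a b : V} (_ : H.Walk a b) (ha : a ∈ S) (hb : b ∈ S),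
      (H.induce S).Reachable ⟨a, ha⟩ ⟨b, hb⟩ := by
    intro a b p
    induction p with
    | nil => intro ha hb; exact SimpleGraph.Reachable.refl _
    | @cons a c b h p ih =>
      intro ha hb
      have hc : c ∈ S := (memS c).2 (((memS a).1 ha).trans h.reachable)
      have hadj : (H.induce S).Adj ⟨a, ha⟩ ⟨c, hc⟩ := h
      exact hadj.reachable.trans (ih hc hb)
  rw [SimpleGraph.connected_iff]
  constructor
  · rintro ⟨a, ha⟩ ⟨b, hb⟩
    have hr : H.Reachable a b := ((memS a).1 ha).symm.trans ((memS b).1 hb)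
    obtain ⟨p⟩ := hr
    exact walk_ind p ha hb
  · exact ⟨⟨v, (memS v).2 (SimpleGraph.Reachable.refl v)⟩⟩


/-- If `δ(G) ≥ 3|V(G)|/4` and the edges of `G` are 2-colored, then there is a
monochromatic connected subgraph on more than `δ(G)` vertices. -/
theorem stmt6 {V : Type*} [Fintype V] [Nonempty V] (G : SimpleGraph V) [DecidableRel G.Adj]
    (hdeg : 3 * Fintype.card V ≤ 4 * G.minDegree)
    (R : SimpleGraph V) (hR : R ≤ G) :
    ∃ S : Finset V, G.minDegree < S.card ∧
      ((R.induce (S : Set V)).Connected ∨ ((G \ R).induce (S : Set V)).Connected) := by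
  classical
  by_contra hcon
  push_neg at hcon
  set Bl := G \ R with hBl
  set n := Fintype.card V with hn
  set δ := G.minDegree with hδ
  have hA : ∀ v, (cset R v).card ≤ δ := by
    intro v
    by_contra h'
    exact (hcon (cset R v) (lt_of_not_ge h')).1 (cset_conn R v)
  have hC : ∀ v, (cset Bl v).card ≤ δ := by
    intro v
    by_contra h'
    exact (hcon (cset Bl v) (lt_of_not_ge h')).2 (cset_conn Bl v)
  have hnδ : δ < n :=
    lt_of_le_of_lt (G.minDegree_le_degree (Classical.arbitrary V)) (G.degree_lt_card_verts _)
  have cardle : ∀ s : Finset V, s.card ≤ n := fun s => Finset.card_le_univ s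
  have covN : ∀ v, insert v (G.neighborFinset v) ⊆ cset R v ∪ cset Bl v := by
    intro v x hx
    rcases Finset.mem_insert.1 hx with h | h
    · rw [h]; exact Finset.mem_union_left _ (self_mem_cset R v)
    · have hadj : G.Adj v x := (SimpleGraph.mem_neighborFinset (G := G) v x).1 h
      by_cases hr : R.Adj v x
      · exact Finset.mem_union_left _ (mem_cset.2 hr.reachable)
      · have hb : Bl.Adj v x := by rw [hBl, SimpleGraph.sdiff_adj]; exact ⟨hadj, hr⟩
        exact Finset.mem_union_right _ (mem_cset.2 hb.reachable)
  have key1 : ∀ v, δ + 1 ≤ (cset R v ∪ cset Bl v).card := by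
    intro v
    have h1 : (insert v (G.neighborFinset v)).card = G.degree v + 1 := by
      rw [Finset.card_insert_of_notMem (G.notMem_neighborFinset_self v),
        G.card_neighborFinset_eq_degree]
    have h2 := G.minDegree_le_degree v
    have h3 := Finset.card_le_card (covN v)
    omega
  have disjA : ∀ {v u : V}, u ∉ cset R v → Disjoint (cset R u) (cset R v) := by
    intro v u hu
    rw [Finset.disjoint_left]
    intro x hx
    exact cset_disj hu hx
  have disjC : ∀ {v u : V}, u ∉ cset Bl v → Disjoint (cset Bl u) (cset Bl v) := by
    intro v u hu
    rw [Finset.disjoint_left]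
    intro x hx
    exact cset_disj hu hx
  have key2 : ∀ y z : V, 0 < (cset R y ∩ cset Bl z).card →
      δ + 1 ≤ (cset R y ∪ cset Bl z).card := by
    intro y z hpos
    obtain ⟨w, hw⟩ := Finset.card_pos.1 hpos
    rw [Finset.mem_inter] at hw
    have h1 : cset R w = cset R y := cset_eq hw.1
    have h2 : cset Bl w = cset Bl z := cset_eq hw.2
    have := key1 w
    rwa [h1, h2] at this
  have cross : ∀ v z : V, z ∉ cset R v ∪ cset Bl v →
      (0 < (cset R v ∩ cset Bl z).card ∧ (cset R z ∩ cset Bl v).card = 0 ∧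
        2 * δ + 2 ≤ (cset R v ∩ cset Bl z).card + n) ∨
      (0 < (cset R z ∩ cset Bl v).card ∧ (cset R v ∩ cset Bl z).card = 0 ∧
        2 * δ + 2 ≤ (cset R z ∩ cset Bl v).card + n) := by
    intro v z hz
    rw [Finset.mem_union] at hz
    push_neg at hz
    obtain ⟨hzA, hzC⟩ := hz
    have hdA : Disjoint (cset R z) (cset R v) := disjA hzA
    have hdC : Disjoint (cset Bl z) (cset Bl v) := disjC hzC
    have hlow : (cset R v ∪ cset Bl v) ∩ (cset R z ∪ cset Bl z) ⊆
        (cset R v ∩ cset Bl z) ∪ (cset R z ∩ cset Bl v) := by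
      intro x hx
      simp only [Finset.mem_inter, Finset.mem_union] at hx ⊢
      obtain ⟨h1 | h1, h2 | h2⟩ := hx
      · exact absurd h1 (Finset.disjoint_left.1 hdA h2)
      · exact Or.inl ⟨h1, h2⟩
      · exact Or.inr ⟨h2, h1⟩
      · exact absurd h1 (Finset.disjoint_left.1 hdC h2)
    have hlowc : (cset R v ∪ cset Bl v).card + (cset R z ∪ cset Bl z).card ≤
        n + ((cset R v ∩ cset Bl z).card + (cset R z ∩ cset Bl v).card) := by
      have e1 := Finset.card_union_add_card_inter (cset R v ∪ cset Bl v) (cset R z ∪ cset Bl z)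
      have e2 := cardle ((cset R v ∪ cset Bl v) ∪ (cset R z ∪ cset Bl z))
      have e3 := Finset.card_le_card hlow
      have e4 := Finset.card_union_le (cset R v ∩ cset Bl z) (cset R z ∩ cset Bl v)
      omega
    have hnot : ¬(0 < (cset R v ∩ cset Bl z).card ∧ 0 < (cset R z ∩ cset Bl v).card) := by
      rintro ⟨ha, hb⟩
      have k1 := key2 v z ha
      have k2 := key2 z v hb
      have d1 : Disjoint (cset R z ∩ cset Bl v) (cset R v ∪ cset Bl z) := by
        rw [Finset.disjoint_union_right]
        constructor
        · exact hdA.mono_left Finset.inter_subset_left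
        · exact (hdC.symm).mono_left Finset.inter_subset_right
      have d2 : Disjoint (cset R v ∩ cset Bl z) (cset R z ∪ cset Bl v) := by
        rw [Finset.disjoint_union_right]
        constructor
        · exact (hdA.symm).mono_left Finset.inter_subset_left
        · exact hdC.mono_left Finset.inter_subset_right
      have c1 : (cset R z ∩ cset Bl v).card + (cset R v ∪ cset Bl z).card ≤ n := by
        have := Finset.card_union_of_disjoint d1
        have := cardle ((cset R z ∩ cset Bl v) ∪ (cset R v ∪ cset Bl z))
        omega
      have c2 : (cset R v ∩ cset Bl z).card + (cset R z ∪ cset Bl v).card ≤ n := by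
        have := Finset.card_union_of_disjoint d2
        have := cardle ((cset R v ∩ cset Bl z) ∪ (cset R z ∪ cset Bl v))
        omega
      have k3 := key1 v
      have k4 := key1 z
      omega
    have k3 := key1 v
    have k4 := key1 z
    by_cases ha : (cset R v ∩ cset Bl z).card = 0
    · right
      refine ⟨by omega, ha, by omega⟩
    · left
      have hb : (cset R z ∩ cset Bl v).card = 0 := by
        by_contra hb'
        exact hnot ⟨by omega, by omega⟩
      exact ⟨by omega, hb, by omega⟩
  have KEY : ∀ v u : V, u ∉ cset R v ∪ cset Bl v → 0 < (cset R v ∩ cset Bl u).card → False := by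
    intro v u hu hY
    rw [Finset.mem_union] at hu
    push_neg at hu
    obtain ⟨huA, huC⟩ := hu
    have hYheavy : 2 * δ + 2 ≤ (cset R v ∩ cset Bl u).card + n := by
      rcases cross v u (by rw [Finset.mem_union]; push_neg; exact ⟨huA, huC⟩) with
        ⟨_, _, h⟩ | ⟨_, h0, _⟩
      · exact h
      · omega
    obtain ⟨y, hy⟩ := Finset.card_pos.1 hY
    rw [Finset.mem_inter] at hy
    have hAy : cset R y = cset R v := cset_eq hy.1
    have hCy : cset Bl y = cset Bl u := cset_eq hy.2
    by_cases hcov : ∀ z, z ∈ cset R v ∪ cset Bl u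
    · have hsub : cset R u ∪ cset Bl u ⊆ cset Bl u := by
        intro x hx
        rcases Finset.mem_union.1 hx with h | h
        · rcases Finset.mem_union.1 (hcov x) with h2 | h2
          · exact absurd h2 (cset_disj huA h)
          · exact h2
        · exact h
      have := key1 u
      have := Finset.card_le_card hsub
      have := hC u
      omega
    · push_neg at hcov
      obtain ⟨z, hz⟩ := hcov
      rw [Finset.mem_union] at hz
      push_neg at hz
      obtain ⟨hzA, hzC⟩ := hz
      have hz' : z ∉ cset R y ∪ cset Bl y := by
        rw [hAy, hCy, Finset.mem_union]; push_neg; exact ⟨hzA, hzC⟩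
      rcases cross y z hz' with ⟨hpos, _, hheavy⟩ | ⟨hpos, _, hheavy⟩
      · rw [hAy] at hheavy
        have hd : Disjoint (cset R v ∩ cset Bl u) (cset R v ∩ cset Bl z) := by
          have : Disjoint (cset Bl u) (cset Bl z) := (disjC hzC).symm
          exact (this.mono_left Finset.inter_subset_right).mono_right Finset.inter_subset_right
        have hle : (cset R v ∩ cset Bl u).card + (cset R v ∩ cset Bl z).card ≤ n := by
          have := Finset.card_union_of_disjoint hd
          have := cardle ((cset R v ∩ cset Bl u) ∪ (cset R v ∩ cset Bl z))
          omega
        omega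
      · rw [hCy] at hheavy
        have hd : Disjoint (cset R v ∩ cset Bl u) (cset R z ∩ cset Bl u) := by
          have : Disjoint (cset R v) (cset R z) := (disjA hzA).symm
          exact (this.mono_left Finset.inter_subset_left).mono_right Finset.inter_subset_left
        have hle : (cset R v ∩ cset Bl u).card + (cset R z ∩ cset Bl u).card ≤ n := by
          have := Finset.card_union_of_disjoint hd
          have := cardle ((cset R v ∩ cset Bl u) ∪ (cset R z ∩ cset Bl u))
          omega
        omega
  obtain ⟨v⟩ : Nonempty V := inferInstance
  obtain ⟨u, hu⟩ : ∃ u, u ∉ cset R v ∪ cset Bl v := by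
    by_contra hno
    push_neg at hno
    obtain ⟨w, hw⟩ : ∃ w, w ∉ cset R v := by
      by_contra h2
      push_neg at h2
      have hsub : (Finset.univ : Finset V) ⊆ cset R v := fun x _ => h2 x
      have := Finset.card_le_card hsub
      rw [Finset.card_univ] at this
      have := hA v
      omega
    have hwC : w ∈ cset Bl v := (Finset.mem_union.1 (hno w)).resolve_left hw
    have hCw : cset Bl w = cset Bl v := cset_eq hwC
    have hsub : cset R w ∪ cset Bl w ⊆ cset Bl w := by
      intro x hx
      rcases Finset.mem_union.1 hx with h | h
      · have hxAv : x ∉ cset R v := cset_disj hw h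
        have : x ∈ cset Bl v := (Finset.mem_union.1 (hno x)).resolve_left hxAv
        rwa [hCw]
      · exact h
    have := key1 w
    have := Finset.card_le_card hsub
    have := hC w
    omega
  have husym : v ∉ cset R u ∪ cset Bl u := by
    rw [Finset.mem_union] at hu ⊢
    push_neg at hu
    rintro (h | h)
    · have : u ∈ cset R v := by
        have he : cset R v = cset R u := cset_eq h
        rw [he]; exact self_mem_cset R u
      exact hu.1 this
    · have : u ∈ cset Bl v := by
        have he : cset Bl v = cset Bl u := cset_eq h
        rw [he]; exact self_mem_cset Bl u
      exact hu.2 this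
  rcases cross v u hu with ⟨hpos, _, _⟩ | ⟨hpos, _, _⟩
  · exact KEY v u hu hpos
  · exact KEY u v husym hpos
end

section
/- For 1 ≤ m ≤ n and 0 ≤ t ≤ n, let G be a graph on 3n + m - 1 + 2t vertices in which every vertex has fewer than t non-neighbors (i.e., minimum degree greater than 3n + m - 2 + t). Then for every 2-coloring (red/blue) of the edges of G, either the red graph contains a connected subgraph with n pairwise vertex-disjoint red triangles, or there is a blue matching of size m. -/
open Finset

set_option linter.unusedSectionVars false
set_option maxHeartbeats 1000000

section Aux
variable {V : Type*} [Fintype V] [DecidableEq V]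

open Finset

variable {V : Type*} [Fintype V] [DecidableEq V]

lemma pair_clique (G : SimpleGraph V) {a b : V} (h : G.Adj a b) : G.IsNClique 2 {a, b} := by
  have h1 : G.IsNClique 1 {b} := SimpleGraph.isNClique_one.2 ⟨b, rfl⟩
  have h2 := h1.insert (a := a) (by intro c hc; simp only [mem_singleton] at hc; subst hc; exact h)
  simpa using h2

lemma greedy (R G : SimpleGraph V) (t : ℕ)
    (hnon : ∀ (v : V) (C : Finset V), v ∉ C → (∀ w ∈ C, ¬ G.Adj v w) → C.card < t) :
    ∀ (b a : ℕ) (U A : Finset V),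
      U.card = b → Disjoint U A →
      (∀ v ∈ A, ∀ w ∈ A, G.Adj v w → R.Adj v w) →
      (∀ u ∈ U, ∀ x ∈ A, ∀ y ∈ A,
        G.Adj u x → ¬ R.Adj u x → G.Adj u y → ¬ R.Adj u y → x = y) →
      3*a + 2*b + 2*t ≤ A.card + 1 →
      ∃ T : Finset (Finset V), T.card = a + b ∧ (∀ s ∈ T, R.IsNClique 3 s) ∧
        (∀ s ∈ T, ∀ r ∈ T, s ≠ r → Disjoint s r) ∧
        (∀ s ∈ T, ∃ v ∈ s, v ∈ A) ∧ (∀ s ∈ T, ∀ v ∈ s, v ∈ A ∨ v ∈ U) := by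
  classical
  have hcount : ∀ (v : V) (A : Finset V), A.card ≤ (A.filter fun w => G.Adj v w).card + t := by
    intro v A
    have hsplit := Finset.card_filter_add_card_filter_not (s := A)
      (p := fun w => G.Adj v w)
    have hbad : ((A.filter fun w => ¬ G.Adj v w).erase v).card < t := by
      refine hnon v _ (Finset.notMem_erase v _) ?_
      intro w hw
      exact (Finset.mem_filter.1 (Finset.mem_of_mem_erase hw)).2
    have h2 := Finset.pred_card_le_card_erase (s := A.filter fun w => ¬ G.Adj v w) (a := v)
    omega
  have hcount' : ∀ (v : V) (A : Finset V), v ∉ A →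
      A.card + 1 ≤ (A.filter fun w => G.Adj v w).card + t := by
    intro v A hvA
    have hsplit := Finset.card_filter_add_card_filter_not (s := A)
      (p := fun w => G.Adj v w)
    have hbad : (A.filter fun w => ¬ G.Adj v w).card < t := by
      refine hnon v _ (fun h => hvA (Finset.mem_filter.1 h).1) ?_
      intro w hw
      exact (Finset.mem_filter.1 hw).2
    omega
  intro b
  induction b with
  | zero =>
    intro a
    induction a with
    | zero =>
      intro U A _ _ _ _ _
      exact ⟨∅, by simp⟩
    | succ a ih =>
      intro U A hU hdisj hred hblue hcard
      obtain ⟨v, hv⟩ : A.Nonempty := Finset.card_pos.1 (by omega)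
      have ht : 1 ≤ t := hnon v ∅ (by simp) (by simp)
      obtain ⟨w, hw⟩ : (A.filter fun w => G.Adj v w).Nonempty := by
        apply Finset.card_pos.1
        have := hcount v A
        omega
      have hvw : G.Adj v w := (Finset.mem_filter.1 hw).2
      have hwA : w ∈ A := (Finset.mem_filter.1 hw).1
      obtain ⟨z, hz⟩ : ((A.filter fun x => G.Adj v x).filter fun x => G.Adj w x).Nonempty := by
        apply Finset.card_pos.1
        have h1 := hcount w (A.filter fun x => G.Adj v x)
        have h2 := hcount v A
        omega
      have hwz : G.Adj w z := (Finset.mem_filter.1 hz).2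
      have hvz : G.Adj v z := (Finset.mem_filter.1 (Finset.mem_filter.1 hz).1).2
      have hzA : z ∈ A := (Finset.mem_filter.1 (Finset.mem_filter.1 hz).1).1
      have rvw : R.Adj v w := hred v hv w hwA hvw
      have rvz : R.Adj v z := hred v hv z hzA hvz
      have rwz : R.Adj w z := hred w hwA z hzA hwz
      have hclique : R.IsNClique 3 {v, w, z} := SimpleGraph.is3Clique_triple_iff.2 ⟨rvw, rvz, rwz⟩
      have hsub : ({v, w, z} : Finset V) ⊆ A := by
        intro x hx
        simp only [Finset.mem_insert, Finset.mem_singleton] at hx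
        rcases hx with rfl | rfl | rfl <;> assumption
      have hc3 : ({v, w, z} : Finset V).card = 3 := by
        rw [Finset.card_insert_of_notMem (by simp [hvw.ne, hvz.ne]),
          Finset.card_pair hwz.ne]
      have hAs : (A \ {v, w, z}).card = A.card - 3 := by
        rw [Finset.card_sdiff_of_subset hsub, hc3]
      have hsubc := Finset.card_le_card hsub
      obtain ⟨T, hT1, hT2, hT3, hT4, hT5⟩ := ih U (A \ {v, w, z}) hU
        (hdisj.mono_right Finset.sdiff_subset)
        (fun x hx y hy => hred x (Finset.mem_sdiff.1 hx).1 y (Finset.mem_sdiff.1 hy).1)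
        (fun u hu x hx y hy => hblue u hu x (Finset.mem_sdiff.1 hx).1 y (Finset.mem_sdiff.1 hy).1)
        (by omega)
      have hnotmem : ({v, w, z} : Finset V) ∉ T := by
        intro hmem
        rcases hT5 _ hmem v (by simp) with h | h
        · simp at h
        · exact Finset.disjoint_left.1 hdisj h hv
      refine ⟨insert {v, w, z} T, ?_, ?_, ?_, ?_, ?_⟩
      · rw [Finset.card_insert_of_notMem hnotmem, hT1]
      · intro s hs
        rcases Finset.mem_insert.1 hs with rfl | hs
        · exact hclique
        · exact hT2 s hs
      · intro s hs r hr hne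
        have key : ∀ r ∈ T, Disjoint ({v, w, z} : Finset V) r := by
          intro r hr
          rw [Finset.disjoint_left]
          intro x hx hxr
          rcases hT5 r hr x hxr with h | h
          · exact (Finset.mem_sdiff.1 h).2 hx
          · exact Finset.disjoint_left.1 hdisj h (hsub hx)
        rcases Finset.mem_insert.1 hs with rfl | hs
        · rcases Finset.mem_insert.1 hr with rfl | hr
          · exact absurd rfl hne
          · exact key r hr
        · rcases Finset.mem_insert.1 hr with rfl | hr
          · exact (key s hs).symm
          · exact hT3 s hs r hr hne
      · intro s hs
        rcases Finset.mem_insert.1 hs with rfl | hs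
        · exact ⟨v, by simp, hv⟩
        · obtain ⟨x, hx1, hx2⟩ := hT4 s hs
          exact ⟨x, hx1, (Finset.mem_sdiff.1 hx2).1⟩
      · intro s hs x hx
        rcases Finset.mem_insert.1 hs with rfl | hs
        · exact Or.inl (hsub hx)
        · rcases hT5 s hs x hx with h | h
          · exact Or.inl (Finset.mem_sdiff.1 h).1
          · exact Or.inr h
  | succ b ihb =>
    intro a U A hU hdisj hred hblue hcard
    obtain ⟨u, hu⟩ : U.Nonempty := Finset.card_pos.1 (by omega)
    have ht : 1 ≤ t := hnon u ∅ (by simp) (by simp)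
    have huA : u ∉ A := Finset.disjoint_left.1 hdisj hu
    set Ab := A.filter (fun x => G.Adj u x ∧ ¬ R.Adj u x) with hAbdef
    have hAb : Ab.card ≤ 1 := by
      apply Finset.card_le_one.2
      intro x hx y hy
      obtain ⟨hx1, hx2, hx3⟩ : x ∈ A ∧ G.Adj u x ∧ ¬ R.Adj u x := by
        have := Finset.mem_filter.1 hx; exact ⟨this.1, this.2.1, this.2.2⟩
      obtain ⟨hy1, hy2, hy3⟩ : y ∈ A ∧ G.Adj u y ∧ ¬ R.Adj u y := by
        have := Finset.mem_filter.1 hy; exact ⟨this.1, this.2.1, this.2.2⟩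
      exact hblue u hu x hx1 y hy1 hx2 hx3 hy2 hy3
    have hAbsub : Ab ⊆ A := by rw [hAbdef]; exact Finset.filter_subset _ _
    set A1 := A \ Ab with hA1def
    have hA1card : A1.card = A.card - Ab.card := by
      rw [hA1def]; exact Finset.card_sdiff_of_subset hAbsub
    have huA1 : u ∉ A1 := fun h => huA (Finset.mem_sdiff.1 h).1
    set redN := A1.filter (fun w => G.Adj u w) with hredNdef
    have hredNcard : t + 1 ≤ redN.card := by
      have h := hcount' u A1 huA1
      rw [← hredNdef] at h
      have hAble := Finset.card_le_card hAbsub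
      omega
    have hredNred : ∀ x ∈ redN, x ∈ A ∧ R.Adj u x := by
      intro x hx
      have h1 := Finset.mem_filter.1 hx
      have hxA : x ∈ A := (Finset.mem_sdiff.1 h1.1).1
      refine ⟨hxA, ?_⟩
      by_contra hcon
      exact (Finset.mem_sdiff.1 h1.1).2 (Finset.mem_filter.2 ⟨hxA, h1.2, hcon⟩)
    obtain ⟨v, hv⟩ : redN.Nonempty := Finset.card_pos.1 (by omega)
    obtain ⟨w, hw⟩ : (redN.filter fun x => G.Adj v x).Nonempty := by
      apply Finset.card_pos.1
      have h := hcount v redN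
      omega
    have hwredN : w ∈ redN := (Finset.mem_filter.1 hw).1
    have hvw : G.Adj v w := (Finset.mem_filter.1 hw).2
    obtain ⟨hvA, ruv⟩ := hredNred v hv
    obtain ⟨hwA, ruw⟩ := hredNred w hwredN
    have rvw : R.Adj v w := hred v hvA w hwA hvw
    have hclique : R.IsNClique 3 {u, v, w} := SimpleGraph.is3Clique_triple_iff.2 ⟨ruv, ruw, rvw⟩
    have hsubvw : ({v, w} : Finset V) ⊆ A := by
      intro x hx
      simp only [Finset.mem_insert, Finset.mem_singleton] at hx
      rcases hx with rfl | rfl <;> assumption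
    have hAs : (A \ {v, w}).card = A.card - 2 := by
      rw [Finset.card_sdiff_of_subset hsubvw, Finset.card_pair hvw.ne]
    have hsubc := Finset.card_le_card hsubvw
    have hc2 : ({v, w} : Finset V).card = 2 := Finset.card_pair hvw.ne
    obtain ⟨T, hT1, hT2, hT3, hT4, hT5⟩ := ihb a (U.erase u) (A \ {v, w})
      (by rw [Finset.card_erase_of_mem hu, hU]; omega)
      ((hdisj.mono_left (Finset.erase_subset u U)).mono_right Finset.sdiff_subset)
      (fun x hx y hy => hred x (Finset.mem_sdiff.1 hx).1 y (Finset.mem_sdiff.1 hy).1)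
      (fun u' hu' x hx y hy => hblue u' (Finset.mem_of_mem_erase hu')
        x (Finset.mem_sdiff.1 hx).1 y (Finset.mem_sdiff.1 hy).1)
      (by omega)
    have hmemuvw : ∀ x ∈ ({u, v, w} : Finset V), x = u ∨ x ∈ A := by
      intro x hx
      simp only [Finset.mem_insert, Finset.mem_singleton] at hx
      rcases hx with rfl | rfl | rfl
      · exact Or.inl rfl
      · exact Or.inr hvA
      · exact Or.inr hwA
    have key : ∀ r ∈ T, Disjoint ({u, v, w} : Finset V) r := by
      intro r hr
      rw [Finset.disjoint_left]
      intro x hx hxr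
      have hxmem := hmemuvw x hx
      simp only [Finset.mem_insert, Finset.mem_singleton] at hx
      rcases hT5 r hr x hxr with h | h
      · have hx2 := (Finset.mem_sdiff.1 h).2
        rcases hx with rfl | rfl | rfl
        · exact huA (Finset.mem_sdiff.1 h).1
        · exact hx2 (by simp)
        · exact hx2 (by simp)
      · rcases hxmem with rfl | hxA
        · exact Finset.notMem_erase x U h
        · exact Finset.disjoint_left.1 hdisj (Finset.mem_of_mem_erase h) hxA
    have hnotmem : ({u, v, w} : Finset V) ∉ T := by
      intro hmem
      exact (Finset.disjoint_left.1 (key _ hmem) (by simp : u ∈ ({u, v, w} : Finset V))) (by simp)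
    refine ⟨insert {u, v, w} T, ?_, ?_, ?_, ?_, ?_⟩
    · rw [Finset.card_insert_of_notMem hnotmem, hT1]
      omega
    · intro s hs
      rcases Finset.mem_insert.1 hs with rfl | hs
      · exact hclique
      · exact hT2 s hs
    · intro s hs r hr hne
      rcases Finset.mem_insert.1 hs with rfl | hs
      · rcases Finset.mem_insert.1 hr with rfl | hr
        · exact absurd rfl hne
        · exact key r hr
      · rcases Finset.mem_insert.1 hr with rfl | hr
        · exact (key s hs).symm
        · exact hT3 s hs r hr hne
    · intro s hs
      rcases Finset.mem_insert.1 hs with rfl | hs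
      · exact ⟨v, by simp, hvA⟩
      · obtain ⟨x, hx1, hx2⟩ := hT4 s hs
        exact ⟨x, hx1, (Finset.mem_sdiff.1 hx2).1⟩
    · intro s hs x hx
      rcases Finset.mem_insert.1 hs with rfl | hs
      · rcases hmemuvw x hx with rfl | h
        · exact Or.inr hu
        · exact Or.inl h
      · rcases hT5 s hs x hx with h | h
        · exact Or.inl (Finset.mem_sdiff.1 h).1
        · exact Or.inr (Finset.mem_of_mem_erase h)


theorem main_aux (n m t : ℕ) (hm : 1 ≤ m) (hmn : m ≤ n) (ht : 1 ≤ t)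
    (G : SimpleGraph V) [DecidableRel G.Adj]
    (hcard : Fintype.card V = 3 * n + m - 1 + 2 * t)
    (hdeg : ∀ v, (Finset.univ.filter fun w => w ≠ v ∧ ¬ G.Adj v w).card < t)
    (R : SimpleGraph V) (hR : R ≤ G)
    (hB : ¬ ∃ T : Finset (Finset V), T.card = m ∧ (∀ e ∈ T, (G \ R).IsNClique 2 e) ∧
      (∀ e ∈ T, ∀ f ∈ T, e ≠ f → Disjoint e f)) :
    ConnCliqueMatching R 3 n := by
  classical
  -- maximum blue matching
  set P : Finset (Finset V) → Prop := fun M =>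
    (∀ e ∈ M, (G \ R).IsNClique 2 e) ∧ ∀ e ∈ M, ∀ f ∈ M, e ≠ f → Disjoint e f with hPdef
  have hPempty : P ∅ := ⟨fun e he => absurd he (Finset.notMem_empty e),
    fun e he => absurd he (Finset.notMem_empty e)⟩
  obtain ⟨M, hMmem, hMmax⟩ := Finset.exists_max_image
    ((Finset.univ : Finset (Finset (Finset V))).filter P) Finset.card
    ⟨∅, Finset.mem_filter.2 ⟨Finset.mem_univ _, hPempty⟩⟩
  have hMP : P M := (Finset.mem_filter.1 hMmem).2
  obtain ⟨hM1, hM2⟩ := hMP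
  -- max matching has size < m
  have hMlt : M.card < m := by
    by_contra hcon
    push_neg at hcon
    obtain ⟨T, hTsub, hTcard⟩ := Finset.exists_subset_card_eq hcon
    exact hB ⟨T, hTcard, fun e he => hM1 e (hTsub he),
      fun e he f hf => hM2 e (hTsub he) f (hTsub hf)⟩
  -- support
  set sup : Finset V := M.biUnion id with hsupdef
  have hsupcard : sup.card = 2 * M.card := by
    rw [hsupdef, Finset.card_biUnion (t := id) (fun x hx y hy hxy => hM2 x hx y hy hxy)]
    rw [Finset.sum_congr rfl (fun e he => ((hM1 e he).2 : (id e).card = 2))]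
    simp [Finset.sum_const, mul_comm]
  have hmemsup : ∀ e ∈ M, ∀ x ∈ e, x ∈ sup := by
    intro e he x hx
    exact Finset.mem_biUnion.2 ⟨e, he, hx⟩
  set S : Finset V := Finset.univ \ sup with hSdef
  have hSsup : ∀ x ∈ S, x ∉ sup := by
    intro x hx
    exact (Finset.mem_sdiff.1 hx).2
  have hScard : S.card = 3 * n + m - 1 + 2 * t - 2 * M.card := by
    rw [hSdef, Finset.card_sdiff_of_subset (Finset.subset_univ _), Finset.card_univ, hcard, hsupcard]
  -- no blue edge inside S
  have noblue : ∀ v ∈ S, ∀ w ∈ S, G.Adj v w → R.Adj v w := by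
    intro v hv w hw hadj
    by_contra hcon
    have hblueadj : (G \ R).Adj v w := (SimpleGraph.sdiff_adj G R v w).2 ⟨hadj, hcon⟩
    have hnotm : ({v, w} : Finset V) ∉ M := by
      intro h
      exact hSsup v hv (hmemsup _ h v (by simp))
    have hP' : P (insert {v, w} M) := by
      constructor
      · intro e he
        rcases Finset.mem_insert.1 he with rfl | he
        · exact pair_clique _ hblueadj
        · exact hM1 e he
      · have key : ∀ f ∈ M, Disjoint ({v, w} : Finset V) f := by
          intro f hf
          rw [Finset.disjoint_left]
          intro x hx hxf
          have hxsup := hmemsup f hf x hxf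
          simp only [Finset.mem_insert, Finset.mem_singleton] at hx
          rcases hx with rfl | rfl
          · exact hSsup x hv hxsup
          · exact hSsup x hw hxsup
        intro e he f hf hne
        rcases Finset.mem_insert.1 he with rfl | he
        · rcases Finset.mem_insert.1 hf with rfl | hf
          · exact absurd rfl hne
          · exact key f hf
        · rcases Finset.mem_insert.1 hf with rfl | hf
          · exact (key e he).symm
          · exact hM2 e he f hf hne
    have hc := hMmax _ (Finset.mem_filter.2 ⟨Finset.mem_univ _, hP'⟩)
    rw [Finset.card_insert_of_notMem hnotm] at hc
    omega
  -- designated vertices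
  have designate : ∀ e ∈ M, ∃ u, u ∈ e ∧ ∀ x ∈ S, ∀ y ∈ S,
      G.Adj u x → ¬ R.Adj u x → G.Adj u y → ¬ R.Adj u y → x = y := by
    intro e he
    by_contra hcon
    push_neg at hcon
    obtain ⟨u, v2, huv2, hepair⟩ := Finset.card_eq_two.1 (hM1 e he).2
    have hue : u ∈ e := by rw [hepair]; simp
    have hv2e : v2 ∈ e := by rw [hepair]; simp
    obtain ⟨x, hxS, x', hx'S, hux, hnRux, hux', hnRux', hxx'⟩ := hcon u hue
    obtain ⟨y, hyS, y', hy'S, hvy, hnRvy, hvy', hnRvy', hyy'⟩ := hcon v2 hv2e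
    -- pick y'' ∈ {y, y'} with y'' ≠ x
    obtain ⟨z, hzS, hvz, hnRvz, hzx⟩ : ∃ z, z ∈ S ∧ G.Adj v2 z ∧ ¬ R.Adj v2 z ∧ z ≠ x := by
      by_cases h : y = x
      · exact ⟨y', hy'S, hvy', hnRvy', fun hc => hyy' (h ▸ hc.symm ▸ rfl)⟩
      · exact ⟨y, hyS, hvy, hnRvy, h⟩
    -- build bigger matching
    have husup : u ∈ sup := hmemsup e he u hue
    have hv2sup : v2 ∈ sup := hmemsup e he v2 hv2e
    have hdisjcross : ∀ f ∈ M.erase e, ∀ a ∈ e, a ∉ f := by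
      intro f hf a ha haf
      have hfM := Finset.mem_of_mem_erase hf
      have hfe : f ≠ e := Finset.ne_of_mem_erase hf
      exact Finset.disjoint_left.1 (hM2 f hfM e he hfe) haf ha
    have hfsub : ∀ f ∈ M.erase e, ∀ a ∈ f, a ∈ sup := by
      intro f hf a ha
      exact hmemsup f (Finset.mem_of_mem_erase hf) a ha
    set e1 : Finset V := {u, x} with he1
    set e2 : Finset V := {v2, z} with he2
    have hne12 : e1 ≠ e2 := by
      intro h
      have : u ∈ e2 := h ▸ (by rw [he1]; simp)
      rw [he2] at this
      simp only [Finset.mem_insert, Finset.mem_singleton] at this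
      rcases this with rfl | rfl
      · exact huv2 rfl
      · exact hSsup u hzS husup
    have he2notmem : e2 ∉ M.erase e := by
      intro h
      exact hSsup z hzS (hfsub e2 h z (by rw [he2]; simp))
    have he1notmem : e1 ∉ insert e2 (M.erase e) := by
      intro h
      rcases Finset.mem_insert.1 h with h | h
      · exact hne12 h
      · exact hSsup x hxS (hfsub e1 h x (by rw [he1]; simp))
    have hd12 : Disjoint e1 e2 := by
      rw [he1, he2, Finset.disjoint_left]
      intro a ha hae2
      simp only [Finset.mem_insert, Finset.mem_singleton] at ha hae2
      rcases ha with rfl | rfl <;> rcases hae2 with rfl | rfl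
      · exact huv2 rfl
      · exact hSsup a hzS husup
      · exact hSsup a hxS hv2sup
      · exact hzx rfl
    have hd1f : ∀ f ∈ M.erase e, Disjoint e1 f := by
      intro f hf
      rw [he1, Finset.disjoint_left]
      intro a ha haf
      simp only [Finset.mem_insert, Finset.mem_singleton] at ha
      rcases ha with rfl | rfl
      · exact hdisjcross f hf a hue haf
      · exact hSsup a hxS (hfsub f hf a haf)
    have hd2f : ∀ f ∈ M.erase e, Disjoint e2 f := by
      intro f hf
      rw [he2, Finset.disjoint_left]
      intro a ha haf
      simp only [Finset.mem_insert, Finset.mem_singleton] at ha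
      rcases ha with rfl | rfl
      · exact hdisjcross f hf a hv2e haf
      · exact hSsup a hzS (hfsub f hf a haf)
    have hP' : P (insert e1 (insert e2 (M.erase e))) := by
      constructor
      · intro f hf
        rcases Finset.mem_insert.1 hf with rfl | hf
        · exact pair_clique _ ((SimpleGraph.sdiff_adj G R u x).2 ⟨hux, hnRux⟩)
        · rcases Finset.mem_insert.1 hf with rfl | hf
          · exact pair_clique _ ((SimpleGraph.sdiff_adj G R v2 z).2 ⟨hvz, hnRvz⟩)
          · exact hM1 f (Finset.mem_of_mem_erase hf)
      · intro f hf g hg hne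
        rcases Finset.mem_insert.1 hf with rfl | hf
        · rcases Finset.mem_insert.1 hg with rfl | hg
          · exact absurd rfl hne
          · rcases Finset.mem_insert.1 hg with rfl | hg
            · exact hd12
            · exact hd1f g hg
        · rcases Finset.mem_insert.1 hf with rfl | hf
          · rcases Finset.mem_insert.1 hg with rfl | hg
            · exact hd12.symm
            · rcases Finset.mem_insert.1 hg with rfl | hg
              · exact absurd rfl hne
              · exact hd2f g hg
          · rcases Finset.mem_insert.1 hg with rfl | hg
            · exact (hd1f f hf).symm
            · rcases Finset.mem_insert.1 hg with rfl | hg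
              · exact (hd2f f hf).symm
              · exact hM2 f (Finset.mem_of_mem_erase hf) g (Finset.mem_of_mem_erase hg) hne
    have hc := hMmax _ (Finset.mem_filter.2 ⟨Finset.mem_univ _, hP'⟩)
    rw [Finset.card_insert_of_notMem he1notmem, Finset.card_insert_of_notMem he2notmem,
      Finset.card_erase_of_mem he] at hc
    have : 1 ≤ M.card := Finset.card_pos.2 ⟨e, he⟩
    omega
  -- designated vertex function
  have hVne : Nonempty V := Fintype.card_pos_iff.1 (by omega)
  choose! fdes hfdes using designate
  -- the nonneighbor hypothesis for greedy
  have hnon : ∀ (v : V) (C : Finset V), v ∉ C → (∀ w ∈ C, ¬ G.Adj v w) → C.card < t := by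
    intro v C hvC hCnadj
    refine lt_of_le_of_lt (Finset.card_le_card ?_) (hdeg v)
    intro w hw
    exact Finset.mem_filter.2 ⟨Finset.mem_univ _, fun h => hvC (h ▸ hw), hCnadj w hw⟩
  -- choose b edges and designated vertices
  set b : ℕ := 2 * M.card + 1 - m with hbdef
  have hbk : b ≤ M.card := by omega
  obtain ⟨Mb, hMbsub, hMbcard⟩ := Finset.exists_subset_card_eq hbk
  set U : Finset V := Mb.image fdes with hUdef
  have hfdesmem : ∀ e ∈ M, fdes e ∈ e := fun e he => (hfdes e he).1
  have hUcard : U.card = b := by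
    rw [hUdef, Finset.card_image_of_injOn, hMbcard]
    intro e1 he1 e2 he2 hfe
    by_contra hne
    exact Finset.disjoint_left.1 (hM2 e1 (hMbsub he1) e2 (hMbsub he2) hne)
      (hfdesmem e1 (hMbsub he1)) (hfe ▸ hfdesmem e2 (hMbsub he2))
  have hUS : Disjoint U S := by
    rw [Finset.disjoint_left]
    intro u hu huS
    obtain ⟨e, he, rfl⟩ := Finset.mem_image.1 hu
    exact hSsup _ huS (hmemsup e (hMbsub he) _ (hfdesmem e (hMbsub he)))
  have hblueU : ∀ u ∈ U, ∀ x ∈ S, ∀ y ∈ S,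
      G.Adj u x → ¬ R.Adj u x → G.Adj u y → ¬ R.Adj u y → x = y := by
    intro u hu
    obtain ⟨e, he, rfl⟩ := Finset.mem_image.1 hu
    exact (hfdes e (hMbsub he)).2
  have harith : 3 * (n - b) + 2 * b + 2 * t ≤ S.card + 1 := by
    rw [hScard]
    omega
  obtain ⟨T, hT1, hT2, hT3, hT4, hT5⟩ := greedy R G t hnon b (n - b) U S hUcard hUS
    noblue hblueU harith
  -- reachability within S
  have reachS : ∀ x ∈ S, ∀ y ∈ S, R.Reachable x y := by
    intro x hx y hy
    by_cases hxy : x = y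
    · exact hxy ▸ SimpleGraph.Reachable.refl x
    · have hbx : (S.filter fun z => ¬ G.Adj x z).card ≤ t := by
        have h1 : ((S.filter fun z => ¬ G.Adj x z).erase x).card < t := by
          refine hnon x _ (Finset.notMem_erase x _) ?_
          intro w hw
          exact (Finset.mem_filter.1 (Finset.mem_of_mem_erase hw)).2
        have h2 := Finset.pred_card_le_card_erase
          (s := S.filter fun z => ¬ G.Adj x z) (a := x)
        omega
      have hby : (S.filter fun z => ¬ G.Adj y z).card ≤ t := by
        have h1 : ((S.filter fun z => ¬ G.Adj y z).erase y).card < t := by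
          refine hnon y _ (Finset.notMem_erase y _) ?_
          intro w hw
          exact (Finset.mem_filter.1 (Finset.mem_of_mem_erase hw)).2
        have h2 := Finset.pred_card_le_card_erase
          (s := S.filter fun z => ¬ G.Adj y z) (a := y)
        omega
      have hcover : S ⊆ (S.filter fun z => G.Adj x z ∧ G.Adj y z) ∪
          (S.filter fun z => ¬ G.Adj x z) ∪ (S.filter fun z => ¬ G.Adj y z) := by
        intro z hz
        by_cases h1 : G.Adj x z
        · by_cases h2 : G.Adj y z
          · exact Finset.mem_union_left _ (Finset.mem_union_left _
              (Finset.mem_filter.2 ⟨hz, h1, h2⟩))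
          · exact Finset.mem_union_right _ (Finset.mem_filter.2 ⟨hz, h2⟩)
        · exact Finset.mem_union_left _ (Finset.mem_union_right _
            (Finset.mem_filter.2 ⟨hz, h1⟩))
      have hZpos : 0 < (S.filter fun z => G.Adj x z ∧ G.Adj y z).card := by
        have hc1 := Finset.card_le_card hcover
        have hc2 := Finset.card_union_le ((S.filter fun z => G.Adj x z ∧ G.Adj y z) ∪
          (S.filter fun z => ¬ G.Adj x z)) (S.filter fun z => ¬ G.Adj y z)
        have hc3 := Finset.card_union_le (S.filter fun z => G.Adj x z ∧ G.Adj y z)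
          (S.filter fun z => ¬ G.Adj x z)
        have hc4 : 2 * t + 1 ≤ S.card := by rw [hScard]; omega
        omega
      obtain ⟨z, hz⟩ := Finset.card_pos.1 hZpos
      have hzS : z ∈ S := (Finset.mem_filter.1 hz).1
      have hxz : G.Adj x z := (Finset.mem_filter.1 hz).2.1
      have hyz : G.Adj y z := (Finset.mem_filter.1 hz).2.2
      have rxz : R.Adj x z := noblue x hx z hzS hxz
      have ryz : R.Adj y z := noblue y hy z hzS hyz
      exact rxz.reachable.trans ryz.symm.reachable
  -- assemble
  refine ⟨T, by omega, hT2, ?_, ?_⟩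
  · intro a ha c hc hne
    exact hT3 a (Finset.mem_coe.1 ha) c (Finset.mem_coe.1 hc) hne
  · rintro u v ⟨s, hs, hus⟩ ⟨r, hr, hvr⟩
    obtain ⟨x, hxs, hxS⟩ := hT4 s hs
    obtain ⟨y, hyr, hyS⟩ := hT4 r hr
    have hux : R.Reachable u x := by
      by_cases h : u = x
      · exact h ▸ SimpleGraph.Reachable.refl u
      · exact ((hT2 s hs).1 (Finset.mem_coe.2 hus) (Finset.mem_coe.2 hxs) h).reachable
    have hvy : R.Reachable v y := by
      by_cases h : v = y
      · exact h ▸ SimpleGraph.Reachable.refl v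
      · exact ((hT2 r hr).1 (Finset.mem_coe.2 hvr) (Finset.mem_coe.2 hyr) h).reachable
    exact hux.trans ((reachS x hxS y hyS).trans hvy.symm)

end Aux

/-- Perturbed version: `R(c(nK₃), mK₂, K_{1,t}) ≤ 3n + m - 1 + 2t`. -/
theorem stmt8 (n m t : ℕ) (hm : 1 ≤ m) (hmn : m ≤ n) (ht : t ≤ n)
    (G : SimpleGraph (Fin (3 * n + m - 1 + 2 * t))) [DecidableRel G.Adj]
    (hdeg : ∀ v, (Finset.univ.filter fun w => w ≠ v ∧ ¬ G.Adj v w).card < t)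
    (R : SimpleGraph (Fin (3 * n + m - 1 + 2 * t))) (hR : R ≤ G) :
    ConnCliqueMatching R 3 n ∨ CliqueMatching (G \ R) 2 m := by
  classical
  rcases Nat.eq_zero_or_pos t with rfl | htpos
  · exact absurd (hdeg ⟨0, by omega⟩) (by omega)
  by_cases hB : ∃ T : Finset (Finset (Fin (3 * n + m - 1 + 2 * t))), T.card = m ∧
      (∀ e ∈ T, (G \ R).IsNClique 2 e) ∧ (∀ e ∈ T, ∀ f ∈ T, e ≠ f → Disjoint e f)
  · obtain ⟨T, h1, h2, h3⟩ := hB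
    exact Or.inr ⟨T, h1, h2, fun a ha c hc hne =>
      h3 a (Finset.mem_coe.1 ha) c (Finset.mem_coe.1 hc) hne⟩
  · exact Or.inl (main_aux n m t hm hmn htpos G (by simp) hdeg R hR hB)
end

section
/- For n ≥ 2 and 1 ≤ t ≤ n, let G be a graph on 6n - 2 + 5t vertices in which every vertex has fewer than t non-neighbors. Then every 2-coloring of the edges of G contains n pairwise vertex-disjoint triangles all of the same color. -/
open Finset

/-- In a graph where every vertex has fewer than `t` non-neighbors, any vertex set of
size at least `5t + 1` contains a `k`-clique for every `k ≤ 6`. -/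
lemma ex_clique_aux {V : Type*} [Fintype V] [DecidableEq V] (G : SimpleGraph V)
    [DecidableRel G.Adj] (t : ℕ) (ht : 1 ≤ t)
    (hdeg : ∀ v, (Finset.univ.filter fun w => w ≠ v ∧ ¬ G.Adj v w).card < t) :
    ∀ k, k ≤ 6 → ∀ A : Finset V, 5 * t + 1 ≤ A.card → ∃ s ⊆ A, G.IsNClique k s := by
  intro k
  induction k with
  | zero =>
    intro _ A _
    exact ⟨∅, empty_subset _, by simp⟩
  | succ k ih =>
    intro hk6 A hA
    obtain ⟨s, hsA, hs⟩ := ih (by omega) A hA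
    -- common neighborhood of `s` inside `A`
    set C : Finset V := A.filter (fun w => w ∉ s ∧ ∀ v ∈ s, G.Adj v w) with hC
    have hbad : ∀ v : V,
        (Finset.univ.filter fun w => w = v ∨ (w ≠ v ∧ ¬ G.Adj v w)).card ≤ t := by
      intro v
      have hsub : (Finset.univ.filter fun w => w = v ∨ (w ≠ v ∧ ¬ G.Adj v w)) ⊆
          insert v (Finset.univ.filter fun w => w ≠ v ∧ ¬ G.Adj v w) := by
        intro w hw
        simp only [mem_filter, mem_univ, true_and] at hw
        rcases hw with h | h
        · simp [h]
        · simp only [mem_insert, mem_filter, mem_univ, true_and]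
          exact Or.inr h
      calc (Finset.univ.filter fun w => w = v ∨ (w ≠ v ∧ ¬ G.Adj v w)).card
          ≤ (insert v (Finset.univ.filter fun w => w ≠ v ∧ ¬ G.Adj v w)).card :=
            card_le_card hsub
        _ ≤ (Finset.univ.filter fun w => w ≠ v ∧ ¬ G.Adj v w).card + 1 := card_insert_le _ _
        _ ≤ t := by have := hdeg v; omega
    have hdiff : A \ C ⊆ s.biUnion
        (fun v => Finset.univ.filter fun w => w = v ∨ (w ≠ v ∧ ¬ G.Adj v w)) := by
      intro w hw
      rw [mem_sdiff] at hw
      obtain ⟨hwA, hwC⟩ := hw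
      rw [hC, mem_filter] at hwC
      push_neg at hwC
      rcases Classical.em (w ∈ s) with h | h
      · exact mem_biUnion.mpr ⟨w, h, by simp⟩
      · obtain ⟨v, hv, hadj⟩ := hwC hwA h
        refine mem_biUnion.mpr ⟨v, hv, ?_⟩
        simp only [mem_filter, mem_univ, true_and]
        rcases Classical.em (w = v) with h' | h'
        · exact Or.inl h'
        · exact Or.inr ⟨h', hadj⟩
    have hcount : (A \ C).card ≤ k * t := by
      calc (A \ C).card ≤ _ := card_le_card hdiff
        _ ≤ ∑ v ∈ s, (Finset.univ.filter fun w => w = v ∨ (w ≠ v ∧ ¬ G.Adj v w)).card :=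
            card_biUnion_le
        _ ≤ ∑ _v ∈ s, t := Finset.sum_le_sum fun v _ => hbad v
        _ = k * t := by rw [Finset.sum_const, hs.2, smul_eq_mul]
    have hCA : C ⊆ A := by rw [hC]; exact filter_subset _ _
    have hCcard : 1 ≤ C.card := by
      have h1 := card_sdiff_add_card_eq_card hCA
      have hk5 : k * t ≤ 5 * t := Nat.mul_le_mul_right t (by omega)
      omega
    obtain ⟨w, hwC⟩ := card_pos.mp (by omega : 0 < C.card)
    rw [hC, mem_filter] at hwC
    refine ⟨insert w s, ?_, hs.insert fun b hb => (hwC.2.2 b hb).symm⟩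
    exact insert_subset hwC.1 hsA

/-- One branch of the `R(3,3) ≤ 6` argument. -/
lemma ramsey_branch {V : Type*} [DecidableEq V] (R1 R2 : SimpleGraph V) (s : Finset V)
    (h : ∀ v ∈ s, ∀ w ∈ s, v ≠ w → R1.Adj v w ∨ R2.Adj v w)
    (v : V) (hv : v ∈ s) (B : Finset V) (hB : B ⊆ s.erase v) (hcard : 3 ≤ B.card)
    (hall : ∀ w ∈ B, R1.Adj v w) :
    ∃ u ⊆ s, R1.IsNClique 3 u ∨ R2.IsNClique 3 u := by
  have hBs : B ⊆ s := hB.trans (erase_subset _ _)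
  rcases Classical.em (∃ w1 ∈ B, ∃ w2 ∈ B, w1 ≠ w2 ∧ R1.Adj w1 w2) with hpair | hpair
  · obtain ⟨w1, h1, w2, h2, hne, hadj⟩ := hpair
    refine ⟨{v, w1, w2}, ?_, Or.inl ?_⟩
    · intro x hx
      simp only [mem_insert, mem_singleton] at hx
      rcases hx with rfl | rfl | rfl
      · exact hv
      · exact hBs h1
      · exact hBs h2
    · rw [SimpleGraph.is3Clique_triple_iff]
      exact ⟨hall w1 h1, hall w2 h2, hadj⟩
  · push_neg at hpair
    obtain ⟨u, hu, hucard⟩ := exists_subset_card_eq hcard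
    refine ⟨u, (hu.trans hBs), Or.inr ⟨?_, hucard⟩⟩
    intro a ha b hb hne
    have haB : a ∈ B := hu (by exact_mod_cast ha)
    have hbB : b ∈ B := hu (by exact_mod_cast hb)
    exact (h a (hBs haB) b (hBs hbB) hne).resolve_left (hpair a haB b hbB hne)

/-- `R(3,3) ≤ 6`: a doubly-covered set of six vertices contains a monochromatic triangle. -/
lemma ramsey33 {V : Type*} [DecidableEq V] (R1 R2 : SimpleGraph V) [DecidableRel R1.Adj]
    (s : Finset V) (hs : s.card = 6)
    (h : ∀ v ∈ s, ∀ w ∈ s, v ≠ w → R1.Adj v w ∨ R2.Adj v w) :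
    ∃ u ⊆ s, R1.IsNClique 3 u ∨ R2.IsNClique 3 u := by
  obtain ⟨v, hv⟩ : s.Nonempty := by rw [← card_pos, hs]; norm_num
  have hcard' : (s.erase v).card = 5 := by rw [card_erase_of_mem hv, hs]
  set B1 := (s.erase v).filter (fun w => R1.Adj v w) with hB1
  set B2 := (s.erase v).filter (fun w => ¬ R1.Adj v w) with hB2
  have hsum : B1.card + B2.card = 5 := by
    rw [hB1, hB2, card_filter_add_card_filter_not, hcard']
  rcases le_or_gt 3 B1.card with h1 | h1
  · exact ramsey_branch R1 R2 s h v hv B1 (filter_subset _ _) h1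
      (fun w hw => (mem_filter.mp hw).2)
  · have h2 : 3 ≤ B2.card := by omega
    have hall2 : ∀ w ∈ B2, R2.Adj v w := by
      intro w hw
      rw [hB2, mem_filter] at hw
      have hws : w ∈ s := (erase_subset _ _) hw.1
      have hne : v ≠ w := fun he => (mem_erase.mp hw.1).1 he.symm
      exact (h v hv w hws hne).resolve_left hw.2
    obtain ⟨u, hu, hor⟩ := ramsey_branch R2 R1 s
      (fun a ha b hb hne => (h a ha b hb hne).symm) v hv B2 (filter_subset _ _) h2 hall2
    exact ⟨u, hu, hor.symm⟩

/-- Greedy extraction of `m` pairwise-disjoint monochromatic triangles. -/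
lemma greedy_triangles {V : Type*} [Fintype V] [DecidableEq V]
    (G R : SimpleGraph V) [DecidableRel G.Adj] [DecidableRel R.Adj] (hR : R ≤ G)
    (t : ℕ) (ht : 1 ≤ t)
    (hdeg : ∀ v, (Finset.univ.filter fun w => w ≠ v ∧ ¬ G.Adj v w).card < t) :
    ∀ m (A : Finset V), 3 * m + 5 * t + 1 ≤ A.card →
      ∃ T : Finset (Finset V), T.card = m ∧
        (∀ s ∈ T, s ⊆ A ∧ (R.IsNClique 3 s ∨ (G \ R).IsNClique 3 s)) ∧
        (T : Set (Finset V)).Pairwise fun a b => Disjoint a b := by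
  intro m
  induction m with
  | zero =>
    intro A _
    exact ⟨∅, by simp, by simp, by simp⟩
  | succ m ih =>
    intro A hA
    obtain ⟨s6, hs6A, hs6⟩ := ex_clique_aux G t ht hdeg 6 le_rfl A (by omega)
    have hadj : ∀ v ∈ s6, ∀ w ∈ s6, v ≠ w → R.Adj v w ∨ (G \ R).Adj v w := by
      intro v hv w hw hne
      have hG : G.Adj v w := hs6.1 (mem_coe.mpr hv) (mem_coe.mpr hw) hne
      rcases Classical.em (R.Adj v w) with h | h
      · exact Or.inl h
      · exact Or.inr (by rw [SimpleGraph.sdiff_adj]; exact ⟨hG, h⟩)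
    obtain ⟨u, hus6, hu⟩ := ramsey33 R (G \ R) s6 hs6.2 hadj
    have huA : u ⊆ A := hus6.trans hs6A
    have hucard : u.card = 3 := hu.elim (fun h => h.2) (fun h => h.2)
    have hAu : 3 * m + 5 * t + 1 ≤ (A \ u).card := by
      rw [card_sdiff_of_subset huA, hucard]; omega
    obtain ⟨T, hTcard, hTprop, hTpair⟩ := ih (A \ u) hAu
    have huT : u ∉ T := by
      intro huT
      obtain ⟨x, hx⟩ := card_pos.mp (by omega : 0 < u.card)
      have := (hTprop u huT).1 hx
      exact (mem_sdiff.mp this).2 hx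
    refine ⟨insert u T, ?_, ?_, ?_⟩
    · rw [card_insert_of_notMem huT, hTcard]
    · intro s hs
      rcases mem_insert.mp hs with rfl | hs
      · exact ⟨huA, hu⟩
      · exact ⟨((hTprop s hs).1.trans (sdiff_subset)), (hTprop s hs).2⟩
    · rw [coe_insert]
      have : Std.Symm (fun a b : Finset V => Disjoint a b) := ⟨fun a b h => h.symm⟩
      refine Set.pairwise_insert_of_symm |>.mpr ⟨hTpair, ?_⟩
      intro b hb _
      have hbsub : b ⊆ A \ u := (hTprop b hb).1
      exact disjoint_left.mpr fun x hxu hxb => (mem_sdiff.mp (hbsub hxb)).2 hxu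

/-- Perturbed Burr–Erdős–Spencer: `R(nK₃, nK₃, K_{1,t}) ≤ 6n - 2 + 5t`. -/
theorem stmt9 (n t : ℕ) (hn : 2 ≤ n) (ht : 1 ≤ t) (htn : t ≤ n)
    (G : SimpleGraph (Fin (6 * n - 2 + 5 * t))) [DecidableRel G.Adj]
    (hdeg : ∀ v, (Finset.univ.filter fun w => w ≠ v ∧ ¬ G.Adj v w).card < t)
    (R : SimpleGraph (Fin (6 * n - 2 + 5 * t))) (hR : R ≤ G) :
    CliqueMatching R 3 n ∨ CliqueMatching (G \ R) 3 n := by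
  classical
  have hcardV : (Finset.univ : Finset (Fin (6 * n - 2 + 5 * t))).card = 6 * n - 2 + 5 * t := by
    simp
  have hA : 3 * (2 * n - 1) + 5 * t + 1 ≤
      (Finset.univ : Finset (Fin (6 * n - 2 + 5 * t))).card := by
    rw [hcardV]; omega
  obtain ⟨T, hTcard, hTprop, hTpair⟩ :=
    greedy_triangles G R hR t ht hdeg (2 * n - 1) Finset.univ hA
  set T1 := T.filter (fun s => R.IsNClique 3 s) with hT1
  set T2 := T.filter (fun s => ¬ R.IsNClique 3 s) with hT2
  have hsum : T1.card + T2.card = 2 * n - 1 := by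
    rw [hT1, hT2, card_filter_add_card_filter_not, hTcard]
  rcases le_or_gt n T1.card with h1 | h1
  · left
    obtain ⟨S, hS, hScard⟩ := exists_subset_card_eq h1
    have hST : S ⊆ T := hS.trans (filter_subset _ _)
    refine ⟨S, hScard, ?_, hTpair.mono (coe_subset.mpr hST)⟩
    intro s hs
    exact (mem_filter.mp (hS hs)).2
  · right
    have h2 : n ≤ T2.card := by omega
    obtain ⟨S, hS, hScard⟩ := exists_subset_card_eq h2
    have hST : S ⊆ T := hS.trans (filter_subset _ _)
    refine ⟨S, hScard, ?_, hTpair.mono (coe_subset.mpr hST)⟩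
    intro s hs
    have hnot : ¬ R.IsNClique 3 s := (mem_filter.mp (hS hs)).2
    exact ((hTprop s (hST hs)).2).resolve_left hnot
end

section
/- For n ≥ 2 and 0 ≤ t ≤ 2n/3, let G be a graph on 7n - 2 + 7t vertices in which every vertex has fewer than t non-neighbors. Then every 2-coloring (red/blue) of the edges of G contains, in one of the colors, a connected subgraph containing n pairwise vertex-disjoint triangles of that color. -/
set_option maxHeartbeats 1000000
set_option linter.unusedSectionVars false

open Finset

namespace Stmt10Aux
open scoped Classical
variable {V : Type*} [Fintype V] [DecidableEq V]

/-- The component (as a Finset) of `v` in `H`. -/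
noncomputable def compF (H : SimpleGraph V) (v : V) : Finset V :=
  univ.filter (fun x => H.Reachable v x)

lemma mem_compF {H : SimpleGraph V} {v x : V} : x ∈ compF H v ↔ H.Reachable v x := by
  simp [compF]

lemma self_mem_compF {H : SimpleGraph V} {v : V} : v ∈ compF H v := by
  simp only [compF, mem_filter, mem_univ, true_and]
  exact SimpleGraph.Reachable.refl v

lemma not_reachable_of_not_mem_compF {H : SimpleGraph V} {v x y : V}
    (hx : x ∈ compF H v) (hy : y ∉ compF H v) : ¬ H.Reachable x y := by
  intro h
  exact hy (mem_compF.2 ((mem_compF.1 hx).trans h))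

/-- A pack: family of vertex-disjoint triangles of `H` inside `W`. -/
def GoodPack (H : SimpleGraph V) (W : Finset V) (T : Finset (Finset V)) : Prop :=
  (∀ a ∈ T, H.IsNClique 3 a ∧ a ⊆ W) ∧ (T : Set (Finset V)).Pairwise (fun a b => Disjoint a b)

lemma GoodPack.empty (H : SimpleGraph V) (W : Finset V) : GoodPack H W ∅ := by
  constructor
  · intro a ha; simp at ha
  · simp

lemma GoodPack.mono {H : SimpleGraph V} {W W' : Finset V} {T : Finset (Finset V)}
    (h : GoodPack H W T) (hW : W ⊆ W') : GoodPack H W' T :=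
  ⟨fun a ha => ⟨(h.1 a ha).1, (h.1 a ha).2.trans hW⟩, h.2⟩

lemma GoodPack.card_biUnion {H : SimpleGraph V} {W : Finset V} {T : Finset (Finset V)}
    (h : GoodPack H W T) : (T.biUnion id).card = 3 * T.card := by
  rw [show (T.biUnion id) = T.biUnion (fun a => a) from rfl,
    Finset.card_biUnion (fun a ha b hb hab => h.2 (by exact_mod_cast ha) (by exact_mod_cast hb) hab),
    Finset.sum_congr rfl (fun a ha => (h.1 a ha).1.2)]
  simp [Finset.sum_const, mul_comm]

lemma GoodPack.biUnion_subset {H : SimpleGraph V} {W : Finset V} {T : Finset (Finset V)}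
    (h : GoodPack H W T) : T.biUnion id ⊆ W := by
  intro x hx
  rcases Finset.mem_biUnion.1 hx with ⟨a, ha, hxa⟩
  exact (h.1 a ha).2 hxa

lemma GoodPack.insert {H : SimpleGraph V} {W : Finset V} {T : Finset (Finset V)} {a : Finset V}
    (h : GoodPack H W T) (ha : H.IsNClique 3 a) (haW : a ⊆ W)
    (hdisj : Disjoint a (T.biUnion id)) :
    GoodPack H W (insert a T) ∧ (insert a T).card = T.card + 1 := by
  have hane : a.Nonempty := by
    rw [← Finset.card_pos, ha.2]; norm_num
  have haT : a ∉ T := by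
    intro haT
    have : a ⊆ T.biUnion id := fun x hx => Finset.mem_biUnion.2 ⟨a, haT, hx⟩
    rcases hane with ⟨x, hx⟩
    exact (Finset.disjoint_left.1 hdisj hx) (this hx)
  refine ⟨⟨?_, ?_⟩, ?_⟩
  · intro b hb
    rcases Finset.mem_insert.1 hb with rfl | hb
    · exact ⟨ha, haW⟩
    · exact h.1 b hb
  · intro b hb c hc hbc
    simp only [Finset.coe_insert, Set.mem_insert_iff] at hb hc
    rcases hb with rfl | hb <;> rcases hc with rfl | hc
    · exact absurd rfl hbc
    · refine hdisj.mono_right ?_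
      intro x hx
      exact Finset.mem_biUnion.2 ⟨c, hc, hx⟩
    · refine Disjoint.symm (hdisj.mono_right ?_)
      intro x hx
      exact Finset.mem_biUnion.2 ⟨b, hb, hx⟩
    · exact h.2 (by exact_mod_cast hb) (by exact_mod_cast hc) hbc
  · rw [Finset.card_insert_of_notMem haT]

/-- Extract 3 distinct elements from a finset of card ≥ 3. -/
lemma three_elts {S : Finset V} (h : 3 ≤ S.card) :
    ∃ a b c, a ∈ S ∧ b ∈ S ∧ c ∈ S ∧ a ≠ b ∧ a ≠ c ∧ b ≠ c := by
  obtain ⟨t, hts, ht⟩ := Finset.exists_subset_card_eq h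
  rcases Finset.card_eq_three.1 ht with ⟨a, b, c, hab, hac, hbc, rfl⟩
  exact ⟨a, b, c, hts (by simp), hts (by simp), hts (by simp), hab, hac, hbc⟩

/-- Extract 2 distinct elements. -/
lemma two_elts {S : Finset V} (h : 2 ≤ S.card) :
    ∃ a b, a ∈ S ∧ b ∈ S ∧ a ≠ b := by
  obtain ⟨t, hts, ht⟩ := Finset.exists_subset_card_eq h
  rcases Finset.card_eq_two.1 ht with ⟨a, b, hab, rfl⟩
  exact ⟨a, b, hts (by simp), hts (by simp), hab⟩


/-- bad set -/
noncomputable def badF (G : SimpleGraph V) (v : V) : Finset V :=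
  univ.filter (fun w => w ≠ v ∧ ¬ G.Adj v w)

structure Setup (G r b : SimpleGraph V) (s : ℕ) : Prop where
  hr : r ≤ G
  hb : b ≤ G
  cov : ∀ u v, G.Adj u v → r.Adj u v ∨ b.Adj u v
  deg : ∀ v : V, (badF G v).card ≤ s

lemma Setup.symm {G r b : SimpleGraph V} {s : ℕ} (st : Setup G r b s) : Setup G b r s :=
  ⟨st.hb, st.hr, fun u v h => (st.cov u v h).symm, st.deg⟩

lemma adj_of_not_bad {G : SimpleGraph V} {v w : V} (hne : w ≠ v) (h : w ∉ badF G v) :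
    G.Adj v w := by
  by_contra hadj
  exact h (by simp [badF, hne, hadj])

/-- A monochromatic triangle inside W. -/
def MonoTri (r b : SimpleGraph V) (W : Finset V) : Prop :=
  ∃ a : Finset V, a ⊆ W ∧ (r.IsNClique 3 a ∨ b.IsNClique 3 a)

lemma three_elts' {S : Finset V} (h : 3 ≤ S.card) :
    ∃ a b c : V, a ∈ S ∧ b ∈ S ∧ c ∈ S ∧ a ≠ b ∧ a ≠ c ∧ b ≠ c := by
  obtain ⟨t, hts, ht⟩ := Finset.exists_subset_card_eq h
  rcases Finset.card_eq_three.1 ht with ⟨a, b, c, hab, hac, hbc, rfl⟩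
  exact ⟨a, b, c, hts (by simp), hts (by simp), hts (by simp), hab, hac, hbc⟩

section colored
variable {G r b : SimpleGraph V} {s : ℕ}

/-- greedy clique extraction -/
lemma clique_greedy (st : Setup G r b s) :
    ∀ (j : ℕ) (W : Finset V), j * (s + 1) ≤ W.card + s →
    ∃ C : Finset V, C ⊆ W ∧ C.card = j ∧ ∀ u ∈ C, ∀ v ∈ C, u ≠ v → G.Adj u v := by
  intro j
  induction j with
  | zero => intro W _; exact ⟨∅, by simp, by simp, by simp⟩
  | succ j ih =>
    intro W hW
    have hWpos : 1 ≤ W.card := by nlinarith [hW]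
    obtain ⟨v, hv⟩ := Finset.card_pos.1 hWpos
    set W' := (W.erase v).filter (fun w => G.Adj v w) with hW'def
    have hsub2 : W.erase v ⊆ W' ∪ badF G v := by
      intro w hw
      by_cases hw' : w ∈ W'
      · exact Finset.mem_union.2 (Or.inl hw')
      · refine Finset.mem_union.2 (Or.inr ?_)
        have hne : w ≠ v := (Finset.mem_erase.1 hw).1
        have hnadj : ¬ G.Adj v w := by
          intro h; exact hw' (Finset.mem_filter.2 ⟨hw, h⟩)
        simp [badF, hne, hnadj]
    have hcard' : W.card ≤ W'.card + s + 1 := by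
      have h1 := (Finset.card_le_card hsub2).trans (Finset.card_union_le _ _)
      have h4 := st.deg v
      have h5 : (W.erase v).card = W.card - 1 := Finset.card_erase_of_mem hv
      omega
    obtain ⟨C, hCsub, hCcard, hCadj⟩ := ih W' (by nlinarith [hW, hcard'])
    have hvC : v ∉ C := fun h => (Finset.mem_erase.1 (Finset.filter_subset _ _ (hCsub h))).1 rfl
    refine ⟨insert v C, ?_, ?_, ?_⟩
    · intro x hx
      rcases Finset.mem_insert.1 hx with rfl | hx
      · exact hv
      · exact (Finset.erase_subset _ _) (Finset.filter_subset _ _ (hCsub hx))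
    · rw [Finset.card_insert_of_notMem hvC, hCcard]
    · intro x hx y hy hxy
      rcases Finset.mem_insert.1 hx with hxv | hxC
      · rcases Finset.mem_insert.1 hy with hyv | hyC
        · exact absurd (hxv.trans hyv.symm) hxy
        · rw [hxv]; exact (Finset.mem_filter.1 (hCsub hyC)).2
      · rcases Finset.mem_insert.1 hy with hyv | hyC
        · rw [hyv]; exact ((Finset.mem_filter.1 (hCsub hxC)).2).symm
        · exact hCadj x hxC y hyC hxy

/-- two-coloring auxiliary: vertex c₁-adjacent to ≥3 pairwise-G-adjacent vertices -/
lemma aux_mono {c₁ c₂ : SimpleGraph V}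
    (hcov : ∀ u v, G.Adj u v → c₁.Adj u v ∨ c₂.Adj u v)
    {v : V} {T : Finset V} (hT : 3 ≤ T.card) (hvT : v ∉ T)
    (hadj : ∀ x ∈ T, ∀ y ∈ T, x ≠ y → G.Adj x y)
    (hv : ∀ w ∈ T, c₁.Adj v w) :
    ∃ a : Finset V, a ⊆ insert v T ∧ (c₁.IsNClique 3 a ∨ c₂.IsNClique 3 a) := by
  obtain ⟨x, y, z, hx, hy, hz, hxy, hxz, hyz⟩ := three_elts' hT
  by_cases h1 : c₁.Adj x y
  · exact ⟨{v, x, y}, by intro w hw; simp at hw; rcases hw with rfl | rfl | rfl <;> simp [hx, hy],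
      Or.inl (SimpleGraph.is3Clique_triple_iff.2 ⟨hv x hx, hv y hy, h1⟩)⟩
  by_cases h2 : c₁.Adj x z
  · exact ⟨{v, x, z}, by intro w hw; simp at hw; rcases hw with rfl | rfl | rfl <;> simp [hx, hz],
      Or.inl (SimpleGraph.is3Clique_triple_iff.2 ⟨hv x hx, hv z hz, h2⟩)⟩
  by_cases h3 : c₁.Adj y z
  · exact ⟨{v, y, z}, by intro w hw; simp at hw; rcases hw with rfl | rfl | rfl <;> simp [hy, hz],
      Or.inl (SimpleGraph.is3Clique_triple_iff.2 ⟨hv y hy, hv z hz, h3⟩)⟩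
  · have e1 : c₂.Adj x y := (hcov x y (hadj x hx y hy hxy)).resolve_left h1
    have e2 : c₂.Adj x z := (hcov x z (hadj x hx z hz hxz)).resolve_left h2
    have e3 : c₂.Adj y z := (hcov y z (hadj y hy z hz hyz)).resolve_left h3
    exact ⟨{x, y, z}, by intro w hw; simp at hw; rcases hw with rfl | rfl | rfl <;> simp [hx, hy, hz],
      Or.inr (SimpleGraph.is3Clique_triple_iff.2 ⟨e1, e2, e3⟩)⟩

/-- R(3,3) ≤ 6 -/
lemma mono_of_clique6 (st : Setup G r b s) {S : Finset V} (hcard : 6 ≤ S.card)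
    (hadj : ∀ u ∈ S, ∀ v ∈ S, u ≠ v → G.Adj u v) : MonoTri r b S := by
  obtain ⟨v, hv⟩ := Finset.card_pos.1 (by omega : 0 < S.card)
  set S' := S.erase v with hS'def
  have hS'card : 5 ≤ S'.card := by
    rw [hS'def, Finset.card_erase_of_mem hv]; omega
  set F := S'.filter (fun w => r.Adj v w) with hFdef
  have hS'S : S' ⊆ S := Finset.erase_subset _ _
  have hFS : F ⊆ S' := Finset.filter_subset _ _
  have hcases : 3 ≤ F.card ∨ 3 ≤ (S' \ F).card := by
    have h1 : S' ⊆ F ∪ (S' \ F) := by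
      intro w hw
      by_cases hwF : w ∈ F
      · exact Finset.mem_union.2 (Or.inl hwF)
      · exact Finset.mem_union.2 (Or.inr (Finset.mem_sdiff.2 ⟨hw, hwF⟩))
    have h2 := (Finset.card_le_card h1).trans (Finset.card_union_le _ _)
    omega
  have hvS' : v ∉ S' := Finset.notMem_erase _ _
  rcases hcases with hF | hF'
  · have hvF : v ∉ F := fun h => hvS' (hFS h)
    obtain ⟨a, hasub, ha⟩ := aux_mono st.cov hF hvF
      (fun x hx y hy hxy => hadj x (hS'S (hFS hx)) y (hS'S (hFS hy)) hxy)
      (fun w hw => (Finset.mem_filter.1 hw).2)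
    refine ⟨a, hasub.trans ?_, ha⟩
    intro w hw
    rcases Finset.mem_insert.1 hw with rfl | hw
    · exact hv
    · exact hS'S (hFS hw)
  · set F' := S' \ F with hF'def
    have hF'S' : F' ⊆ S' := Finset.sdiff_subset
    have hvF' : v ∉ F' := fun h => hvS' (hF'S' h)
    have hbadj : ∀ w ∈ F', b.Adj v w := by
      intro w hw
      have hwS' : w ∈ S' := hF'S' hw
      have hne : w ≠ v := (Finset.mem_erase.1 hwS').1
      have hG : G.Adj v w := hadj v hv w (hS'S hwS') (Ne.symm hne)
      have hnr : ¬ r.Adj v w := by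
        intro hr
        exact (Finset.mem_sdiff.1 hw).2 (Finset.mem_filter.2 ⟨hwS', hr⟩)
      exact (st.cov v w hG).resolve_left hnr
    obtain ⟨a, hasub, ha⟩ := aux_mono (fun u v h => (st.cov u v h).symm) hF' hvF'
      (fun x hx y hy hxy => hadj x (hS'S (hF'S' hx)) y (hS'S (hF'S' hy)) hxy)
      hbadj
    refine ⟨a, hasub.trans ?_, ha.symm⟩
    intro w hw
    rcases Finset.mem_insert.1 hw with rfl | hw
    · exact hv
    · exact hS'S (hF'S' hw)

end colored

section colored
variable {G r b : SimpleGraph V} {s : ℕ}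

/-- key cardinality helper: removing v and its non-neighbours costs ≤ s+1. -/
lemma card_nbr_filter (st : Setup G r b s) {W : Finset V} {v : V} (hv : v ∈ W) :
    W.card ≤ ((W.erase v).filter (fun w => G.Adj v w)).card + s + 1 := by
  set W' := (W.erase v).filter (fun w => G.Adj v w) with hW'def
  have hsub2 : W.erase v ⊆ W' ∪ badF G v := by
    intro w hw
    by_cases hw' : w ∈ W'
    · exact Finset.mem_union.2 (Or.inl hw')
    · refine Finset.mem_union.2 (Or.inr ?_)
      have hne : w ≠ v := (Finset.mem_erase.1 hw).1
      have hnadj : ¬ G.Adj v w := by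
        intro h; exact hw' (Finset.mem_filter.2 ⟨hw, h⟩)
      simp [badF, hne, hnadj]
  have h1 := (Finset.card_le_card hsub2).trans (Finset.card_union_le _ _)
  have h4 := st.deg v
  have h5 : (W.erase v).card = W.card - 1 := Finset.card_erase_of_mem hv
  have h6 : 1 ≤ W.card := Finset.card_pos.2 ⟨v, hv⟩
  omega

/-- a generic removal bound -/
lemma card_sdiff_ge {A B : Finset V} : A.card - B.card ≤ (A \ B).card :=
  Finset.le_card_sdiff B A

lemma card_sdiff_ge2 {α : Type*} [DecidableEq α] {A B : Finset α} :
    A.card - B.card ≤ (A \ B).card :=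
  Finset.le_card_sdiff B A

end colored


section colored2
variable {G r b : SimpleGraph V} {s : ℕ}

/-- L1': any big enough set contains a mono triangle. -/
lemma mono_in_big (st : Setup G r b s) {W : Finset V} (hW : 5 * s + 6 ≤ W.card) :
    MonoTri r b W := by
  obtain ⟨C, hCW, hCcard, hCadj⟩ := clique_greedy st 6 W (by omega)
  obtain ⟨a, haC, ha⟩ := mono_of_clique6 st (by omega : 6 ≤ C.card) hCadj
  exact ⟨a, haC.trans hCW, ha⟩

/-- L2: greedy mono pack extraction -/
lemma mono_pack_greedy (st : Setup G r b s) :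
    ∀ (k : ℕ) (W : Finset V), W.card ≤ k →
    ∃ Tr Tb : Finset (Finset V), GoodPack r W Tr ∧ GoodPack b W Tb ∧
      Disjoint (Tr.biUnion id) (Tb.biUnion id) ∧ W.card ≤ 3 * (Tr.card + Tb.card) + (5 * s + 5) := by
  intro k
  induction k with
  | zero =>
    intro W hW
    exact ⟨∅, ∅, GoodPack.empty r W, GoodPack.empty b W, by simp, by omega⟩
  | succ k ih =>
    intro W hW
    by_cases hsmall : W.card ≤ 5 * s + 5
    · exact ⟨∅, ∅, GoodPack.empty r W, GoodPack.empty b W, by simp, by omega⟩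
    · push_neg at hsmall
      obtain ⟨a, haW, ha⟩ := mono_in_big st (by omega : 5 * s + 6 ≤ W.card)
      have hacard : a.card = 3 := by
        rcases ha with h | h
        · exact h.card_eq
        · exact h.card_eq
      set W' := W \ a with hW'def
      have hW'card : W'.card = W.card - 3 := by
        rw [hW'def, Finset.card_sdiff_of_subset haW, hacard]
      obtain ⟨Tr, Tb, hTr, hTb, hdisj, hcount⟩ := ih W' (by omega)
      have hW'W : W' ⊆ W := Finset.sdiff_subset
      have hdisj_a_r : Disjoint a (Tr.biUnion id) := by
        have := hTr.biUnion_subset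
        refine Finset.disjoint_left.2 (fun x hx hx2 => ?_)
        exact (Finset.mem_sdiff.1 (this hx2)).2 hx
      have hdisj_a_b : Disjoint a (Tb.biUnion id) := by
        have := hTb.biUnion_subset
        refine Finset.disjoint_left.2 (fun x hx hx2 => ?_)
        exact (Finset.mem_sdiff.1 (this hx2)).2 hx
      rcases ha with ha | ha
      · obtain ⟨hTr', hcard'⟩ := (hTr.mono hW'W).insert ha haW hdisj_a_r
        refine ⟨insert a Tr, Tb, hTr', hTb.mono hW'W, ?_, by omega⟩
        rw [Finset.biUnion_insert]
        exact Finset.disjoint_union_left.2 ⟨hdisj_a_b, hdisj⟩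
      · obtain ⟨hTb', hcard'⟩ := (hTb.mono hW'W).insert ha haW hdisj_a_b
        refine ⟨Tr, insert a Tb, hTr.mono hW'W, hTb', ?_, by omega⟩
        rw [Finset.biUnion_insert]
        exact (Finset.disjoint_union_right.2 ⟨hdisj_a_r.symm, hdisj⟩)

/-- pairwise non-red sets -/
def NonRed (r : SimpleGraph V) (W : Finset V) : Prop :=
  ∀ u ∈ W, ∀ v ∈ W, u ≠ v → ¬ r.Adj u v

lemma NonRed.mono {W W' : Finset V} (h : NonRed r W) (hsub : W' ⊆ W) : NonRed r W' :=
  fun u hu v hv huv => h u (hsub hu) v (hsub hv) huv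

/-- L3: blue pack in a pairwise non-red set -/
lemma nonred_pack (st : Setup G r b s) :
    ∀ (k : ℕ) (W : Finset V), W.card ≤ k → NonRed r W →
    ∃ T, GoodPack b W T ∧ W.card ≤ 3 * T.card + 2 * s + 2 := by
  intro k
  induction k with
  | zero => intro W hW _; exact ⟨∅, GoodPack.empty b W, by omega⟩
  | succ k ih =>
    intro W hW hnr
    by_cases hsmall : W.card ≤ 2 * s + 2
    · exact ⟨∅, GoodPack.empty b W, by omega⟩
    push_neg at hsmall
    obtain ⟨v, hv⟩ := Finset.card_pos.1 (by omega : 0 < W.card)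
    set W1 := (W.erase v).filter (fun w => G.Adj v w) with hW1def
    have hc1 : W.card ≤ W1.card + s + 1 := card_nbr_filter st hv
    obtain ⟨u, hu⟩ := Finset.card_pos.1 (by omega : 0 < W1.card)
    set W2 := (W1.erase u).filter (fun w => G.Adj u w) with hW2def
    have hc2 : W1.card ≤ W2.card + s + 1 := card_nbr_filter st hu
    obtain ⟨w, hw⟩ := Finset.card_pos.1 (by omega : 0 < W2.card)
    -- basic membership facts
    have huW1 : u ∈ W1 := hu
    have hwW2 : w ∈ W2 := hw
    have hwW1 : w ∈ W1 := (Finset.erase_subset _ _) (Finset.filter_subset _ _ hwW2)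
    have huW : u ∈ W := (Finset.erase_subset _ _) (Finset.filter_subset _ _ huW1)
    have hwW : w ∈ W := (Finset.erase_subset _ _) (Finset.filter_subset _ _ hwW1)
    have hune : u ≠ v := (Finset.mem_erase.1 (Finset.filter_subset _ _ huW1)).1
    have hwnev : w ≠ v := (Finset.mem_erase.1 (Finset.filter_subset _ _ hwW1)).1
    have hwneu : w ≠ u := (Finset.mem_erase.1 (Finset.filter_subset _ _ hwW2)).1
    have hGvu : G.Adj v u := (Finset.mem_filter.1 huW1).2
    have hGvw : G.Adj v w := (Finset.mem_filter.1 hwW1).2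
    have hGuw : G.Adj u w := (Finset.mem_filter.1 hwW2).2
    have hbvu : b.Adj v u := (st.cov v u hGvu).resolve_left (hnr v hv u huW (Ne.symm hune))
    have hbvw : b.Adj v w := (st.cov v w hGvw).resolve_left (hnr v hv w hwW (Ne.symm hwnev))
    have hbuw : b.Adj u w := (st.cov u w hGuw).resolve_left (hnr u huW w hwW (Ne.symm hwneu))
    have ha : b.IsNClique 3 {v, u, w} :=
      SimpleGraph.is3Clique_triple_iff.2 ⟨hbvu, hbvw, hbuw⟩
    have haW : ({v, u, w} : Finset V) ⊆ W := by
      intro x hx; simp at hx; rcases hx with rfl | rfl | rfl <;> assumption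
    set W' := W \ {v, u, w} with hW'def
    have hW'card : W'.card = W.card - 3 := by
      rw [hW'def, Finset.card_sdiff_of_subset haW]
      congr 1
      rw [show ({v, u, w} : Finset V).card = 3 from ha.card_eq]
    obtain ⟨T, hT, hcount⟩ := ih W' (by omega) (hnr.mono Finset.sdiff_subset)
    have hdisj_a : Disjoint ({v, u, w} : Finset V) (T.biUnion id) := by
      have := hT.biUnion_subset
      refine Finset.disjoint_left.2 (fun x hx hx2 => ?_)
      exact (Finset.mem_sdiff.1 (this hx2)).2 hx
    obtain ⟨hT', hcard'⟩ := (hT.mono Finset.sdiff_subset).insert ha haW hdisj_a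
    exact ⟨insert {v, u, w} T, hT', by omega⟩

/-- L3-reach: pairwise non-red sets are blue-connected. -/
lemma nonred_reach (st : Setup G r b s) {W : Finset V} (hW : 2 * s + 3 ≤ W.card)
    (hnr : NonRed r W) : ∀ u ∈ W, ∀ v ∈ W, b.Reachable u v := by
  intro u hu v hv
  by_cases huv : u = v
  · exact huv ▸ SimpleGraph.Reachable.refl u
  by_cases hGuv : G.Adj u v
  · exact ((st.cov u v hGuv).resolve_left (hnr u hu v hv huv)).reachable
  · set X := (((W.erase u).erase v) \ badF G u) \ badF G v with hXdef
    have hXcard : 1 ≤ X.card := by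
      rw [hXdef]
      have h1 : ((W.erase u).erase v).card = W.card - 2 := by
        rw [Finset.card_erase_of_mem (Finset.mem_erase.2 ⟨Ne.symm huv, hv⟩),
          Finset.card_erase_of_mem hu]
        omega
      have h2 := @card_sdiff_ge V _ _ ((W.erase u).erase v \ badF G u) (badF G v)
      have h3 := @card_sdiff_ge V _ _ ((W.erase u).erase v) (badF G u)
      have h4 := st.deg u
      have h5 := st.deg v
      omega
    obtain ⟨w, hwX⟩ := Finset.card_pos.1 hXcard
    have hw1 : w ∈ (W.erase u).erase v := (Finset.sdiff_subset (Finset.sdiff_subset hwX))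
    have hwW : w ∈ W := (Finset.erase_subset _ _) ((Finset.erase_subset _ _) hw1)
    have hwnu : w ≠ u := (Finset.mem_erase.1 ((Finset.erase_subset _ _) hw1)).1
    have hwnv : w ≠ v := (Finset.mem_erase.1 hw1).1
    have hbu : w ∉ badF G u := fun h => (Finset.mem_sdiff.1 (Finset.sdiff_subset hwX)).2 h
    have hbv : w ∉ badF G v := fun h => (Finset.mem_sdiff.1 hwX).2 h
    have hGuw : G.Adj u w := adj_of_not_bad hwnu hbu
    have hGvw : G.Adj v w := adj_of_not_bad hwnv hbv
    have hbuw : b.Adj u w := (st.cov u w hGuw).resolve_left (hnr u hu w hwW (Ne.symm hwnu))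
    have hbvw : b.Adj v w := (st.cov v w hGvw).resolve_left (hnr v hv w hwW (Ne.symm hwnv))
    exact hbuw.reachable.trans hbvw.reachable.symm

end colored2


section matching
variable {G r b : SimpleGraph V} {s : ℕ}

/-- A family of vertex-disjoint red edges inside W. -/
def RedPairs (r : SimpleGraph V) (W : Finset V) (M : Finset (Finset V)) : Prop :=
  (∀ p ∈ M, p ⊆ W ∧ ∃ u v : V, u ≠ v ∧ p = {u, v} ∧ r.Adj u v) ∧
  (M : Set (Finset V)).Pairwise (fun a b => Disjoint a b)

lemma RedPairs.empty (r : SimpleGraph V) (W : Finset V) : RedPairs r W ∅ :=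
  ⟨fun p hp => absurd hp (Finset.notMem_empty p), by simp⟩

lemma RedPairs.card_eq_two {W : Finset V} {M : Finset (Finset V)} (h : RedPairs r W M)
    {p : Finset V} (hp : p ∈ M) : p.card = 2 := by
  obtain ⟨u, v, huv, rfl, _⟩ := (h.1 p hp).2
  rw [Finset.card_insert_of_notMem (by simp [huv]), Finset.card_singleton]

lemma RedPairs.card_biUnion {W : Finset V} {M : Finset (Finset V)} (h : RedPairs r W M) :
    (M.biUnion id).card = 2 * M.card := by
  rw [show (M.biUnion id) = M.biUnion (fun a => a) from rfl,
    Finset.card_biUnion (fun a ha c hc hac => h.2 (by exact_mod_cast ha) (by exact_mod_cast hc) hac),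
    Finset.sum_congr rfl (fun a ha => h.card_eq_two ha)]
  simp [Finset.sum_const, mul_comm]

lemma RedPairs.biUnion_subset {W : Finset V} {M : Finset (Finset V)} (h : RedPairs r W M) :
    M.biUnion id ⊆ W := by
  intro x hx
  rcases Finset.mem_biUnion.1 hx with ⟨a, ha, hxa⟩
  exact (h.1 a ha).1 hxa

/-- existence of a maximum red matching in W -/
lemma exists_max_matching (r : SimpleGraph V) (W : Finset V) :
    ∃ M, RedPairs r W M ∧ ∀ M', RedPairs r W M' → M'.card ≤ M.card := by
  have hne : (W.powerset.powerset.filter (fun M => RedPairs r W M)).Nonempty := by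
    refine ⟨∅, Finset.mem_filter.2 ⟨?_, RedPairs.empty r W⟩⟩
    simp
  obtain ⟨M, hM, hmax⟩ := Finset.exists_max_image _ (fun M => M.card) hne
  refine ⟨M, (Finset.mem_filter.1 hM).2, ?_⟩
  intro M' hM'
  refine hmax M' (Finset.mem_filter.2 ⟨?_, hM'⟩)
  rw [Finset.mem_powerset]
  intro p hp
  rw [Finset.mem_powerset]
  exact (hM'.1 p hp).1

/-- uncovered vertices of a maximum matching are pairwise non-red -/
lemma uncovered_nonred {W : Finset V} {M : Finset (Finset V)} (hM : RedPairs r W M)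
    (hmax : ∀ M', RedPairs r W M' → M'.card ≤ M.card) :
    NonRed r (W \ M.biUnion id) := by
  intro u hu v hv huv hr
  have huB : u ∉ M.biUnion id := (Finset.mem_sdiff.1 hu).2
  have hvB : v ∉ M.biUnion id := (Finset.mem_sdiff.1 hv).2
  have hpM : ({u, v} : Finset V) ∉ M := by
    intro h
    exact huB (Finset.mem_biUnion.2 ⟨{u, v}, h, by simp⟩)
  have hM' : RedPairs r W (insert {u, v} M) := by
    constructor
    · intro p hp
      rcases Finset.mem_insert.1 hp with rfl | hp
      · refine ⟨?_, u, v, huv, rfl, hr⟩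
        intro x hx; simp at hx; rcases hx with rfl | rfl
        · exact (Finset.mem_sdiff.1 hu).1
        · exact (Finset.mem_sdiff.1 hv).1
      · exact hM.1 p hp
    · intro p hp q hq hpq
      simp only [Finset.coe_insert, Set.mem_insert_iff] at hp hq
      have key : ∀ q' ∈ M, Disjoint ({u, v} : Finset V) q' := by
        intro q' hq'
        refine Finset.disjoint_left.2 (fun x hx hx2 => ?_)
        simp at hx
        rcases hx with rfl | rfl
        · exact huB (Finset.mem_biUnion.2 ⟨q', hq', hx2⟩)
        · exact hvB (Finset.mem_biUnion.2 ⟨q', hq', hx2⟩)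
      rcases hp with rfl | hp <;> rcases hq with rfl | hq
      · exact absurd rfl hpq
      · exact key q hq
      · exact (key p hp).symm
      · exact hM.2 (by exact_mod_cast hp) (by exact_mod_cast hq) hpq
  have := hmax _ hM'
  rw [Finset.card_insert_of_notMem hpM] at this
  omega

/-- donor lemma: each pair of a maximum matching has an endpoint with ≤ 1 red
neighbour among the uncovered vertices. -/
lemma donor_exists {W : Finset V} {M : Finset (Finset V)} (hM : RedPairs r W M)
    (hmax : ∀ M', RedPairs r W M' → M'.card ≤ M.card) {p : Finset V} (hp : p ∈ M) :
    ∃ d ∈ p, (((W \ M.biUnion id)).filter (fun w => r.Adj d w)).card ≤ 1 := by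
  by_contra hcon
  push_neg at hcon
  obtain ⟨u, v, huv, hpuv, hruv⟩ := (hM.1 p hp).2
  set U := W \ M.biUnion id with hUdef
  have hu2 : 2 ≤ (U.filter (fun w => r.Adj u w)).card := hcon u (by simp [hpuv])
  have hv2 : 2 ≤ (U.filter (fun w => r.Adj v w)).card := hcon v (by simp [hpuv])
  obtain ⟨w, hw⟩ := Finset.card_pos.1 (by omega : 0 < (U.filter (fun w => r.Adj u w)).card)
  have hw'ex : 0 < ((U.filter (fun w => r.Adj v w)).erase w).card := by
    have := Finset.card_erase_of_mem (a := w) (s := U.filter (fun w => r.Adj v w))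
    by_cases hmem : w ∈ U.filter (fun w => r.Adj v w)
    · rw [this hmem]; omega
    · rw [Finset.erase_eq_of_notMem hmem]; omega
  obtain ⟨w', hw'⟩ := Finset.card_pos.1 hw'ex
  have hwU : w ∈ U := (Finset.mem_filter.1 hw).1
  have hruw : r.Adj u w := (Finset.mem_filter.1 hw).2
  have hw'w : w' ≠ w := (Finset.mem_erase.1 hw').1
  have hw'U : w' ∈ U := (Finset.mem_filter.1 (Finset.mem_erase.1 hw').2).1
  have hrvw' : r.Adj v w' := (Finset.mem_filter.1 (Finset.mem_erase.1 hw').2).2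
  have hwB : w ∉ M.biUnion id := (Finset.mem_sdiff.1 hwU).2
  have hw'B : w' ∉ M.biUnion id := (Finset.mem_sdiff.1 hw'U).2
  have huB : u ∈ M.biUnion id := Finset.mem_biUnion.2 ⟨p, hp, by simp [hpuv]⟩
  have hvB : v ∈ M.biUnion id := Finset.mem_biUnion.2 ⟨p, hp, by simp [hpuv]⟩
  have hwu : w ≠ u := fun h => (h ▸ hwB) huB
  have hwv : w ≠ v := fun h => (h ▸ hwB) hvB
  have hw'u : w' ≠ u := fun h => (h ▸ hw'B) huB
  have hw'v : w' ≠ v := fun h => (h ▸ hw'B) hvB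
  -- the two new pairs
  have hmem_unc : ∀ x, x ∈ U → ∀ q ∈ M, x ∉ q :=
    fun x hx q hq hxq => (Finset.mem_sdiff.1 hx).2 (Finset.mem_biUnion.2 ⟨q, hq, hxq⟩)
  -- uniqueness of containing pair
  have hpair_mem : ∀ q ∈ M, u ∈ q → q = p := by
    intro q hq huq
    by_contra hne
    have := hM.2 (by exact_mod_cast hq) (by exact_mod_cast hp) hne
    exact (Finset.disjoint_left.1 this huq) (by simp [hpuv])
  have hpair_mem_v : ∀ q ∈ M, v ∈ q → q = p := by
    intro q hq hvq
    by_contra hne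
    have := hM.2 (by exact_mod_cast hq) (by exact_mod_cast hp) hne
    exact (Finset.disjoint_left.1 this hvq) (by simp [hpuv])
  set M2 := insert {u, w} (insert {v, w'} (M.erase p)) with hM2def
  have hn1 : ({v, w'} : Finset V) ∉ M.erase p := by
    intro h
    exact hmem_unc w' hw'U _ (Finset.erase_subset _ _ h) (by simp)
  have hn2 : ({u, w} : Finset V) ∉ insert {v, w'} (M.erase p) := by
    intro h
    rcases Finset.mem_insert.1 h with h | h
    · have : u ∈ ({v, w'} : Finset V) := h ▸ (by simp : u ∈ ({u, w} : Finset V))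
      simp at this
      rcases this with h' | h'
      · exact huv h'
      · exact hw'u h'.symm
    · exact hmem_unc w hwU _ (Finset.erase_subset _ _ h) (by simp)
  have hM2 : RedPairs r W M2 := by
    constructor
    · intro q hq
      rcases Finset.mem_insert.1 hq with rfl | hq
      · refine ⟨?_, u, w, Ne.symm hwu, rfl, hruw⟩
        intro x hx; simp at hx; rcases hx with rfl | rfl
        · exact (hM.1 p hp).1 (by simp [hpuv])
        · exact (Finset.mem_sdiff.1 hwU).1
      rcases Finset.mem_insert.1 hq with rfl | hq
      · refine ⟨?_, v, w', Ne.symm hw'v, rfl, hrvw'⟩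
        intro x hx; simp at hx; rcases hx with rfl | rfl
        · exact (hM.1 p hp).1 (by simp [hpuv])
        · exact (Finset.mem_sdiff.1 hw'U).1
      · exact hM.1 q (Finset.erase_subset _ _ hq)
    · -- pairwise disjoint
      intro a ha c hc hac
      simp only [hM2def, Finset.coe_insert, Set.mem_insert_iff] at ha hc
      have herased : ∀ q ∈ M.erase p, Disjoint ({u, w} : Finset V) q := by
        intro q hq
        refine Finset.disjoint_left.2 (fun x hx hx2 => ?_)
        simp at hx
        rcases hx with h | h
        · exact (Finset.mem_erase.1 hq).1 (hpair_mem q (Finset.erase_subset _ _ hq) (h ▸ hx2))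
        · exact hmem_unc w hwU q (Finset.erase_subset _ _ hq) (h ▸ hx2)
      have herased' : ∀ q ∈ M.erase p, Disjoint ({v, w'} : Finset V) q := by
        intro q hq
        refine Finset.disjoint_left.2 (fun x hx hx2 => ?_)
        simp at hx
        rcases hx with h | h
        · exact (Finset.mem_erase.1 hq).1 (hpair_mem_v q (Finset.erase_subset _ _ hq) (h ▸ hx2))
        · exact hmem_unc w' hw'U q (Finset.erase_subset _ _ hq) (h ▸ hx2)
      have hdisj12 : Disjoint ({u, w} : Finset V) ({v, w'} : Finset V) := by
        refine Finset.disjoint_left.2 (fun x hx hx2 => ?_)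
        simp at hx hx2
        rcases hx with rfl | rfl <;> rcases hx2 with h | h
        · exact huv h
        · exact hw'u h.symm
        · exact hwv h
        · exact hw'w h.symm
      have hMd : (M.erase p : Set (Finset V)).Pairwise (fun a b => Disjoint a b) := by
        intro a' ha' c' hc' hne
        exact hM.2 (by exact_mod_cast Finset.erase_subset _ _ (by exact_mod_cast ha'))
          (by exact_mod_cast Finset.erase_subset _ _ (by exact_mod_cast hc')) hne
      rcases ha with rfl | ha
      · rcases hc with rfl | hc
        · exact absurd rfl hac
        rcases hc with rfl | hc
        · exact hdisj12
        · exact herased c (by exact_mod_cast hc)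
      rcases ha with rfl | ha
      · rcases hc with rfl | hc
        · exact hdisj12.symm
        rcases hc with rfl | hc
        · exact absurd rfl hac
        · exact herased' c (by exact_mod_cast hc)
      · rcases hc with rfl | hc
        · exact (herased a (by exact_mod_cast ha)).symm
        rcases hc with rfl | hc
        · exact (herased' a (by exact_mod_cast ha)).symm
        · exact hMd (by exact_mod_cast ha) (by exact_mod_cast hc) hac
  have hcard2 : M2.card = M.card + 1 := by
    rw [hM2def, Finset.card_insert_of_notMem hn2, Finset.card_insert_of_notMem hn1,
      Finset.card_erase_of_mem hp]
    have : 1 ≤ M.card := Finset.card_pos.2 ⟨p, hp⟩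
    omega
  have := hmax M2 hM2
  omega

end matching


section packs2
variable {G r b : SimpleGraph V} {s : ℕ}

lemma RedPairs.subset {W : Finset V} {M M' : Finset (Finset V)} (h : RedPairs r W M)
    (hsub : M' ⊆ M) : RedPairs r W M' :=
  ⟨fun p hp => h.1 p (hsub hp), fun a ha c hc hac =>
    h.2 (by exact_mod_cast hsub (by exact_mod_cast ha)) (by exact_mod_cast hsub (by exact_mod_cast hc)) hac⟩

/-- L6: donor pack -/
lemma donor_pack (st : Setup G r b s) :
    ∀ (j : ℕ) (U D : Finset V),
    NonRed r U → Disjoint D U →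
    (∀ d ∈ D, (U.filter (fun w => r.Adj d w)).card ≤ 1) →
    j ≤ D.card → 2 * j + 2 * s + 3 ≤ U.card →
    ∃ T, GoodPack b (U ∪ D) T ∧ U.card + j ≤ 3 * T.card + 2 * s + 2 ∧
      ∀ x ∈ T.biUnion id, ∀ u₀ ∈ U, b.Reachable x u₀ := by
  intro j
  induction j with
  | zero =>
    intro U D hnr _ _ _ hU
    obtain ⟨T, hT, hcount⟩ := nonred_pack st U.card U le_rfl hnr
    refine ⟨T, hT.mono Finset.subset_union_left, by omega, ?_⟩
    intro x hx u₀ hu₀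
    exact nonred_reach st (by omega) hnr x (hT.biUnion_subset hx) u₀ hu₀
  | succ j ih =>
    intro U D hnr hDU hdon hjD hU
    obtain ⟨d, hd⟩ := Finset.card_pos.1 (by omega : 0 < D.card)
    set avail := (U \ badF G d) \ U.filter (fun w => r.Adj d w) with havdef
    have hav : U.card ≤ avail.card + s + 1 := by
      rw [havdef]
      have h2 := @card_sdiff_ge V _ _ (U \ badF G d) (U.filter (fun w => r.Adj d w))
      have h3 := @card_sdiff_ge V _ _ U (badF G d)
      have h4 := st.deg d
      have h5 := hdon d hd
      omega
    obtain ⟨u, hu⟩ := Finset.card_pos.1 (by omega : 0 < avail.card)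
    set avail2 := (avail.erase u) \ badF G u with hav2def
    have hav2 : avail.card ≤ avail2.card + s + 1 := by
      rw [hav2def]
      have h2 := @card_sdiff_ge V _ _ (avail.erase u) (badF G u)
      have h3 := Finset.card_erase_of_mem hu
      have h4 := st.deg u
      have h5 : 1 ≤ avail.card := Finset.card_pos.2 ⟨u, hu⟩
      omega
    obtain ⟨w, hw⟩ := Finset.card_pos.1 (by omega : 0 < avail2.card)
    -- memberships
    have huU : u ∈ U := Finset.sdiff_subset (Finset.sdiff_subset hu)
    have hwavail : w ∈ avail := (Finset.erase_subset _ _) (Finset.sdiff_subset hw)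
    have hwU : w ∈ U := Finset.sdiff_subset (Finset.sdiff_subset hwavail)
    have hwu : w ≠ u := (Finset.mem_erase.1 (Finset.sdiff_subset hw)).1
    have hdU : d ∉ U := Finset.disjoint_left.1 hDU hd
    have hdu : u ≠ d := fun h => hdU (h ▸ huU)
    have hdw : w ≠ d := fun h => hdU (h ▸ hwU)
    -- adjacencies
    have hbadu : u ∉ badF G d := fun h => (Finset.mem_sdiff.1 (Finset.sdiff_subset hu)).2 h
    have hbadw : w ∉ badF G d := fun h => (Finset.mem_sdiff.1 (Finset.sdiff_subset hwavail)).2 h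
    have hbadwu : w ∉ badF G u := fun h => (Finset.mem_sdiff.1 hw).2 h
    have hGdu : G.Adj d u := adj_of_not_bad hdu hbadu
    have hGdw : G.Adj d w := adj_of_not_bad hdw hbadw
    have hGuw : G.Adj u w := adj_of_not_bad hwu hbadwu
    have hnru : ¬ r.Adj d u := fun h => (Finset.mem_sdiff.1 hu).2 (Finset.mem_filter.2 ⟨huU, h⟩)
    have hnrw : ¬ r.Adj d w := fun h =>
      (Finset.mem_sdiff.1 hwavail).2 (Finset.mem_filter.2 ⟨hwU, h⟩)
    have hbdu : b.Adj d u := (st.cov d u hGdu).resolve_left hnru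
    have hbdw : b.Adj d w := (st.cov d w hGdw).resolve_left hnrw
    have hbuw : b.Adj u w := (st.cov u w hGuw).resolve_left (hnr u huU w hwU (Ne.symm hwu))
    have ha : b.IsNClique 3 {d, u, w} := SimpleGraph.is3Clique_triple_iff.2 ⟨hbdu, hbdw, hbuw⟩
    -- recurse
    set U' := U \ {u, w} with hU'def
    set D' := D.erase d with hD'def
    have hsubUW : ({u, w} : Finset V) ⊆ U := by
      intro x hx; simp at hx; rcases hx with rfl | rfl <;> assumption
    have hU'card : U'.card = U.card - 2 := by
      rw [hU'def, Finset.card_sdiff_of_subset hsubUW]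
      congr 1
      rw [Finset.card_insert_of_notMem (by simp [hwu.symm]), Finset.card_singleton]
    obtain ⟨T', hT', hcount', hreach'⟩ := ih U' D' (hnr.mono Finset.sdiff_subset)
      (Finset.disjoint_of_subset_left (Finset.erase_subset _ _)
        (Finset.disjoint_of_subset_right Finset.sdiff_subset hDU))
      (fun d' hd' => le_trans (Finset.card_le_card (by
        intro x hx
        exact Finset.mem_filter.2 ⟨Finset.sdiff_subset (Finset.mem_filter.1 hx).1,
          (Finset.mem_filter.1 hx).2⟩)) (hdon d' (Finset.erase_subset _ _ hd')))
      (by rw [hD'def, Finset.card_erase_of_mem hd]; omega)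
      (by omega)
    -- combine
    have hasub : ({d, u, w} : Finset V) ⊆ U ∪ D := by
      intro x hx; simp at hx
      rcases hx with rfl | rfl | rfl
      · exact Finset.mem_union.2 (Or.inr hd)
      · exact Finset.mem_union.2 (Or.inl huU)
      · exact Finset.mem_union.2 (Or.inl hwU)
    have hdisj_a : Disjoint ({d, u, w} : Finset V) (T'.biUnion id) := by
      have hsub' := hT'.biUnion_subset
      refine Finset.disjoint_left.2 (fun x hx hx2 => ?_)
      have hx2' := hsub' hx2
      simp at hx
      rcases hx with rfl | rfl | rfl
      · rcases Finset.mem_union.1 hx2' with h | h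
        · exact hdU (Finset.sdiff_subset h)
        · exact (Finset.mem_erase.1 h).1 rfl
      · rcases Finset.mem_union.1 hx2' with h | h
        · exact (Finset.mem_sdiff.1 h).2 (by simp)
        · exact Finset.disjoint_left.1 hDU (Finset.erase_subset _ _ h) huU
      · rcases Finset.mem_union.1 hx2' with h | h
        · exact (Finset.mem_sdiff.1 h).2 (by simp)
        · exact Finset.disjoint_left.1 hDU (Finset.erase_subset _ _ h) hwU
    have hmono : U' ∪ D' ⊆ U ∪ D :=
      Finset.union_subset_union Finset.sdiff_subset (Finset.erase_subset _ _)
    obtain ⟨hT2, hcard2⟩ := (hT'.mono hmono).insert ha hasub hdisj_a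
    refine ⟨insert {d, u, w} T', hT2, by omega, ?_⟩
    intro x hx u₀ hu₀
    rw [Finset.biUnion_insert] at hx
    rcases Finset.mem_union.1 hx with hx | hx
    · simp at hx
      have hreachu : b.Reachable u u₀ := nonred_reach st (by omega) hnr u huU u₀ hu₀
      rcases hx with rfl | rfl | rfl
      · exact hbdu.reachable.trans hreachu
      · exact hreachu
      · exact nonred_reach st (by omega) hnr x hwU u₀ hu₀
    · have hU'ne : 0 < U'.card := by omega
      obtain ⟨u₀', hu₀'⟩ := Finset.card_pos.1 hU'ne
      exact (hreach' x hx u₀' hu₀').trans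
        (nonred_reach st (by omega) hnr u₀' (Finset.sdiff_subset hu₀') u₀ hu₀)

end packs2


section hosts
variable {G r b : SimpleGraph V} {s : ℕ}

/-- bound: pairs of a matching meeting the bad set of h are few -/
lemma badpairs_card (st : Setup G r b s) {W : Finset V} {M : Finset (Finset V)}
    (hM : RedPairs r W M) {h : V} (hh : h ∉ M.biUnion id) :
    (M.filter (fun p => ∃ x ∈ p, ¬ G.Adj h x)).card ≤ s := by
  have hsubbi : (M.filter (fun p => ∃ x ∈ p, ¬ G.Adj h x)) ⊆
      (badF G h).biUnion (fun x => M.filter (fun p => x ∈ p)) := by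
    intro p hp
    have hp' := Finset.mem_filter.1 hp
    have hpM := hp'.1
    obtain ⟨x, hxp, hx⟩ := hp'.2
    have hxh : x ≠ h := by
      intro hxe
      exact hh (Finset.mem_biUnion.2 ⟨p, hpM, hxe ▸ hxp⟩)
    refine Finset.mem_biUnion.2 ⟨x, ?_, Finset.mem_filter.2 ⟨hpM, hxp⟩⟩
    simp [badF, hxh, hx]
  have hone : ∀ x, (M.filter (fun p => x ∈ p)).card ≤ 1 := by
    intro x
    refine Finset.card_le_one.2 (fun p hp q hq => ?_)
    have hpM := (Finset.mem_filter.1 hp).1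
    have hqM := (Finset.mem_filter.1 hq).1
    by_contra hne
    exact (Finset.disjoint_left.1
      (hM.2 (by exact_mod_cast hpM) (by exact_mod_cast hqM) hne)
      (Finset.mem_filter.1 hp).2) (Finset.mem_filter.1 hq).2
  calc (M.filter (fun p => ∃ x ∈ p, ¬ G.Adj h x)).card
      ≤ ((badF G h).biUnion (fun x => M.filter (fun p => x ∈ p))).card :=
        Finset.card_le_card hsubbi
    _ ≤ ∑ x ∈ badF G h, (M.filter (fun p => x ∈ p)).card := Finset.card_biUnion_le
    _ ≤ ∑ _x ∈ badF G h, 1 := Finset.sum_le_sum (fun x _ => hone x)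
    _ = (badF G h).card := by simp
    _ ≤ s := st.deg h

/-- L7: hosts pick pairs -/
lemma hosts_pick_pairs (st : Setup G r b s) :
    ∀ (k : ℕ) (H : Finset V) (M : Finset (Finset V)) (W : Finset V),
    H.card = k →
    RedPairs r W M →
    Disjoint H (M.biUnion id) →
    (∀ h ∈ H, ∀ p ∈ M, ∀ x ∈ p, ¬ b.Reachable h x) →
    H.card + s ≤ M.card →
    ∃ T, GoodPack r (M.biUnion id ∪ H) T ∧ T.card = H.card := by
  intro k
  induction k with
  | zero =>
    intro H M W hk _ _ _ _
    exact ⟨∅, GoodPack.empty r _, by rw [Finset.card_empty, hk]⟩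
  | succ k ih =>
    intro H M W hk hM hdisj hsep hcards
    obtain ⟨h, hh⟩ := Finset.card_pos.1 (by omega : 0 < H.card)
    have hhB : h ∉ M.biUnion id := Finset.disjoint_left.1 hdisj hh
    have hbad := badpairs_card st hM hhB
    set good := M \ (M.filter (fun p => ∃ x ∈ p, ¬ G.Adj h x)) with hgdef
    have hgood : 1 ≤ good.card := by
      rw [hgdef]
      have := @card_sdiff_ge2 (Finset V) _ M (M.filter (fun p => ∃ x ∈ p, ¬ G.Adj h x))
      omega
    obtain ⟨p, hpg⟩ := Finset.card_pos.1 hgood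
    have hpM : p ∈ M := (Finset.mem_sdiff.1 hpg).1
    have hpadj : ∀ x ∈ p, G.Adj h x := by
      intro x hx
      by_contra hax
      exact (Finset.mem_sdiff.1 hpg).2 (Finset.mem_filter.2 ⟨hpM, x, hx, hax⟩)
    obtain ⟨u, v, huv, hpuv, hruv⟩ := (hM.1 p hpM).2
    have hup : u ∈ p := by simp [hpuv]
    have hvp : v ∈ p := by simp [hpuv]
    have hrhu : r.Adj h u := by
      refine (st.cov h u (hpadj u hup)).resolve_right ?_
      intro hb
      exact hsep h hh p hpM u hup hb.reachable
    have hrhv : r.Adj h v := by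
      refine (st.cov h v (hpadj v hvp)).resolve_right ?_
      intro hb
      exact hsep h hh p hpM v hvp hb.reachable
    have hhu : h ≠ u := fun he => hhB (he ▸ Finset.mem_biUnion.2 ⟨p, hpM, hup⟩)
    have hhv : h ≠ v := fun he => hhB (he ▸ Finset.mem_biUnion.2 ⟨p, hpM, hvp⟩)
    have ha : r.IsNClique 3 {h, u, v} := SimpleGraph.is3Clique_triple_iff.2 ⟨hrhu, hrhv, hruv⟩
    -- recurse
    set H' := H.erase h with hH'def
    set M' := M.erase p with hM'def
    have hM'RP : RedPairs r W M' := hM.subset (Finset.erase_subset _ _)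
    have hM'B : M'.biUnion id ⊆ M.biUnion id := by
      intro x hx
      rcases Finset.mem_biUnion.1 hx with ⟨q, hq, hxq⟩
      exact Finset.mem_biUnion.2 ⟨q, Finset.erase_subset _ _ hq, hxq⟩
    obtain ⟨T', hT', hTcard'⟩ := ih H' M' W
      (by rw [hH'def, Finset.card_erase_of_mem hh]; omega)
      hM'RP
      (Finset.disjoint_of_subset_left (Finset.erase_subset _ _)
        (Finset.disjoint_of_subset_right hM'B hdisj))
      (fun h' hh' q hq x hx => hsep h' (Finset.erase_subset _ _ hh') q
        (Finset.erase_subset _ _ hq) x hx)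
      (by
        rw [hH'def, hM'def, Finset.card_erase_of_mem hh, Finset.card_erase_of_mem hpM]
        omega)
    -- disjointness of new triangle from T'
    have hpdisj : ∀ x ∈ p, x ∉ M'.biUnion id := by
      intro x hx hx2
      rcases Finset.mem_biUnion.1 hx2 with ⟨q, hq, hxq⟩
      have hqp : q ≠ p := (Finset.mem_erase.1 hq).1
      exact (Finset.disjoint_left.1
        (hM.2 (by exact_mod_cast Finset.erase_subset _ _ hq) (by exact_mod_cast hpM) hqp)
        hxq) hx
    have hdisj_a : Disjoint ({h, u, v} : Finset V) (T'.biUnion id) := by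
      have hsub' := hT'.biUnion_subset
      refine Finset.disjoint_left.2 (fun x hx hx2 => ?_)
      have hx2' := hsub' hx2
      simp only [Finset.mem_insert, Finset.mem_singleton] at hx
      rcases hx with h1 | h1 | h1
      · rcases Finset.mem_union.1 hx2' with hc | hc
        · exact hhB (hM'B (h1 ▸ hc))
        · exact (Finset.mem_erase.1 (h1 ▸ hc)).1 rfl
      · rcases Finset.mem_union.1 hx2' with hc | hc
        · exact hpdisj u hup (h1 ▸ hc)
        · exact Finset.disjoint_left.1 hdisj (Finset.erase_subset _ _ (h1 ▸ hc))
            (Finset.mem_biUnion.2 ⟨p, hpM, hup⟩)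
      · rcases Finset.mem_union.1 hx2' with hc | hc
        · exact hpdisj v hvp (h1 ▸ hc)
        · exact Finset.disjoint_left.1 hdisj (Finset.erase_subset _ _ (h1 ▸ hc))
            (Finset.mem_biUnion.2 ⟨p, hpM, hvp⟩)
    have hmono : M'.biUnion id ∪ H' ⊆ M.biUnion id ∪ H :=
      Finset.union_subset_union hM'B (Finset.erase_subset _ _)
    have hasub : ({h, u, v} : Finset V) ⊆ M.biUnion id ∪ H := by
      intro x hx
      simp only [Finset.mem_insert, Finset.mem_singleton] at hx
      rcases hx with h1 | h1 | h1
      · exact h1 ▸ Finset.mem_union.2 (Or.inr hh)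
      · exact h1 ▸ Finset.mem_union.2 (Or.inl (Finset.mem_biUnion.2 ⟨p, hpM, hup⟩))
      · exact h1 ▸ Finset.mem_union.2 (Or.inl (Finset.mem_biUnion.2 ⟨p, hpM, hvp⟩))
    obtain ⟨hT2, hcard2⟩ := (hT'.mono hmono).insert ha hasub hdisj_a
    refine ⟨insert {h, u, v} T', hT2, ?_⟩
    rw [hcard2, hTcard', hH'def, Finset.card_erase_of_mem hh]
    omega

end hosts


section hosts2
variable {G r b : SimpleGraph V} {s : ℕ}

/-- L7': pairs pick hosts (for the case of small blue components) -/
lemma pairs_pick_hosts (st : Setup G r b s) {m1 c : ℕ}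
    (hcomp : ∀ v : V, (compF b v).card ≤ m1)
    (harith : 2 * m1 + 2 * s + c ≤ Fintype.card V) :
    ∀ (k : ℕ) (M : Finset (Finset V)) (X : Finset V),
    RedPairs r univ M → 2 * k ≤ M.card + 1 → Disjoint (M.biUnion id) X →
    X.card + 3 * k ≤ c →
    ∃ T, GoodPack r univ T ∧ T.card = k ∧ Disjoint (T.biUnion id) X := by
  intro k
  induction k with
  | zero =>
    intro M X _ _ _ _
    exact ⟨∅, GoodPack.empty r _, by simp, by simp⟩
  | succ k ih =>
    intro M X hM hMcard hMX hXc
    obtain ⟨p, hpM⟩ := Finset.card_pos.1 (by omega : 0 < M.card)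
    obtain ⟨u, v, huv, hpuv, hruv⟩ := (hM.1 p hpM).2
    have hup : u ∈ p := by simp [hpuv]
    have hvp : v ∈ p := by simp [hpuv]
    set pool := ((((univ \ compF b u) \ compF b v) \ X) \ badF G u) \ badF G v with hpooldef
    have hpool : 1 ≤ pool.card := by
      rw [hpooldef]
      have h1 := @card_sdiff_ge V _ _ ((((univ \ compF b u) \ compF b v) \ X) \ badF G u) (badF G v)
      have h2 := @card_sdiff_ge V _ _ (((univ \ compF b u) \ compF b v) \ X) (badF G u)
      have h3 := @card_sdiff_ge V _ _ ((univ \ compF b u) \ compF b v) X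
      have h4 := @card_sdiff_ge V _ _ (univ \ compF b u) (compF b v)
      have h5 := @card_sdiff_ge V _ _ (univ : Finset V) (compF b u)
      have h6 := hcomp u
      have h7 := hcomp v
      have h8 := st.deg u
      have h9 := st.deg v
      have h10 : (univ : Finset V).card = Fintype.card V := Finset.card_univ
      omega
    obtain ⟨h, hhpool⟩ := Finset.card_pos.1 hpool
    have hhc1 : h ∉ compF b u := by
      intro hc
      exact (Finset.mem_sdiff.1 (Finset.sdiff_subset (Finset.sdiff_subset
        (Finset.sdiff_subset (Finset.sdiff_subset hhpool))))).2 hc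
    have hhc2 : h ∉ compF b v := by
      intro hc
      exact (Finset.mem_sdiff.1 (Finset.sdiff_subset (Finset.sdiff_subset
        (Finset.sdiff_subset hhpool)))).2 hc
    have hhX : h ∉ X := by
      intro hc
      exact (Finset.mem_sdiff.1 (Finset.sdiff_subset (Finset.sdiff_subset hhpool))).2 hc
    have hhbu : h ∉ badF G u := by
      intro hc
      exact (Finset.mem_sdiff.1 (Finset.sdiff_subset hhpool)).2 hc
    have hhbv : h ∉ badF G v := by
      intro hc
      exact (Finset.mem_sdiff.1 hhpool).2 hc
    have hhu : h ≠ u := fun he => hhc1 (he ▸ self_mem_compF)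
    have hhv : h ≠ v := fun he => hhc2 (he ▸ self_mem_compF)
    have hGuh : G.Adj u h := adj_of_not_bad hhu hhbu
    have hGvh : G.Adj v h := adj_of_not_bad hhv hhbv
    have hruh : r.Adj u h := by
      refine (st.cov u h hGuh).resolve_right (fun hb => ?_)
      exact hhc1 (mem_compF.2 hb.reachable)
    have hrvh : r.Adj v h := by
      refine (st.cov v h hGvh).resolve_right (fun hb => ?_)
      exact hhc2 (mem_compF.2 hb.reachable)
    have ha : r.IsNClique 3 {u, v, h} := SimpleGraph.is3Clique_triple_iff.2 ⟨hruv, hruh, hrvh⟩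
    -- recurse
    set M'' := (M.erase p).filter (fun q => h ∉ q) with hM''def
    have hM''RP : RedPairs r univ M'' :=
      hM.subset (fun q hq => Finset.erase_subset _ _ (Finset.filter_subset _ _ hq))
    have hM''card : M.card ≤ M''.card + 2 := by
      have hone : ((M.erase p).filter (fun q => h ∈ q)).card ≤ 1 := by
        refine Finset.card_le_one.2 (fun q1 hq1 q2 hq2 => ?_)
        by_contra hne
        exact (Finset.disjoint_left.1
          (hM.2 (by exact_mod_cast Finset.erase_subset _ _ (Finset.mem_filter.1 hq1).1)
            (by exact_mod_cast Finset.erase_subset _ _ (Finset.mem_filter.1 hq2).1) hne)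
          (Finset.mem_filter.1 hq1).2) (Finset.mem_filter.1 hq2).2
      have hsplit : (M.erase p).card ≤ M''.card + ((M.erase p).filter (fun q => h ∈ q)).card := by
        rw [hM''def]
        have hsub : M.erase p ⊆ ((M.erase p).filter (fun q => h ∉ q)) ∪
            ((M.erase p).filter (fun q => h ∈ q)) := by
          intro q hq
          by_cases hhq : h ∈ q
          · exact Finset.mem_union.2 (Or.inr (Finset.mem_filter.2 ⟨hq, hhq⟩))
          · exact Finset.mem_union.2 (Or.inl (Finset.mem_filter.2 ⟨hq, hhq⟩))
        exact (Finset.card_le_card hsub).trans (Finset.card_union_le _ _)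
      have herase : (M.erase p).card = M.card - 1 := Finset.card_erase_of_mem hpM
      have hMpos : 1 ≤ M.card := Finset.card_pos.2 ⟨p, hpM⟩
      omega
    set X' := insert h (X ∪ p) with hX'def
    have hX'card : X'.card ≤ X.card + 3 := by
      rw [hX'def]
      have h1 := Finset.card_insert_le h (X ∪ p)
      have h2 := Finset.card_union_le X p
      have h3 : p.card = 2 := hM.card_eq_two hpM
      omega
    have hdisj'' : Disjoint (M''.biUnion id) X' := by
      refine Finset.disjoint_left.2 (fun x hx hx2 => ?_)
      rcases Finset.mem_biUnion.1 hx with ⟨q, hq, hxq⟩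
      have hqM : q ∈ M := Finset.erase_subset _ _ (Finset.filter_subset _ _ hq)
      have hqp : q ≠ p := (Finset.mem_erase.1 (Finset.filter_subset _ _ hq)).1
      rw [hX'def] at hx2
      rcases Finset.mem_insert.1 hx2 with hxe | hx2
      · exact (Finset.mem_filter.1 hq).2 (hxe ▸ hxq)
      rcases Finset.mem_union.1 hx2 with hx2 | hx2
      · exact Finset.disjoint_left.1 hMX (Finset.mem_biUnion.2 ⟨q, hqM, hxq⟩) hx2
      · exact (Finset.disjoint_left.1
          (hM.2 (by exact_mod_cast hqM) (by exact_mod_cast hpM) hqp) hxq) hx2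
    obtain ⟨T', hT', hT'card, hT'X⟩ := ih M'' X' hM''RP (by omega)
      hdisj'' (by omega)
    have hsubX' : ({u, v, h} : Finset V) ⊆ X' := by
      intro x hx
      rw [hX'def]
      rcases Finset.mem_insert.1 hx with h1 | hx
      · exact Finset.mem_insert.2 (Or.inr (Finset.mem_union.2 (Or.inr (by rw [h1]; exact hup))))
      rcases Finset.mem_insert.1 hx with h1 | hx
      · exact Finset.mem_insert.2 (Or.inr (Finset.mem_union.2 (Or.inr (by rw [h1]; exact hvp))))
      · rw [Finset.mem_singleton.1 hx]
        exact Finset.mem_insert_self _ _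
    have hdisj_a : Disjoint ({u, v, h} : Finset V) (T'.biUnion id) :=
      Finset.disjoint_left.2 (fun x hx hx2 => Finset.disjoint_left.1 hT'X hx2 (hsubX' hx))
    have hasub : ({u, v, h} : Finset V) ⊆ univ := Finset.subset_univ _
    obtain ⟨hT2, hcard2⟩ := hT'.insert ha hasub hdisj_a
    have hXsubX' : X ⊆ X' := by
      intro x hx
      rw [hX'def]
      exact Finset.mem_insert.2 (Or.inr (Finset.mem_union.2 (Or.inl hx)))
    refine ⟨insert {u, v, h} T', hT2, by omega, ?_⟩
    rw [Finset.biUnion_insert]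
    refine Finset.disjoint_union_left.2 ⟨?_, Finset.disjoint_of_subset_right hXsubX' hT'X⟩
    refine Finset.disjoint_left.2 (fun x hx hx2 => ?_)
    rcases Finset.mem_insert.1 hx with h1 | hx
    · rw [h1] at hx2
      exact Finset.disjoint_left.1 hMX (Finset.mem_biUnion.2 ⟨p, hpM, hup⟩) hx2
    rcases Finset.mem_insert.1 hx with h1 | hx
    · rw [h1] at hx2
      exact Finset.disjoint_left.1 hMX (Finset.mem_biUnion.2 ⟨p, hpM, hvp⟩) hx2
    · rw [Finset.mem_singleton.1 hx] at hx2
      exact hhX hx2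

end hosts2


section win
variable {G r b : SimpleGraph V} {s : ℕ}

/-- build a ConnCliqueMatching from a pack with a hub -/
lemma win_of_pack {H : SimpleGraph V} {n : ℕ} {T : Finset (Finset V)}
    (hT : GoodPack H univ T) (hcard : n ≤ T.card)
    (hreach : ∃ c, ∀ x ∈ T.biUnion id, H.Reachable x c) :
    ConnCliqueMatching H 3 n := by
  obtain ⟨T', hT'sub, hT'card⟩ := Finset.exists_subset_card_eq hcard
  obtain ⟨c, hc⟩ := hreach
  refine ⟨T', hT'card, fun t ht => (hT.1 t (hT'sub ht)).1, ?_, ?_⟩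
  · intro a ha d hd had
    exact hT.2 (by exact_mod_cast hT'sub (by exact_mod_cast ha))
      (by exact_mod_cast hT'sub (by exact_mod_cast hd)) had
  · rintro u v ⟨t, ht, hut⟩ ⟨t', ht', hvt'⟩
    have hu := hc u (Finset.mem_biUnion.2 ⟨t, hT'sub ht, hut⟩)
    have hv := hc v (Finset.mem_biUnion.2 ⟨t', hT'sub ht', hvt'⟩)
    exact hu.trans hv.symm

/-- a red pack whose triangles each meet the component of z₀ has z₀ as a hub. -/
lemma red_pack_hub {H : SimpleGraph V} {T : Finset (Finset V)}
    (hT : GoodPack H univ T) {z₀ : V} (hmeet : ∀ t ∈ T, ∃ y ∈ t, y ∈ compF H z₀) :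
    ∀ x ∈ T.biUnion id, H.Reachable x z₀ := by
  intro x hx
  rcases Finset.mem_biUnion.1 hx with ⟨t, ht, hxt⟩
  obtain ⟨y, hyt, hyZ⟩ := hmeet t ht
  have hyz : H.Reachable z₀ y := mem_compF.1 hyZ
  by_cases hxy : x = y
  · exact hxy ▸ hyz.symm
  · have hadj : H.Adj x y := (hT.1 t ht).1.1 (by exact_mod_cast hxt) (by exact_mod_cast hyt) hxy
    exact hadj.reachable.trans hyz.symm

/-- CLAIM A: some colour has a giant component. -/
lemma exists_giant (st : Setup G r b s) (hbig : 6 * s + 3 ≤ Fintype.card V) :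
    (∃ z : V, Fintype.card V - 2 * s ≤ (compF r z).card) ∨
    (∃ z : V, Fintype.card V - 2 * s ≤ (compF b z).card) := by
  have hNpos : 0 < Fintype.card V := by omega
  have hVne : Nonempty V := Fintype.card_pos_iff.1 hNpos
  by_cases hbigred : ∃ v : V, 2 * s + 1 ≤ (compF r v).card
  · obtain ⟨v, hv⟩ := hbigred
    by_cases hgiant : Fintype.card V - 2 * s ≤ (compF r v).card
    · exact Or.inl ⟨v, hgiant⟩
    · push_neg at hgiant
      set D := compF r v with hDdef
      set E := univ \ D with hEdef
      have hEcard : 2 * s + 1 ≤ E.card := by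
        rw [hEdef, Finset.card_sdiff_of_subset (Finset.subset_univ _), Finset.card_univ]
        omega
      -- cross edges are blue
      have K1 : ∀ x ∈ D, ∀ y ∈ E, G.Adj x y → b.Adj x y := by
        intro x hx y hy hadj
        refine (st.cov x y hadj).resolve_left (fun hr => ?_)
        exact (Finset.mem_sdiff.1 hy).2 (mem_compF.2 ((mem_compF.1 hx).trans hr.reachable))
      obtain ⟨e₀, he₀⟩ := Finset.card_pos.1 (by omega : 0 < E.card)
      -- all E vertices reach e₀ in blue
      have hEreach : ∀ y ∈ E, b.Reachable y e₀ := by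
        intro y hy
        by_cases hye : y = e₀
        · exact hye ▸ SimpleGraph.Reachable.refl _
        · have : 0 < ((D \ badF G y) \ badF G e₀).card := by
            have h1 := @card_sdiff_ge V _ _ (D \ badF G y) (badF G e₀)
            have h2 := @card_sdiff_ge V _ _ D (badF G y)
            have h3 := st.deg y
            have h4 := st.deg e₀
            omega
          obtain ⟨x, hx⟩ := Finset.card_pos.1 this
          have hxD : x ∈ D := Finset.sdiff_subset (Finset.sdiff_subset hx)
          have hxy : x ≠ y := fun h => (Finset.mem_sdiff.1 hy).2 (h ▸ hxD)
          have hxe : x ≠ e₀ := fun h => (Finset.mem_sdiff.1 he₀).2 (h ▸ hxD)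
          have hG1 : G.Adj y x := adj_of_not_bad (Ne.symm hxy).symm
            (fun h => (Finset.mem_sdiff.1 (Finset.sdiff_subset hx)).2 h)
          have hG2 : G.Adj e₀ x := adj_of_not_bad (Ne.symm hxe).symm
            (fun h => (Finset.mem_sdiff.1 hx).2 h)
          have hb1 : b.Adj x y := K1 x hxD y hy hG1.symm
          have hb2 : b.Adj x e₀ := K1 x hxD e₀ he₀ hG2.symm
          exact hb1.symm.reachable.trans hb2.reachable
      have hall : ∀ w : V, b.Reachable e₀ w := by
        intro w
        by_cases hwE : w ∈ E
        · exact (hEreach w hwE).symm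
        · have hwD : w ∈ D := by
            by_contra hwD
            exact hwE (Finset.mem_sdiff.2 ⟨Finset.mem_univ _, hwD⟩)
          have : 0 < (E \ badF G w).card := by
            have h2 := @card_sdiff_ge V _ _ E (badF G w)
            have h3 := st.deg w
            omega
          obtain ⟨y, hy⟩ := Finset.card_pos.1 this
          have hyE : y ∈ E := Finset.sdiff_subset hy
          have hyw : y ≠ w := fun h => (Finset.mem_sdiff.1 hyE).2 (h ▸ hwD)
          have hG : G.Adj w y := adj_of_not_bad hyw (fun h => (Finset.mem_sdiff.1 hy).2 h)
          have hb : b.Adj w y := K1 w hwD y hyE hG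
          exact ((hb.reachable.trans (hEreach y hyE)).symm : b.Reachable e₀ w)
      refine Or.inr ⟨e₀, ?_⟩
      have : compF b e₀ = univ := Finset.eq_univ_of_forall (fun w => mem_compF.2 (hall w))
      rw [this, Finset.card_univ]
      omega
  · push_neg at hbigred
    obtain ⟨u₀⟩ := hVne
    have hall : ∀ w : V, b.Reachable u₀ w := by
      intro w
      by_cases hww : u₀ = w
      · exact hww ▸ SimpleGraph.Reachable.refl _
      have : 0 < ((((univ \ compF r u₀) \ compF r w) \ badF G u₀) \ badF G w).card := by
        have h1 := @card_sdiff_ge V _ _ (((univ \ compF r u₀) \ compF r w) \ badF G u₀) (badF G w)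
        have h2 := @card_sdiff_ge V _ _ ((univ \ compF r u₀) \ compF r w) (badF G u₀)
        have h3 := @card_sdiff_ge V _ _ (univ \ compF r u₀) (compF r w)
        have h4 := @card_sdiff_ge V _ _ (univ : Finset V) (compF r u₀)
        have h5 := st.deg u₀
        have h6 := st.deg w
        have h7 := hbigred u₀
        have h8 := hbigred w
        have h9 : (univ : Finset V).card = Fintype.card V := Finset.card_univ
        omega
      obtain ⟨x, hx⟩ := Finset.card_pos.1 this
      have hxc1 : x ∉ compF r u₀ := fun h =>
        (Finset.mem_sdiff.1 (Finset.sdiff_subset (Finset.sdiff_subset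
          (Finset.sdiff_subset hx)))).2 h
      have hxc2 : x ∉ compF r w := fun h =>
        (Finset.mem_sdiff.1 (Finset.sdiff_subset (Finset.sdiff_subset hx))).2 h
      have hxb1 : x ∉ badF G u₀ := fun h => (Finset.mem_sdiff.1 (Finset.sdiff_subset hx)).2 h
      have hxb2 : x ∉ badF G w := fun h => (Finset.mem_sdiff.1 hx).2 h
      have hxu : x ≠ u₀ := fun h => hxc1 (h ▸ self_mem_compF)
      have hxw : x ≠ w := fun h => hxc2 (h ▸ self_mem_compF)
      have hG1 : G.Adj u₀ x := adj_of_not_bad hxu hxb1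
      have hG2 : G.Adj w x := adj_of_not_bad hxw hxb2
      have hb1 : b.Adj u₀ x := (st.cov u₀ x hG1).resolve_left
        (fun hr => hxc1 (mem_compF.2 hr.reachable))
      have hb2 : b.Adj w x := (st.cov w x hG2).resolve_left
        (fun hr => hxc2 (mem_compF.2 hr.reachable))
      exact hb1.reachable.trans hb2.reachable.symm
    refine Or.inr ⟨u₀, ?_⟩
    have : compF b u₀ = univ := Finset.eq_univ_of_forall (fun w => mem_compF.2 (hall w))
    rw [this, Finset.card_univ]
    omega

end win


section sidebound
variable {G r b : SimpleGraph V} {s n : ℕ}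

/-- F'' : raw facts about a maximum red matching on any vertex set. -/
lemma side_bound (st : Setup G r b s)
    (HB : ∀ T : Finset (Finset V), GoodPack b univ T →
      (∃ c, ∀ x ∈ T.biUnion id, b.Reachable x c) → T.card ≤ n - 1)
    (hn : 2 ≤ n) (W : Finset V) :
    ∃ M : Finset (Finset V), RedPairs r W M ∧
      W.card = 2 * M.card + (W \ M.biUnion id).card ∧
      ((W \ M.biUnion id).card ≤ 2 * s + 2 ∨
        (2 * s + 3 ≤ (W \ M.biUnion id).card ∧
          ((W \ M.biUnion id).card + M.card ≤ 3 * n + 2 * s - 1 ∨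
           (((W \ M.biUnion id).card - (2 * s + 3)) / 2 ≤ M.card ∧
            (W \ M.biUnion id).card + ((W \ M.biUnion id).card - (2 * s + 3)) / 2
              ≤ 3 * n + 2 * s - 1)))) := by
  obtain ⟨M, hM, hmax⟩ := exists_max_matching r W
  set U := W \ M.biUnion id with hUdef
  have hUsub : M.biUnion id ⊆ W := hM.biUnion_subset
  have hWcard : W.card = 2 * M.card + U.card := by
    have h1 : U.card = W.card - (M.biUnion id).card := Finset.card_sdiff_of_subset hUsub
    have h2 := hM.card_biUnion
    have h3 := Finset.card_le_card hUsub
    omega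
  suffices hfinal : U.card ≤ 2 * s + 2 ∨
      (2 * s + 3 ≤ U.card ∧
        (U.card + M.card ≤ 3 * n + 2 * s - 1 ∨
         ((U.card - (2 * s + 3)) / 2 ≤ M.card ∧
          U.card + (U.card - (2 * s + 3)) / 2 ≤ 3 * n + 2 * s - 1))) by
    exact ⟨M, hM, hWcard, hfinal⟩
  by_cases hsmall : U.card ≤ 2 * s + 2
  · exact Or.inl hsmall
  push_neg at hsmall
  refine Or.inr ⟨by omega, ?_⟩
  have hUnr : NonRed r U := uncovered_nonred hM hmax
  -- donor set
  set D := M.attach.image (fun q => (donor_exists hM hmax q.2).choose) with hDdef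
  have hfmem : ∀ (q : {x // x ∈ M}), (donor_exists hM hmax q.2).choose ∈ q.1 :=
    fun q => (donor_exists hM hmax q.2).choose_spec.1
  have hfdon : ∀ (q : {x // x ∈ M}),
      (U.filter (fun w => r.Adj (donor_exists hM hmax q.2).choose w)).card ≤ 1 :=
    fun q => (donor_exists hM hmax q.2).choose_spec.2
  have hDcard : D.card = M.card := by
    rw [hDdef, Finset.card_image_of_injOn, Finset.card_attach]
    intro q1 h1 q2 h2 heq
    by_contra hne
    have hne' : q1.1 ≠ q2.1 := fun h => hne (Subtype.ext h)
    have hdisj := hM.2 (by exact_mod_cast q1.2) (by exact_mod_cast q2.2) hne'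
    have h2' := hfmem q2
    rw [show (donor_exists hM hmax q2.2).choose = (donor_exists hM hmax q1.2).choose from heq.symm] at h2'
    exact (Finset.disjoint_left.1 hdisj (hfmem q1)) h2'
  have hDU : Disjoint D U := by
    refine Finset.disjoint_left.2 (fun d hd hdU => ?_)
    rw [hDdef] at hd
    rcases Finset.mem_image.1 hd with ⟨q, _, rfl⟩
    exact (Finset.mem_sdiff.1 hdU).2
      (Finset.mem_biUnion.2 ⟨q.1, q.2, hfmem q⟩)
  have hdon : ∀ d ∈ D, (U.filter (fun w => r.Adj d w)).card ≤ 1 := by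
    intro d hd
    rw [hDdef] at hd
    rcases Finset.mem_image.1 hd with ⟨q, _, rfl⟩
    exact hfdon q
  set j := min M.card ((U.card - (2 * s + 3)) / 2) with hjdef
  obtain ⟨T, hT, hcount, hreach⟩ := donor_pack st j U D hUnr hDU hdon
    (by rw [hjdef]; omega)
    (by
      have : j ≤ (U.card - (2 * s + 3)) / 2 := by rw [hjdef]; exact min_le_right _ _
      omega)
  obtain ⟨u₀, hu₀⟩ := Finset.card_pos.1 (by omega : 0 < U.card)
  have hTbound : T.card ≤ n - 1 :=
    HB T (hT.mono (Finset.subset_univ _)) ⟨u₀, fun x hx => hreach x hx u₀ hu₀⟩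
  have hkey : U.card + j ≤ 3 * n + 2 * s - 1 := by omega
  rcases le_total M.card ((U.card - (2 * s + 3)) / 2) with hle | hle
  · left
    have hj : j = M.card := by rw [hjdef]; exact min_eq_left hle
    omega
  · right
    refine ⟨hle, ?_⟩
    have hj : j = (U.card - (2 * s + 3)) / 2 := by rw [hjdef]; exact min_eq_right hle
    omega

end sidebound


section mainlem
variable {G r b : SimpleGraph V} {s n : ℕ}

lemma GoodPack.union {H : SimpleGraph V} {W1 W2 : Finset V} {T1 T2 : Finset (Finset V)}
    (h1 : GoodPack H W1 T1) (h2 : GoodPack H W2 T2) (hdisj : Disjoint W1 W2) :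
    GoodPack H (W1 ∪ W2) (T1 ∪ T2) ∧ (T1 ∪ T2).card = T1.card + T2.card := by
  have hTT : Disjoint T1 T2 := by
    refine Finset.disjoint_left.2 (fun t ht1 ht2 => ?_)
    have hsub1 := (h1.1 t ht1).2
    have hsub2 := (h2.1 t ht2).2
    have hne : t.Nonempty := by
      rw [← Finset.card_pos, (h1.1 t ht1).1.2]; norm_num
    obtain ⟨x, hx⟩ := hne
    exact Finset.disjoint_left.1 hdisj (hsub1 hx) (hsub2 hx)
  constructor
  · constructor
    · intro a ha
      rcases Finset.mem_union.1 ha with ha | ha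
      · exact ⟨(h1.1 a ha).1, (h1.1 a ha).2.trans Finset.subset_union_left⟩
      · exact ⟨(h2.1 a ha).1, (h2.1 a ha).2.trans Finset.subset_union_right⟩
    · intro a ha c hc hac
      simp only [Finset.coe_union, Set.mem_union] at ha hc
      have key : ∀ t1 ∈ T1, ∀ t2 ∈ T2, Disjoint t1 t2 := by
        intro t1 ht1 t2 ht2
        exact Finset.disjoint_of_subset_left (h1.1 t1 ht1).2
          (Finset.disjoint_of_subset_right (h2.1 t2 ht2).2 hdisj)
      rcases ha with ha | ha <;> rcases hc with hc | hc
      · exact h1.2 (by exact_mod_cast ha) (by exact_mod_cast hc) hac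
      · exact key a (by exact_mod_cast ha) c (by exact_mod_cast hc)
      · exact (key c (by exact_mod_cast hc) a (by exact_mod_cast ha)).symm
      · exact h2.2 (by exact_mod_cast ha) (by exact_mod_cast hc) hac
  · exact Finset.card_union_of_disjoint hTT


lemma red_pack_from_hosts (st : Setup G r b s) {k : ℕ} {A : Finset V}
    (M : Finset (Finset V)) (hM : RedPairs r A M)
    (H : Finset V) (hHA : Disjoint H A)
    (hsep : ∀ h_ ∈ H, ∀ x ∈ A, ¬ b.Reachable h_ x)
    (hHcard : H.card = k) (hMcard : k + s ≤ M.card) :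
    ∃ T, GoodPack r univ T ∧ T.card = k ∧ T.biUnion id ⊆ M.biUnion id ∪ H := by
  have hdisj : Disjoint H (M.biUnion id) :=
    Finset.disjoint_of_subset_right hM.biUnion_subset hHA
  have hsep' : ∀ h ∈ H, ∀ p ∈ M, ∀ x ∈ p, ¬ b.Reachable h x :=
    fun h hh p hp x hx => hsep h hh x ((hM.1 p hp).1 hx)
  obtain ⟨T, hT, hTcard⟩ := hosts_pick_pairs st k H M A hHcard hM hdisj hsep' (by omega)
  refine ⟨T, hT.mono (Finset.subset_univ _), ?_, hT.biUnion_subset⟩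
  rw [hTcard, hHcard]

lemma main_lemma (st : Setup G r b s) (hn : 2 ≤ n) (hsn : 3 * s + 3 ≤ 2 * n)
    (hN : Fintype.card V = 7 * n + 7 * s + 5)
    (hgiant : ∃ z₀ : V, Fintype.card V - 2 * s ≤ (compF r z₀).card) :
    ConnCliqueMatching r 3 n ∨ ConnCliqueMatching b 3 n := by
  by_contra hcon
  push_neg at hcon
  obtain ⟨z₀, hZcard⟩ := hgiant
  have HR : ∀ T : Finset (Finset V), GoodPack r univ T →
      (∀ t ∈ T, ∃ y ∈ t, y ∈ compF r z₀) → T.card ≤ n - 1 := by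
    intro T hT hmeet
    by_contra hc
    push_neg at hc
    exact hcon.1 (win_of_pack hT (by omega) ⟨z₀, red_pack_hub hT hmeet⟩)
  have HB : ∀ T : Finset (Finset V), GoodPack b univ T →
      (∃ c, ∀ x ∈ T.biUnion id, b.Reachable x c) → T.card ≤ n - 1 := by
    intro T hT hc
    by_contra hcc
    push_neg at hcc
    exact hcon.2 (win_of_pack hT (by omega) hc)
  obtain ⟨w₁, -, hw₁max⟩ :=
    Finset.exists_max_image univ (fun v : V => (compF b v).card) ⟨z₀, Finset.mem_univ _⟩
  set C1 := compF b w₁ with hC1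
  set S2 := univ \ C1 with hS2
  set Z := compF r z₀ with hZdef
  set J := univ \ Z with hJdef
  have hZuniv_le : Z.card ≤ Fintype.card V := by
    rw [← Finset.card_univ]; exact Finset.card_le_card (Finset.subset_univ _)
  have hC1le : C1.card ≤ Fintype.card V := by
    rw [← Finset.card_univ]; exact Finset.card_le_card (Finset.subset_univ _)
  have hsig : S2.card + C1.card = Fintype.card V := by
    rw [hS2, Finset.card_sdiff_of_subset (Finset.subset_univ _), Finset.card_univ]
    omega
  have hJcard : J.card + Z.card = Fintype.card V := by
    rw [hJdef, Finset.card_sdiff_of_subset (Finset.subset_univ _), Finset.card_univ]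
    omega
  have hredZ : ∀ u v : V, r.Adj u v → u ∈ Z → v ∈ Z := by
    intro u v hr hu
    exact mem_compF.2 ((mem_compF.1 hu).trans hr.reachable)
  have hmemJ : ∀ x : V, x ∉ Z → x ∈ J := by
    intro x hx
    rw [hJdef]
    exact Finset.mem_sdiff.2 ⟨Finset.mem_univ _, hx⟩
  -- junk vertices lie in C1, and force C1 to be huge
  have hjunk : ∀ j ∈ J, j ∈ C1 ∧ Fintype.card V - 3 * s < C1.card := by
    intro j hj
    have hjZ : j ∉ Z := (Finset.mem_sdiff.1 hj).2
    have hsub : insert j (Z \ badF G j) ⊆ compF b j := by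
      intro x hx
      rcases Finset.mem_insert.1 hx with rfl | hx
      · exact self_mem_compF
      · have hxZ : x ∈ Z := Finset.sdiff_subset hx
        have hxj : x ≠ j := fun h => hjZ (h ▸ hxZ)
        have hG : G.Adj j x := adj_of_not_bad hxj (fun h => (Finset.mem_sdiff.1 hx).2 h)
        have hnr : ¬ r.Adj j x := fun hr => hjZ (hredZ x j hr.symm hxZ)
        exact mem_compF.2 ((st.cov j x hG).resolve_left hnr).reachable
    have hjnotin : j ∉ Z \ badF G j := fun h => hjZ (Finset.sdiff_subset h)
    have hcard1 : Z.card - s ≤ (Z \ badF G j).card := by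
      have := @card_sdiff_ge V _ _ Z (badF G j)
      have := st.deg j
      omega
    have hcard2 : Fintype.card V - 3 * s < (compF b j).card := by
      have h3 := Finset.card_le_card hsub
      rw [Finset.card_insert_of_notMem hjnotin] at h3
      omega
    have hC1big : Fintype.card V - 3 * s < C1.card :=
      lt_of_lt_of_le hcard2 (hw₁max j (Finset.mem_univ _))
    refine ⟨?_, hC1big⟩
    have hjbig := hcard2
    have hint : 0 < ((compF b j) ∩ C1).card := by
      have h := Finset.card_inter_add_card_union (compF b j) C1
      have h2 : ((compF b j) ∪ C1).card ≤ Fintype.card V := by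
        rw [← Finset.card_univ]; exact Finset.card_le_card (Finset.subset_univ _)
      omega
    obtain ⟨x, hx⟩ := Finset.card_pos.1 hint
    have hx1 : b.Reachable j x := mem_compF.1 (Finset.mem_inter.1 hx).1
    have hx2 : b.Reachable w₁ x := mem_compF.1 (Finset.mem_inter.1 hx).2
    exact mem_compF.2 (hx2.trans hx1.symm)
  have hS2Z : S2 ⊆ Z := by
    intro x hx
    by_contra hxZ
    exact (Finset.mem_sdiff.1 hx).2 (hjunk x (hmemJ x hxZ)).1
  -- separation helpers
  have hsep1 : ∀ h_ : V, h_ ∈ S2 → ∀ x : V, x ∈ C1 → ¬ b.Reachable h_ x := by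
    intro h_ hh x hx hr
    exact (Finset.mem_sdiff.1 hh).2 (mem_compF.2 ((mem_compF.1 hx).trans hr.symm))
  have hsep2 : ∀ h_ : V, h_ ∈ C1 → ∀ x : V, x ∈ S2 → ¬ b.Reachable h_ x := by
    intro h_ hh x hx hr
    exact (Finset.mem_sdiff.1 hx).2 (mem_compF.2 ((mem_compF.1 hh).trans hr))
  ---- CASE SPLIT ----
  by_cases hBIG : S2.card ≤ n + 3
  · -- BIG case : greedy inside C1 ∩ Z
    set W := C1 ∩ Z with hWdef
    have hWcard : 6 * n + 5 * s + 2 ≤ W.card := by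
      have hsub : C1 \ Z ⊆ J := by
        intro x hx
        exact hmemJ x (Finset.mem_sdiff.1 hx).2
      have h1 : C1.card ≤ W.card + (C1 \ Z).card := by
        have hsplit : C1 ⊆ W ∪ (C1 \ Z) := by
          intro x hx
          by_cases hxZ : x ∈ Z
          · exact Finset.mem_union.2 (Or.inl (Finset.mem_inter.2 ⟨hx, hxZ⟩))
          · exact Finset.mem_union.2 (Or.inr (Finset.mem_sdiff.2 ⟨hx, hxZ⟩))
        exact (Finset.card_le_card hsplit).trans (Finset.card_union_le _ _)
      have h2 := Finset.card_le_card hsub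
      omega
    obtain ⟨Tr, Tb, hTr, hTb, _, hcount⟩ := mono_pack_greedy st W.card W le_rfl
    have hTrB : Tr.card ≤ n - 1 := by
      refine HR Tr (hTr.mono (Finset.subset_univ _)) ?_
      intro t ht
      have hsub := (hTr.1 t ht).2
      have htne : t.Nonempty := by
        rw [← Finset.card_pos, (hTr.1 t ht).1.2]; norm_num
      obtain ⟨y, hy⟩ := htne
      exact ⟨y, hy, (Finset.mem_inter.1 (hsub hy)).2⟩
    have hTbB : Tb.card ≤ n - 1 := by
      refine HB Tb (hTb.mono (Finset.subset_univ _)) ⟨w₁, ?_⟩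
      intro x hx
      have hxC1 : x ∈ C1 := (Finset.mem_inter.1 (hTb.biUnion_subset hx)).1
      exact (mem_compF.1 hxC1).symm
    omega
  push_neg at hBIG
  by_cases hMID : S2.card ≤ 3 * n + 2 * s + 1
  · -- MID case
    obtain ⟨M1, hM1, hM1count, hM1facts⟩ := side_bound st HB hn C1
    -- split off pairs not inside Z
    set M1' := M1.filter (fun p => p ⊆ Z) with hM1'def
    have hM1'RP : RedPairs r C1 M1' := hM1.subset (Finset.filter_subset _ _)
    have hM1'Z : ∀ p ∈ M1', p ⊆ Z := fun p hp => (Finset.mem_filter.1 hp).2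
    have hKbound : M1.card ≤ M1'.card + s := by
      set K := M1.filter (fun p => ¬ p ⊆ Z) with hKdef
      have hKRP : RedPairs r C1 K := hM1.subset (Finset.filter_subset _ _)
      have hKJ : K.biUnion id ⊆ J := by
        intro x hx
        rcases Finset.mem_biUnion.1 hx with ⟨p, hpK, hxp⟩
        obtain ⟨u, v, huv, hpuv, hruv⟩ := (hM1.1 p (Finset.filter_subset _ _ hpK)).2
        have hnotZ : ¬ p ⊆ Z := (Finset.mem_filter.1 hpK).2
        have huZ : u ∉ Z := by
          intro huZ
          refine hnotZ ?_
          intro y hy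
          rw [hpuv] at hy
          simp at hy
          rcases hy with rfl | rfl
          · exact huZ
          · exact hredZ u y hruv huZ
        have hvZ : v ∉ Z := fun hvZ => huZ (hredZ v u hruv.symm hvZ)
        refine hmemJ x ?_
        rw [hpuv] at hxp
        simp at hxp
        rcases hxp with rfl | rfl
        · exact huZ
        · exact hvZ
      have hKcard : 2 * K.card ≤ J.card := by
        have h1 := hKRP.card_biUnion
        have h2 := Finset.card_le_card hKJ
        omega
      have hsplit : M1.card ≤ M1'.card + K.card := by
        have hsub : M1 ⊆ M1' ∪ K := by
          intro p hp
          by_cases hpZ : p ⊆ Z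
          · exact Finset.mem_union.2 (Or.inl (Finset.mem_filter.2 ⟨hp, hpZ⟩))
          · exact Finset.mem_union.2 (Or.inr (Finset.mem_filter.2 ⟨hp, hpZ⟩))
        exact (Finset.card_le_card hsub).trans (Finset.card_union_le _ _)
      have hJ2s : J.card ≤ 2 * s := by omega
      omega
    -- lower bound on M1'.card
    have hsupply : n + s ≤ M1'.card := by
      by_cases hJe : J.Nonempty
      · obtain ⟨j, hj⟩ := hJe
        have hC1big := (hjunk j hj).2
        rcases hM1facts with h | ⟨h1, h2⟩
        · omega
        rcases h2 with h | ⟨h3, h4⟩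
        · omega
        · omega
      · -- J empty : all pairs are in Z anyway
        have hZall : Z = univ := by
          rw [Finset.eq_univ_iff_forall]
          intro x
          by_contra hxZ
          exact hJe ⟨x, hmemJ x hxZ⟩
        have hM1'eq : M1' = M1 := by
          rw [hM1'def]
          refine Finset.filter_true_of_mem (fun p hp => ?_)
          rw [hZall]
          exact Finset.subset_univ _
        rw [hM1'eq]
        rcases hM1facts with h | ⟨h1, h2⟩
        · omega
        rcases h2 with h | ⟨h3, h4⟩
        · omega
        · omega
    -- hosts
    obtain ⟨H, hHsub, hHcard⟩ := Finset.exists_subset_card_eq (show n ≤ S2.card by omega)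
    have hHdisjC1 : Disjoint H C1 := by
      refine Finset.disjoint_left.2 (fun x hx hx2 => ?_)
      exact (Finset.mem_sdiff.1 (hHsub hx)).2 hx2
    obtain ⟨T, hT, hTcard, hTsub⟩ := red_pack_from_hosts st M1' hM1'RP H hHdisjC1
      (fun h_ hh x hx => hsep1 h_ (hHsub hh) x hx) hHcard (by omega)
    have hmeet : ∀ t ∈ T, ∃ y ∈ t, y ∈ Z := by
      intro t ht
      have htne : t.Nonempty := by
        rw [← Finset.card_pos, (hT.1 t ht).1.2]; norm_num
      obtain ⟨y, hy⟩ := htne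
      refine ⟨y, hy, ?_⟩
      have hyT : y ∈ T.biUnion id := Finset.mem_biUnion.2 ⟨t, ht, hy⟩
      rcases Finset.mem_union.1 (hTsub hyT) with h | h
      · rcases Finset.mem_biUnion.1 h with ⟨p, hp, hyp⟩
        exact hM1'Z p hp hyp
      · exact hS2Z (hHsub h)
    have := HR T hT hmeet
    omega

  · push_neg at hMID
    -- J is empty here
    have hJempty : Z = univ := by
      rw [Finset.eq_univ_iff_forall]
      intro x
      by_contra hxZ
      have := (hjunk x (hmemJ x hxZ)).2
      omega
    by_cases h6a : 2 * C1.card ≤ 4 * n + 5 * s + 5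
    · -- 6a : global matching with generic hosts
      obtain ⟨Mg, hMg, hMgcount, hMgfacts⟩ := side_bound st HB hn univ
      have huniv : (univ : Finset V).card = Fintype.card V := Finset.card_univ
      have hMgcard : 2 * n ≤ Mg.card + 1 := by
        rcases hMgfacts with h | ⟨h1, h2 | ⟨h3, h4⟩⟩ <;> omega
      have hcomp : ∀ v : V, (compF b v).card ≤ C1.card := fun v => hw₁max v (Finset.mem_univ _)
      obtain ⟨T, hT, hTcard, -⟩ := pairs_pick_hosts st hcomp
        (show 2 * C1.card + 2 * s + 3 * n ≤ Fintype.card V by omega)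
        n Mg ∅ hMg hMgcard (Finset.disjoint_empty_right _) (by simp)
      have hmeet : ∀ t ∈ T, ∃ y ∈ t, y ∈ Z := by
        intro t ht
        have htne : t.Nonempty := by
          rw [← Finset.card_pos, (hT.1 t ht).1.2]; norm_num
        obtain ⟨y, hy⟩ := htne
        exact ⟨y, hy, by rw [hJempty]; exact Finset.mem_univ _⟩
      have := HR T hT hmeet
      omega
    · push_neg at h6a
      -- SPREAD case
      obtain ⟨M1, hM1, hM1count, hM1facts⟩ := side_bound st HB hn C1
      obtain ⟨M2, hM2, hM2count, hM2facts⟩ := side_bound st HB hn S2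
      set x := min n (min (M1.card - s) (C1.card - (n + 2 * s))) with hxdef
      have hallZ : ∀ t : Finset V, t.Nonempty → ∃ y ∈ t, y ∈ Z := by
        intro t ⟨y, hy⟩
        exact ⟨y, hy, by rw [hJempty]; exact Finset.mem_univ _⟩
      have hc2 : x = n ∨ (n - x) + s ≤ M2.card := by
        rcases hM1facts with h1 | ⟨h1a, h1b | ⟨h1c, h1d⟩⟩ <;>
          rcases hM2facts with h2 | ⟨h2a, h2b | ⟨h2c, h2d⟩⟩ <;>
          omega
      by_cases hxn : x = n
      · -- one-sided: pairs in C1, hosts in S2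
        obtain ⟨H, hHsub, hHcard⟩ := Finset.exists_subset_card_eq (show n ≤ S2.card by omega)
        have hHdisjC1 : Disjoint H C1 := by
          refine Finset.disjoint_left.2 (fun q hq hq2 => ?_)
          exact (Finset.mem_sdiff.1 (hHsub hq)).2 hq2
        obtain ⟨T, hT, hTcard, -⟩ := red_pack_from_hosts st M1 hM1 H hHdisjC1
          (fun h_ hh q hq => hsep1 h_ (hHsub hh) q hq) hHcard (by omega)
        have := HR T hT (fun t ht => hallZ t (by
          rw [← Finset.card_pos, (hT.1 t ht).1.2]; norm_num))
        omega
      · by_cases hx0 : x = 0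
        · -- one-sided: pairs in S2, hosts in C1
          have hsupply2 : n + s ≤ M2.card := by
            rcases hc2 with h | h
            · exact absurd h hxn
            · omega
          obtain ⟨H, hHsub, hHcard⟩ := Finset.exists_subset_card_eq
            (show n ≤ C1.card by omega)
          have hHdisjS2 : Disjoint H S2 := by
            refine Finset.disjoint_left.2 (fun q hq hq2 => ?_)
            exact (Finset.mem_sdiff.1 hq2).2 (hHsub hq)
          obtain ⟨T, hT, hTcard, -⟩ := red_pack_from_hosts st M2 hM2 H hHdisjS2
            (fun h_ hh q hq => hsep2 h_ (hHsub hh) q hq) hHcard (by omega)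
          have := HR T hT (fun t ht => hallZ t (by
            rw [← Finset.card_pos, (hT.1 t ht).1.2]; norm_num))
          omega
        · -- two-phase
          set y := n - x with hydef
          have hc2' : y + s ≤ M2.card := by
            rcases hc2 with h | h
            · exact absurd h hxn
            · omega
          have hc1' : x + s ≤ M1.card := by omega
          obtain ⟨M1', hM1'sub, hM1'card⟩ := Finset.exists_subset_card_eq hc1'
          obtain ⟨M2', hM2'sub, hM2'card⟩ := Finset.exists_subset_card_eq hc2'
          have hM1'RP : RedPairs r C1 M1' := hM1.subset hM1'sub
          have hM2'RP : RedPairs r S2 M2' := hM2.subset hM2'sub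
          have hM1'bi : (M1'.biUnion id).card = 2 * (x + s) := by
            rw [hM1'RP.card_biUnion, hM1'card]
          have hM2'bi : (M2'.biUnion id).card = 2 * (y + s) := by
            rw [hM2'RP.card_biUnion, hM2'card]
          -- hosts H1 for phase 1
          have hH1space : x ≤ (S2 \ M2'.biUnion id).card := by
            have h1 := @card_sdiff_ge V _ _ S2 (M2'.biUnion id)
            omega
          obtain ⟨H1, hH1sub, hH1card⟩ := Finset.exists_subset_card_eq hH1space
          have hH1S2 : H1 ⊆ S2 := hH1sub.trans Finset.sdiff_subset
          have hH1disjC1 : Disjoint H1 C1 := by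
            refine Finset.disjoint_left.2 (fun q hq hq2 => ?_)
            exact (Finset.mem_sdiff.1 (hH1S2 hq)).2 hq2
          obtain ⟨T1, hT1, hT1card, hT1sub⟩ := red_pack_from_hosts st M1' hM1'RP H1 hH1disjC1
            (fun h_ hh q hq => hsep1 h_ (hH1S2 hh) q hq) hH1card (by omega)
          -- hosts H2 for phase 2
          have hH2space : y ≤ (C1 \ M1'.biUnion id).card := by
            have h1 := @card_sdiff_ge V _ _ C1 (M1'.biUnion id)
            omega
          obtain ⟨H2, hH2sub, hH2card⟩ := Finset.exists_subset_card_eq hH2space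
          have hH2C1 : H2 ⊆ C1 := hH2sub.trans Finset.sdiff_subset
          have hH2disjS2 : Disjoint H2 S2 := by
            refine Finset.disjoint_left.2 (fun q hq hq2 => ?_)
            exact (Finset.mem_sdiff.1 hq2).2 (hH2C1 hq)
          obtain ⟨T2, hT2, hT2card, hT2sub⟩ := red_pack_from_hosts st M2' hM2'RP H2 hH2disjS2
            (fun h_ hh q hq => hsep2 h_ (hH2C1 hh) q hq) hH2card (by omega)
          -- disjointness of the two ground sets
          have hC1S2 : Disjoint C1 S2 := by
            refine Finset.disjoint_left.2 (fun q hq hq2 => ?_)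
            exact (Finset.mem_sdiff.1 hq2).2 hq
          have hAB : Disjoint (M1'.biUnion id ∪ H1) (M2'.biUnion id ∪ H2) := by
            refine Finset.disjoint_union_left.2 ⟨?_, ?_⟩
            · refine Finset.disjoint_union_right.2 ⟨?_, ?_⟩
              · exact Finset.disjoint_of_subset_left hM1'RP.biUnion_subset
                  (Finset.disjoint_of_subset_right hM2'RP.biUnion_subset hC1S2)
              · refine Finset.disjoint_left.2 (fun q hq hq2 => ?_)
                exact (Finset.mem_sdiff.1 (hH2sub hq2)).2 hq
            · refine Finset.disjoint_union_right.2 ⟨?_, ?_⟩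
              · refine Finset.disjoint_left.2 (fun q hq hq2 => ?_)
                exact (Finset.mem_sdiff.1 (hH1sub hq)).2 hq2
              · exact Finset.disjoint_of_subset_left hH1S2
                  (Finset.disjoint_of_subset_right hH2C1 hC1S2.symm)
          -- reconstruct ground-set packs
          have hT1' : GoodPack r (M1'.biUnion id ∪ H1) T1 :=
            ⟨fun a ha => ⟨(hT1.1 a ha).1,
              (fun q hq => hT1sub (Finset.mem_biUnion.2 ⟨a, ha, hq⟩))⟩, hT1.2⟩
          have hT2' : GoodPack r (M2'.biUnion id ∪ H2) T2 :=
            ⟨fun a ha => ⟨(hT2.1 a ha).1,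
              (fun q hq => hT2sub (Finset.mem_biUnion.2 ⟨a, ha, hq⟩))⟩, hT2.2⟩
          obtain ⟨hTU, hTUcard⟩ := GoodPack.union hT1' hT2' hAB
          have := HR (T1 ∪ T2) (hTU.mono (Finset.subset_univ _)) (fun t ht => hallZ t (by
            rw [← Finset.card_pos, ((hTU.mono (Finset.subset_univ _)).1 t ht).1.2]; norm_num))
          omega


end mainlem

end Stmt10Aux

open Stmt10Aux in
/-- Perturbed version: `R(c(nK₃), c(nK₃), K_{1,t}) ≤ 7n - 2 + 7t` for `t ≤ 2n/3`. -/
theorem stmt10 (n t : ℕ) (hn : 2 ≤ n) (ht : 3 * t ≤ 2 * n)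
    (G : SimpleGraph (Fin (7 * n - 2 + 7 * t))) [DecidableRel G.Adj]
    (hdeg : ∀ v, (Finset.univ.filter fun w => w ≠ v ∧ ¬ G.Adj v w).card < t)
    (R : SimpleGraph (Fin (7 * n - 2 + 7 * t))) (hR : R ≤ G) :
    ConnCliqueMatching R 3 n ∨ ConnCliqueMatching (G \ R) 3 n := by
  classical
  rcases Nat.eq_zero_or_pos t with ht0 | htpos
  · -- t = 0 : the degree hypothesis is contradictory
    subst ht0
    have hv : (0 : ℕ) < 7 * n - 2 + 7 * 0 := by omega
    exact absurd (hdeg ⟨0, hv⟩) (by omega)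
  · set s := t - 1 with hsdef
    have hcard : Fintype.card (Fin (7 * n - 2 + 7 * t)) = 7 * n + 7 * s + 5 := by
      rw [Fintype.card_fin]
      omega
    have hsn : 3 * s + 3 ≤ 2 * n := by omega
    have st : Setup G R (G \ R) s := by
      refine ⟨hR, fun u v h => ((SimpleGraph.sdiff_adj G R u v).1 h).1, ?_, ?_⟩
      · intro u v h
        by_cases hr : R.Adj u v
        · exact Or.inl hr
        · exact Or.inr ((SimpleGraph.sdiff_adj G R u v).2 ⟨h, hr⟩)
      · intro v
        have heq : badF G v = Finset.univ.filter (fun w => w ≠ v ∧ ¬ G.Adj v w) := by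
          ext w
          simp [badF]
        rw [heq]
        have := hdeg v
        omega
    have hbig : 6 * s + 3 ≤ Fintype.card (Fin (7 * n - 2 + 7 * t)) := by
      rw [hcard]; omega
    rcases exists_giant st hbig with hg | hg
    · exact main_lemma st hn hsn hcard hg
    · exact (main_lemma st.symm hn hsn hcard hg).symm
end

section
/- If 2n - 1 is divisible by 3, then there exists a 4-coloring of the edges of K_{6n-3} such that no color class contains a connected subgraph with a matching of size n. Hence R(c(nK_2), c(nK_2), c(nK_2), c(nK_2)) > 6n - 3. -/
open Finset

/-- Color of pair by affine plane parallel classes, after blowing up points to size `m`. -/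
def pcol (m x y : ℕ) : Fin 4 :=
  if x / m / 3 = y / m / 3 then 0
  else if x / m % 3 = y / m % 3 then 1
  else if (x / m / 3 + x / m % 3) % 3 = (y / m / 3 + y / m % 3) % 3 then 2
  else 3

/-- The linear form associated to parallel class `i`, on point indices `j < 9`. -/
def pform (i : Fin 4) (j : ℕ) : ℕ :=
  match i with
  | 0 => j / 3
  | 1 => j % 3
  | 2 => (j / 3 + j % 3) % 3
  | 3 => (j / 3 + 2 * (j % 3)) % 3

lemma pcol_symm (m x y : ℕ) : pcol m x y = pcol m y x := by
  unfold pcol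
  split_ifs <;> first | rfl | omega

lemma form3 (a1 a2 b1 b2 : ℕ) (ha1 : a1 < 3) (ha2 : a2 < 3) (hb1 : b1 < 3) (hb2 : b2 < 3)
    (h1 : a1 ≠ a2) (h2 : b1 ≠ b2) (h3 : (a1 + b1) % 3 ≠ (a2 + b2) % 3) :
    (a1 + 2 * b1) % 3 = (a2 + 2 * b2) % 3 := by
  interval_cases a1 <;> interval_cases a2 <;> interval_cases b1 <;> interval_cases b2 <;> omega

lemma pcol_eq (m x y : ℕ) (i : Fin 4) (hx : x / m < 9) (hy : y / m < 9)
    (h : pcol m x y = i) : pform i (x / m) = pform i (y / m) := by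
  unfold pcol at h
  split_ifs at h with h1 h2 h3 <;> cases h <;> simp only [pform]
  · exact h1
  · exact h2
  · exact h3
  · exact form3 _ _ _ _ (by omega) (by omega) (by omega) (by omega) h1 h2 h3

lemma pform_fiber_card : ∀ (i : Fin 4) (j0 : Fin 9),
    ((range 9).filter (fun j => pform i j = pform i j0.val)).card = 3 := by
  decide

lemma walk_const {V : Type*} (G : SimpleGraph V) (g : V → ℕ)
    (h : ∀ a b, G.Adj a b → g a = g b) {u v : V} (w : G.Walk u v) : g u = g v := by
  induction w with
  | nil => rfl
  | cons hab p ih => exact (h _ _ hab).trans ih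

/-- If `3 ∣ 2n - 1`, there is a 4-coloring of the edges of `K_{6n-3}` with no
monochromatic connected matching of size `n`. -/
theorem stmt11 (n : ℕ) (hn : 1 ≤ n) (h3 : 3 ∣ (2 * n - 1)) :
    ∃ f : Fin (6 * n - 3) → Fin (6 * n - 3) → Fin 4,
      (∀ u v, f u v = f v u) ∧
      ∀ i : Fin 4, ¬ ConnCliqueMatching (SimpleGraph.fromRel fun u v => f u v = i) 2 n := by
  obtain ⟨m, hm⟩ := h3
  have hm0 : 0 < m := by omega
  refine ⟨fun u v => pcol m u.val v.val, fun u v => pcol_symm m u.val v.val, ?_⟩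
  intro i ⟨T, hTcard, hclique, hdisj, hreach⟩
  have hlt9 : ∀ v : Fin (6 * n - 3), v.val / m < 9 := by
    intro v
    have := v.isLt
    rw [Nat.div_lt_iff_lt_mul hm0]
    omega
  have hUcard : (T.biUnion (fun x => x)).card = 2 * n := by
    rw [Finset.card_biUnion (fun x hx y hy hxy => hdisj hx hy hxy)]
    have : ∀ t ∈ T, t.card = 2 := fun t ht => (hclique t ht).card_eq
    rw [Finset.sum_congr rfl this, Finset.sum_const, hTcard]
    ring
  -- pick a base vertex
  have hUne : (T.biUnion (fun x => x)).Nonempty := by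
    rw [← Finset.card_pos, hUcard]; omega
  obtain ⟨u0, hu0⟩ := hUne
  -- all vertices of the union have the same pform value
  have hsame : ∀ v ∈ T.biUnion (fun x => x), pform i (v.val / m) = pform i (u0.val / m) := by
    intro v hv
    obtain ⟨t, ht, hvt⟩ := Finset.mem_biUnion.1 hv
    obtain ⟨t0, ht0, hu0t⟩ := Finset.mem_biUnion.1 hu0
    have hr := hreach v u0 ⟨t, ht, hvt⟩ ⟨t0, ht0, hu0t⟩
    refine hr.elim fun w => walk_const _ (fun a => pform i (a.val / m)) ?_ w
    intro a b hab
    rw [SimpleGraph.fromRel_adj] at hab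
    rcases hab.2 with h | h
    · exact pcol_eq m a.val b.val i (hlt9 a) (hlt9 b) h
    · exact (pcol_eq m b.val a.val i (hlt9 b) (hlt9 a) h).symm
  -- inject the union into S ×ˢ range m
  set S : Finset ℕ := (range 9).filter (fun j => pform i j = pform i (u0.val / m)) with hSdef
  have hScard : S.card = 3 := pform_fiber_card i ⟨u0.val / m, hlt9 u0⟩
  have hle : (T.biUnion (fun x => x)).card ≤ (S ×ˢ range m).card := by
    apply Finset.card_le_card_of_injOn (fun v => (v.val / m, v.val % m))
    · intro v hv
      rw [Finset.mem_coe, Finset.mem_product]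
      constructor
      · rw [hSdef, Finset.mem_filter, Finset.mem_range]
        exact ⟨hlt9 v, hsame v hv⟩
      · exact Finset.mem_range.2 (Nat.mod_lt _ hm0)
    · intro a _ b _ hab
      have h1 : a.val / m = b.val / m := (Prod.mk.injEq _ _ _ _ ▸ hab).1
      have h2 : a.val % m = b.val % m := (Prod.mk.injEq _ _ _ _ ▸ hab).2
      have h4 : m * (a.val / m) = m * (b.val / m) := by rw [h1]
      have ha := Nat.div_add_mod a.val m
      have hb := Nat.div_add_mod b.val m
      exact Fin.ext (by omega)
  rw [hUcard, Finset.card_product, hScard, Finset.card_range] at hle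
  omega
end
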